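/- arXiv:1605.03034 — 6 statements merged into one kernel-verified Lean document; each statement's English description precedes it below -/
import Mathlib

section
/- Let u : ℕ → ℕ → Finset ℕ be computable with u e s ⊆ u e (s+1) and W_e = ⋃ s, ↑(u e s) for every e (a computable stagewise enumeration of the standard numbering of the c.e. sets). Let a, a₀, a₁ : ℕ → Finset ℕ be computable and monotone with a₀ s ∩ a₁ s = ∅ and a₀ s ∪ a₁ s = a s for all s, and set A = ⋃ s, ↑(a s), A₀ = ⋃ s, ↑(a₀ s), A₁ = ⋃ s, ↑(a₁ s). Suppose for every e and each i ∈ {0,1}: if {x ∈ A | ∃ s, x ∈ u e s ∧ x ∉ a s} is infinite, then {x ∈ A_i | ∃ s, x ∈ u e s ∧ x ∉ a_i s} is infinite. Then A₀, A₁ is a Friedberg split of A. -/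
open Encodable Denumerable

namespace FriedbergAux



lemma raise'_foldl (l : List ℕ) (n : ℕ) (acc : List ℕ) :
    (l.foldl (fun p a => (a + p.1 + 1, p.2 ++ [a + p.1])) (n, acc)).2
      = acc ++ Denumerable.raise' l n := by
  induction l generalizing n acc with
  | nil => simp [Denumerable.raise']
  | cons m l ih => simp [Denumerable.raise', ih]

lemma primrec_raise' : Primrec₂ Denumerable.raise' := by
  have hb : Primrec fun q : (List ℕ × ℕ) × (ℕ × List ℕ) × ℕ => q.2.2 + q.2.1.1 :=
    Primrec.nat_add.comp (Primrec.snd.comp Primrec.snd)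
      (Primrec.fst.comp (Primrec.fst.comp Primrec.snd))
  have hh : Primrec₂ fun (q : List ℕ × ℕ) (p : (ℕ × List ℕ) × ℕ) =>
      ((p.2 + p.1.1 + 1, p.1.2 ++ [p.2 + p.1.1]) : ℕ × List ℕ) :=
    ((Primrec.nat_add.comp hb (Primrec.const 1)).pair
      (Primrec.list_concat.comp (Primrec.snd.comp (Primrec.fst.comp Primrec.snd)) hb)).to₂
  have h := Primrec.list_foldl (Primrec.fst (α := List ℕ) (β := ℕ))
    (Primrec.snd.pair (Primrec.const ([] : List ℕ))) hh
  have h2 : Primrec fun q : List ℕ × ℕ => Denumerable.raise' q.1 q.2 :=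
    (Primrec.snd.comp h).of_eq fun q => by
      simpa using raise'_foldl q.1 q.2 []
  exact h2.to₂

lemma ofNat_finset (n : ℕ) :
    ofNat (Finset ℕ) n
      = Finset.map (Denumerable.eqv ℕ).symm.toEmbedding
          (Denumerable.raise'Finset (ofNat (List ℕ) n) 0) := rfl

lemma mem_finset_iff (x : ℕ) (F : Finset ℕ) :
    x ∈ F ↔ x ∈ Denumerable.raise' (ofNat (List ℕ)
      (@encode (Finset ℕ) Primcodable.toEncodable F)) 0 := by
  conv_lhs => rw [← Denumerable.ofNat_encode (α := Finset ℕ) F]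
  rw [ofNat_finset]
  simp only [Finset.mem_map, Denumerable.raise'Finset, Finset.mem_mk]
  constructor
  · rintro ⟨y, hy, rfl⟩
    simpa [Denumerable.eqv, Finset.mem_def] using hy
  · intro hx
    exact ⟨x, by simpa [Finset.mem_def] using hx, by simp [Denumerable.eqv]⟩

lemma primrec_list_mem : PrimrecRel (fun (x : ℕ) (l : List ℕ) => x ∈ l) := by
  have h : Primrec fun q : ℕ × List ℕ => decide (q.2.idxOf q.1 < q.2.length) :=
    (Primrec.nat_lt.comp (Primrec.list_idxOf.comp Primrec.fst Primrec.snd)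
      (Primrec.list_length.comp Primrec.snd)).decide
  exact (h.of_eq fun q => decide_eq_decide.mpr List.idxOf_lt_length_iff).primrecPred

lemma primrec_finset_mem : PrimrecRel (fun (x : ℕ) (F : Finset ℕ) => x ∈ F) := by
  have h : Primrec fun q : ℕ × Finset ℕ =>
      decide (q.1 ∈ Denumerable.raise' (ofNat (List ℕ) (@encode (Finset ℕ) Primcodable.toEncodable q.2)) 0) :=
    (primrec_list_mem.comp Primrec.fst
      (primrec_raise'.comp ((Primrec.ofNat (List ℕ)).comp (Primrec.encode.comp Primrec.snd))
        (Primrec.const 0))).decide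
  exact (h.of_eq fun q => decide_eq_decide.mpr (mem_finset_iff q.1 q.2).symm).primrecPred

lemma computable_finset_mem : Computable₂ (fun (x : ℕ) (F : Finset ℕ) => decide (x ∈ F)) :=
  primrec_finset_mem.decide.to_comp


lemma part_unit_ext {o₁ o₂ : Part Unit} (h : o₁.Dom ↔ o₂.Dom) : o₁ = o₂ :=
  Part.ext' h fun _ _ => rfl

lemma rePred_exists_bool {q : ℕ → ℕ → Bool} (hq : Computable₂ q) :
    REPred (fun x => ∃ s, q x s = true) := by
  have hrf : Partrec fun x : ℕ => Nat.rfind (fun s => (Part.some (q x s) : Part Bool)) :=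
    Partrec.rfind hq.partrec₂
  have h1 : Partrec fun x : ℕ =>
      (Nat.rfind (fun s => (Part.some (q x s) : Part Bool))).map (fun _ => ()) :=
    hrf.map (((Computable.const ()).comp Computable.fst).to₂ :
      Computable₂ fun (_ : ℕ) (_ : ℕ) => ())
  refine h1.of_eq fun x => part_unit_ext ?_
  constructor
  · intro hd
    have hd' : (Nat.rfind fun s => (Part.some (q x s) : Part Bool)).Dom := hd
    obtain ⟨n, hn, -⟩ := Nat.rfind_dom.1 hd'
    exact ⟨⟨n, (Part.mem_some_iff.1 hn).symm⟩, trivial⟩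
  · rintro ⟨⟨n, hn⟩, -⟩
    show (Nat.rfind fun s => (Part.some (q x s) : Part Bool)).Dom
    exact Nat.rfind_dom.2 ⟨n, Part.mem_some_iff.2 hn.symm, fun _ => trivial⟩

lemma rePred_congr {p q : ℕ → Prop} (h : REPred p) (H : ∀ x, p x ↔ q x) : REPred q := by
  have : p = q := funext fun x => propext (H x)
  rwa [this] at h

/-- every c.e. set is some `We` -/
lemma exists_code_of_rePred {W : Set ℕ} (h : REPred (· ∈ W)) :
    ∃ c : Nat.Partrec.Code, ∀ x, (c.eval x).Dom ↔ x ∈ W := by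
  have h' : Partrec fun x : ℕ =>
      (Part.assert (x ∈ W) fun _ => Part.some ()).map (fun _ => (0 : ℕ)) :=
    h.map (((Computable.const (0 : ℕ)).comp Computable.fst).to₂ :
      Computable₂ fun (_ : ℕ) (_ : Unit) => (0 : ℕ))
  obtain ⟨c, hc⟩ := Nat.Partrec.Code.exists_code.1 (Partrec.nat_iff.1 h')
  refine ⟨c, fun x => ?_⟩
  rw [hc]
  simp [Part.assert]


lemma ce_iUnion {f : ℕ → Finset ℕ} (hf : Computable f) :
    REPred (fun x : ℕ => x ∈ (⋃ s, (↑(f s) : Set ℕ))) := by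
  have hq := rePred_exists_bool
    ((computable_finset_mem.comp Computable.fst (hf.comp Computable.snd)).to₂)
  refine rePred_congr hq fun x => ?_
  simp [Set.mem_iUnion]

lemma ce_diff_pred (u' : ℕ → Finset ℕ) (hu' : Computable u') (b : ℕ → Finset ℕ)
    (hb : Computable b) (DF : Finset ℕ) :
    REPred (fun x : ℕ => x ∈ {x : ℕ | ∃ s, x ∈ u' s ∧ x ∉ b s ∧ x ∉ DF}) := by
  have c1 : Computable fun p : ℕ × ℕ => decide (p.1 ∈ u' p.2) :=
    computable_finset_mem.comp Computable.fst (hu'.comp Computable.snd)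
  have c2 : Computable fun p : ℕ × ℕ => !decide (p.1 ∈ b p.2) :=
    Primrec.not.to_comp.comp
      (computable_finset_mem.comp Computable.fst (hb.comp Computable.snd))
  have c3 : Computable fun p : ℕ × ℕ => !decide (p.1 ∈ DF) :=
    Primrec.not.to_comp.comp
      (computable_finset_mem.comp Computable.fst (Computable.const DF))
  have hq := rePred_exists_bool
    ((Primrec.and.to_comp.comp (Primrec.and.to_comp.comp c1 c2) c3).to₂)
  refine rePred_congr hq fun x => ?_
  simp [Set.mem_setOf_eq, and_assoc]

end FriedbergAux


/-- A set of naturals is computably enumerable (c.e.) if its membership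
predicate is recursively enumerable. -/
def Ce (A : Set ℕ) : Prop := REPred (· ∈ A)

/-- A set of naturals is computable if its membership predicate is computable. -/
def CompSet (A : Set ℕ) : Prop := ComputablePred (· ∈ A)

/-- `A₀, A₁` is a split of the c.e. set `A`: a pair of disjoint c.e. sets
whose union is `A`. -/
def IsSplit (A A₀ A₁ : Set ℕ) : Prop :=
  Ce A₀ ∧ Ce A₁ ∧ Disjoint A₀ A₁ ∧ A₀ ∪ A₁ = A

/-- A split `A₀, A₁` of `A` is a Friedberg split if for every c.e. set `W`,
if `W \\ A` is not c.e. then neither `W \\ A₀` nor `W \\ A₁` is c.e. -/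
def FriedbergSplit (A A₀ A₁ : Set ℕ) : Prop :=
  IsSplit A A₀ A₁ ∧
    ∀ W : Set ℕ, Ce W → ¬ Ce (W \ A) → ¬ Ce (W \ A₀) ∧ ¬ Ce (W \ A₁)

/-- The standard numbering of the c.e. sets: `We e` is the domain of the
`e`-th partial computable function. -/
def We (e : ℕ) : Set ℕ := {x | ((Denumerable.ofNat Nat.Partrec.Code e).eval x).Dom}

/-- Friedberg's criterion: if every `We` entering `A` infinitely often also
enters each half `A₀`, `A₁` infinitely often (with respect to the given
stagewise enumerations), then the split is Friedberg. -/
theorem friedberg_criterion (u : ℕ → ℕ → Finset ℕ)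
    (hu : Computable₂ u) (humono : ∀ e s, u e s ⊆ u e (s + 1))
    (huW : ∀ e, We e = ⋃ s, ↑(u e s))
    (a a₀ a₁ : ℕ → Finset ℕ)
    (ha : Computable a) (ha₀ : Computable a₀) (ha₁ : Computable a₁)
    (hamono : ∀ s, a s ⊆ a (s + 1))
    (ha₀mono : ∀ s, a₀ s ⊆ a₀ (s + 1)) (ha₁mono : ∀ s, a₁ s ⊆ a₁ (s + 1))
    (hdisj : ∀ s, a₀ s ∩ a₁ s = ∅) (hcover : ∀ s, a₀ s ∪ a₁ s = a s)
    (A A₀ A₁ : Set ℕ)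
    (hA : A = ⋃ s, ↑(a s)) (hA₀ : A₀ = ⋃ s, ↑(a₀ s)) (hA₁ : A₁ = ⋃ s, ↑(a₁ s))
    (hmain₀ : ∀ e : ℕ,
      {x ∈ A | ∃ s, x ∈ u e s ∧ x ∉ a s}.Infinite →
      {x ∈ A₀ | ∃ s, x ∈ u e s ∧ x ∉ a₀ s}.Infinite)
    (hmain₁ : ∀ e : ℕ,
      {x ∈ A | ∃ s, x ∈ u e s ∧ x ∉ a s}.Infinite →
      {x ∈ A₁ | ∃ s, x ∈ u e s ∧ x ∉ a₁ s}.Infinite) :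
    FriedbergSplit A A₀ A₁ := by
  have memA : ∀ x, x ∈ A ↔ ∃ s, x ∈ a s := fun x => by rw [hA]; simp
  have memA₀ : ∀ x, x ∈ A₀ ↔ ∃ s, x ∈ a₀ s := fun x => by rw [hA₀]; simp
  have memA₁ : ∀ x, x ∈ A₁ ↔ ∃ s, x ∈ a₁ s := fun x => by rw [hA₁]; simp
  have hsub : ∀ {f : ℕ → Finset ℕ}, (∀ s, f s ⊆ f (s + 1)) →
      ∀ {s t : ℕ}, s ≤ t → f s ⊆ f t := by
    intro f hf s t hst
    induction hst with
    | refl => exact Finset.Subset.refl _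
    | step _ ih => exact ih.trans (hf _)
  have hA₀A : A₀ ⊆ A := by
    intro x hx
    obtain ⟨s, hs⟩ := (memA₀ x).1 hx
    exact (memA x).2 ⟨s, (hcover s) ▸ Finset.mem_union_left _ hs⟩
  have hA₁A : A₁ ⊆ A := by
    intro x hx
    obtain ⟨s, hs⟩ := (memA₁ x).1 hx
    exact (memA x).2 ⟨s, (hcover s) ▸ Finset.mem_union_right _ hs⟩
  -- the key lemma, applied to each half
  have key : ∀ (b : ℕ → Finset ℕ) (B : Set ℕ), Computable b → (∀ x, x ∈ B ↔ ∃ s, x ∈ b s) →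
      B ⊆ A →
      (∀ e, {x ∈ A | ∃ s, x ∈ u e s ∧ x ∉ a s}.Infinite →
        {x ∈ B | ∃ s, x ∈ u e s ∧ x ∉ b s}.Infinite) →
      ∀ W : Set ℕ, Ce (W \ B) → Ce (W \ A) := by
    intro b B hbcomp memB hBA hmain W hWB
    obtain ⟨c, hc⟩ := FriedbergAux.exists_code_of_rePred hWB
    set e' := Encodable.encode c with he'
    have hWe : We e' = W \ B := by
      ext x
      rw [We]
      simp only [Set.mem_setOf_eq, he', Denumerable.ofNat_encode]
      exact hc x
    have hmemWe : ∀ x, x ∈ W \ B ↔ ∃ s, x ∈ u e' s := by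
      intro x
      rw [← hWe, huW e']
      simp
    have hDB : {x ∈ B | ∃ s, x ∈ u e' s ∧ x ∉ b s} ⊆ (∅ : Set ℕ) := by
      rintro x ⟨hxB, s, hxu, -⟩
      exact absurd hxB ((hmemWe x).2 ⟨s, hxu⟩).2
    have hDfin : {x ∈ A | ∃ s, x ∈ u e' s ∧ x ∉ a s}.Finite := by
      rw [← Set.not_infinite]
      intro hinf
      exact Set.not_infinite.2 (Set.finite_empty.subset hDB) (hmain e' hinf)
    set DF := hDfin.toFinset with hDF
    have hDFmem : ∀ x, x ∈ DF ↔ (x ∈ A ∧ ∃ s, x ∈ u e' s ∧ x ∉ a s) := fun x => by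
      rw [hDF, Set.Finite.mem_toFinset]
      rfl
    have hCe := FriedbergAux.ce_diff_pred (u e')
      (hu.comp (Computable.const e') Computable.id) a ha DF
    have hset : {x : ℕ | ∃ s, x ∈ u e' s ∧ x ∉ a s ∧ x ∉ DF} = W \ A := by
      ext x
      simp only [Set.mem_setOf_eq]
      constructor
      · rintro ⟨s, hxu, hxa, hxDF⟩
        have hxWB : x ∈ W \ B := (hmemWe x).2 ⟨s, hxu⟩
        exact ⟨hxWB.1, fun hxA => hxDF ((hDFmem x).2 ⟨hxA, s, hxu, hxa⟩)⟩
      · rintro ⟨hxW, hxA⟩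
        have hxWB : x ∈ W \ B := ⟨hxW, fun hxB => hxA (hBA hxB)⟩
        obtain ⟨s, hxu⟩ := (hmemWe x).1 hxWB
        have hxa : x ∉ a s := fun hxa => hxA ((memA x).2 ⟨s, hxa⟩)
        exact ⟨s, hxu, hxa, fun hd => hxA ((hDFmem x).1 hd).1⟩
    exact hset ▸ hCe
  refine ⟨⟨?_, ?_, ?_, ?_⟩, ?_⟩
  · rw [Ce, hA₀]
    exact FriedbergAux.ce_iUnion ha₀
  · rw [Ce, hA₁]
    exact FriedbergAux.ce_iUnion ha₁
  · rw [Set.disjoint_left]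
    intro x hx0 hx1
    obtain ⟨s, hs⟩ := (memA₀ x).1 hx0
    obtain ⟨t, ht⟩ := (memA₁ x).1 hx1
    have h0 : x ∈ a₀ (max s t) := hsub ha₀mono (le_max_left s t) hs
    have h1 : x ∈ a₁ (max s t) := hsub ha₁mono (le_max_right s t) ht
    have : x ∈ a₀ (max s t) ∩ a₁ (max s t) := Finset.mem_inter.2 ⟨h0, h1⟩
    rw [hdisj] at this
    exact Finset.notMem_empty x this
  · ext x
    simp only [Set.mem_union, memA₀ x, memA₁ x, memA x]
    constructor
    · rintro (⟨s, hs⟩ | ⟨s, hs⟩)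
      · exact ⟨s, (hcover s) ▸ Finset.mem_union_left _ hs⟩
      · exact ⟨s, (hcover s) ▸ Finset.mem_union_right _ hs⟩
    · rintro ⟨s, hs⟩
      rw [← hcover s] at hs
      rcases Finset.mem_union.1 hs with h | h
      · exact Or.inl ⟨s, h⟩
      · exact Or.inr ⟨s, h⟩
  · intro W _ hnA
    exact ⟨fun h0 => hnA (key a₀ A₀ ha₀ memA₀ hA₀A hmain₀ W h0),
      fun h1 => hnA (key a₁ A₁ ha₁ memA₁ hA₁A hmain₁ W h1)⟩
end

section
/- (Friedberg's Splitting Theorem) Every non-computable c.e. set A has a Friedberg split: there exist disjoint c.e. sets A₀, A₁ with A₀ ∪ A₁ = A such that for every c.e. set W, if W \ A is not c.e. then neither W \ A₀ nor W \ A₁ is c.e. In particular, neither A₀ nor A₁ is computable. -/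
section FriedbergAux
open Nat.Partrec (Code)
open Nat.Partrec.Code

def wIn (e s x : ℕ) : Bool := (evaln s (Denumerable.ofNat Code e) x).isSome
def wSet (e : ℕ) : Set ℕ := {x | ∃ s, wIn e s x = true}

lemma wIn_mono {e s t x : ℕ} (h : s ≤ t) (hx : wIn e s x = true) : wIn e t x = true := by
  rcases Option.isSome_iff_exists.1 hx with ⟨y, hy⟩
  exact Option.isSome_iff_exists.2 ⟨y, evaln_mono h hy⟩

lemma exists_index {W : Set ℕ} (h : REPred (· ∈ W)) : ∃ e, W = wSet e := by
  unfold REPred at h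
  have h2 : Partrec fun a : ℕ =>
      (Part.assert (a ∈ W) fun _ => Part.some ()).map fun _ => (0:ℕ) :=
    h.map ((Computable.const 0).comp Computable.fst).to₂
  replace h2 := Partrec.nat_iff.1 h2
  obtain ⟨c, hc⟩ := exists_code.1 h2
  refine ⟨Encodable.encode c, ?_⟩
  ext x
  have hd : x ∈ W ↔ (eval c x).Dom := by
    rw [hc]; simp [Part.dom_iff_mem, Part.assert]
  rw [hd]
  constructor
  · intro hdom
    obtain ⟨y, hy⟩ := Part.dom_iff_mem.1 hdom
    obtain ⟨k, hk⟩ := evaln_complete.1 hy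
    exact ⟨k, by simp [wIn, Denumerable.ofNat_encode, Option.isSome_iff_exists]; exact ⟨y, hk⟩⟩
  · rintro ⟨s, hs⟩
    simp only [wIn, Denumerable.ofNat_encode] at hs
    obtain ⟨y, hy⟩ := Option.isSome_iff_exists.1 hs
    exact Part.dom_iff_mem.2 ⟨y, evaln_complete.2 ⟨s, hy⟩⟩

def bAll (p : ℕ → Bool) : ℕ → Bool
  | 0 => true
  | n+1 => bAll p n && p n

def bEx (p : ℕ → Bool) : ℕ → Bool
  | 0 => false
  | n+1 => bEx p n || p n

lemma bAll_iff {p : ℕ → Bool} {n : ℕ} : bAll p n = true ↔ ∀ k < n, p k = true := by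
  induction n with
  | zero => simp [bAll]
  | succ n ih =>
    simp only [bAll, Bool.and_eq_true, ih]
    constructor
    · rintro ⟨h1, h2⟩ k hk
      rcases Nat.lt_succ_iff_lt_or_eq.1 hk with h | rfl
      · exact h1 k h
      · exact h2
    · intro h; exact ⟨fun k hk => h k (hk.trans (Nat.lt_succ_self n)), h n (Nat.lt_succ_self n)⟩

lemma bEx_iff {p : ℕ → Bool} {n : ℕ} : bEx p n = true ↔ ∃ k < n, p k = true := by
  induction n with
  | zero => simp [bEx]
  | succ n ih =>
    simp only [bEx, Bool.or_eq_true, ih]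
    constructor
    · rintro (⟨k, hk, h⟩ | h)
      · exact ⟨k, hk.trans (Nat.lt_succ_self n), h⟩
      · exact ⟨n, Nat.lt_succ_self n, h⟩
    · rintro ⟨k, hk, h⟩
      rcases Nat.lt_succ_iff_lt_or_eq.1 hk with h' | rfl
      · exact Or.inl ⟨k, h', h⟩
      · exact Or.inr h

def least (p : ℕ → Bool) : ℕ → ℕ
  | 0 => 0
  | n+1 => if least p n < n then least p n else if p n then n else n+1

lemma least_le {p : ℕ → Bool} : ∀ n, least p n ≤ n
  | 0 => le_rfl
  | n+1 => by
    simp only [least]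
    split_ifs with h1 h2 <;> omega

lemma least_spec {p : ℕ → Bool} : ∀ {n}, least p n < n → p (least p n) = true
  | 0, h => absurd h (by simp [least])
  | n+1, h => by
    by_cases h1 : least p n < n
    · simpa [least, h1] using least_spec h1
    · by_cases h2 : p n
      · simp [least, h1, h2]
      · simp only [least, if_neg h1, if_neg h2] at h; omega

lemma least_min {p : ℕ → Bool} : ∀ {n} k, k < least p n → p k = false
  | 0, k, h => absurd h (by simp [least])
  | n+1, k, h => by
    by_cases h1 : least p n < n
    · simp only [least, if_pos h1] at h; exact least_min k h
    · have hln : least p n = n := le_antisymm (least_le n) (not_lt.1 h1)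
      by_cases h2 : p n
      · simp only [least, if_neg h1, if_pos h2] at h
        exact least_min (n := n) k (by omega)
      · simp only [least, if_neg h1, if_neg h2] at h
        rcases Nat.lt_succ_iff_lt_or_eq.1 h with h' | rfl
        · exact least_min (n := n) k (by omega)
        · exact Bool.not_eq_true _ ▸ (by simpa using h2)

lemma least_le_of {p : ℕ → Bool} {n k : ℕ} (hp : p k = true) : least p n ≤ k := by
  by_contra h
  have := least_min (p := p) (n := n) k (by omega)
  simp [hp] at this

lemma least_lt {p : ℕ → Bool} {n k : ℕ} (hk : k < n) (hp : p k = true) : least p n < n :=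
  lt_of_le_of_lt (least_le_of hp) hk

section PR
variable {α : Type*} [Primcodable α]

lemma primrec_bAll {p : α → ℕ → Bool} {f : α → ℕ}
    (hp : Primrec fun q : α × ℕ => p q.1 q.2) (hf : Primrec f) :
    Primrec fun a => bAll (p a) (f a) := by
  have : Primrec fun a => (f a).rec (motive := fun _ => Bool) true
      (fun n IH => (fun a (q : ℕ × Bool) => q.2 && p a q.1) a (n, IH)) :=
    Primrec.nat_rec' hf (Primrec.const true)
      (((Primrec.dom_bool₂ (· && ·)).comp (Primrec.snd.comp Primrec.snd)
        (hp.comp (Primrec.pair Primrec.fst (Primrec.fst.comp Primrec.snd)))).to₂)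
  exact this.of_eq fun a => by
    induction f a with
    | zero => rfl
    | succ n ih => simp only [bAll, ← ih]

lemma primrec_bEx {p : α → ℕ → Bool} {f : α → ℕ}
    (hp : Primrec fun q : α × ℕ => p q.1 q.2) (hf : Primrec f) :
    Primrec fun a => bEx (p a) (f a) := by
  have : Primrec fun a => (f a).rec (motive := fun _ => Bool) false
      (fun n IH => (fun a (q : ℕ × Bool) => q.2 || p a q.1) a (n, IH)) :=
    Primrec.nat_rec' hf (Primrec.const false)
      (((Primrec.dom_bool₂ (· || ·)).comp (Primrec.snd.comp Primrec.snd)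
        (hp.comp (Primrec.pair Primrec.fst (Primrec.fst.comp Primrec.snd)))).to₂)
  exact this.of_eq fun a => by
    induction f a with
    | zero => rfl
    | succ n ih => simp only [bEx, ← ih]

lemma primrec_least {p : α → ℕ → Bool} {f : α → ℕ}
    (hp : Primrec fun q : α × ℕ => p q.1 q.2) (hf : Primrec f) :
    Primrec fun a => least (p a) (f a) := by
  have H : Primrec₂ (α := α) (β := ℕ × ℕ) (σ := ℕ) (fun (a : α) (q : ℕ × ℕ) =>
      if q.2 < q.1 then q.2 else if p a q.1 then q.1 else q.1 + 1) := by
    show Primrec fun (x : α × ℕ × ℕ) =>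
      if x.2.2 < x.2.1 then x.2.2 else if p x.1 x.2.1 then x.2.1 else x.2.1 + 1
    refine Primrec.ite (Primrec.nat_lt.comp (Primrec.snd.comp Primrec.snd)
      (Primrec.fst.comp Primrec.snd)) (Primrec.snd.comp Primrec.snd) ?_
    refine Primrec.ite (α := α × ℕ × ℕ) (c := fun q => p q.1 q.2.1 = true) ?_
      (Primrec.fst.comp Primrec.snd)
      (Primrec.succ.comp (Primrec.fst.comp Primrec.snd))
    exact PrimrecPred.of_eq
      (Primrec.eq.comp (hp.comp (Primrec.pair Primrec.fst (Primrec.fst.comp Primrec.snd)))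
        (Primrec.const true)) (fun a => Iff.rfl)
  have : Primrec fun a => (f a).rec (motive := fun _ => ℕ)
      0 (fun n IH => (fun (a : α) (q : ℕ × ℕ) =>
        if q.2 < q.1 then q.2 else if p a q.1 then q.1 else q.1 + 1) a (n, IH)) :=
    Primrec.nat_rec' hf (Primrec.const 0) H
  exact this.of_eq fun a => by
    induction f a with
    | zero => rfl
    | succ n ih => simp only [least, ← ih]

end PR

abbrev Ent : Type := Option ℕ × Bool

def aenum (eA a0 n : ℕ) : ℕ := bif wIn eA n.unpair.2 n.unpair.1 then n.unpair.1 else a0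
def isNew (eA a0 k : ℕ) : Bool := bAll (fun j => !(aenum eA a0 j == aenum eA a0 k)) k
def sideOf (h : List Ent) (k : ℕ) : Bool := (h.getD k (none, false)).2
def memA (eA a0 : ℕ) (h : List Ent) (s : ℕ) (i : Bool) (x : ℕ) : Bool :=
  bEx (fun k => (aenum eA a0 k == x) && isNew eA a0 k && (sideOf h k == i)) s
def satB (h : List Ent) (m : ℕ) : Bool :=
  bEx (fun k => decide ((h.getD k (none, false)).1 = some m)) h.length
def rqE (m : ℕ) : ℕ := m.unpair.1.unpair.1
def rqJ (m : ℕ) : ℕ := m.unpair.1.unpair.2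
def rqI (m : ℕ) : Bool := m.unpair.2 == 1
def rqCode (e j : ℕ) (i : Bool) : ℕ := Nat.pair (Nat.pair e j) (bif i then 1 else 0)

@[simp] lemma rqE_code (e j : ℕ) (i : Bool) : rqE (rqCode e j i) = e := by
  simp [rqE, rqCode]
@[simp] lemma rqJ_code (e j : ℕ) (i : Bool) : rqJ (rqCode e j i) = j := by
  simp [rqJ, rqCode]
@[simp] lemma rqI_code (e j : ℕ) (i : Bool) : rqI (rqCode e j i) = i := by
  cases i <;> simp [rqI, rqCode]

def agreeB (eA a0 : ℕ) (h : List Ent) (s m y : ℕ) : Bool :=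
  ((wIn (rqE m) s y && !(memA eA a0 h s (rqI m) y)) == wIn (rqJ m) s y)
def confStage (eA a0 : ℕ) (h : List Ent) (s m x : ℕ) : Bool :=
  bAll (fun y => agreeB eA a0 h s m y) (x+1) && wIn (rqJ m) s x &&
    !(memA eA a0 h s (rqI m) x)
def confirmed (eA a0 : ℕ) (h : List Ent) (m x : ℕ) : Bool :=
  bEx (fun s => confStage eA a0 h s m x) (h.length + 1)
def stepP (eA a0 : ℕ) (h : List Ent) (m : ℕ) : Bool :=
  !(satB h m) && confirmed eA a0 h m (aenum eA a0 h.length)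
def step (eA a0 : ℕ) (h : List Ent) : Ent :=
  bif isNew eA a0 h.length && decide (least (stepP eA a0 h) h.length < h.length)
  then (some (least (stepP eA a0 h) h.length), rqI (least (stepP eA a0 h) h.length))
  else (none, false)
def hist (eA a0 : ℕ) : ℕ → List Ent
  | 0 => []
  | n+1 => hist eA a0 n ++ [step eA a0 (hist eA a0 n)]
def out (eA a0 n : ℕ) : Ent := step eA a0 (hist eA a0 n)
def act (eA a0 n : ℕ) : Option ℕ := (out eA a0 n).1
def side (eA a0 n : ℕ) : Bool := (out eA a0 n).2

@[simp] lemma hist_length (eA a0 n : ℕ) : (hist eA a0 n).length = n := by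
  induction n with
  | zero => rfl
  | succ n ih => simp [hist, ih]

lemma hist_eq (eA a0 n : ℕ) : hist eA a0 n = (List.range n).map (out eA a0) := by
  induction n with
  | zero => rfl
  | succ n ih => simp [hist, List.range_succ, ih, out]

lemma hist_getD {k n : ℕ} (eA a0 : ℕ) (hk : k < n) (d : Ent) :
    (hist eA a0 n).getD k d = out eA a0 k := by
  rw [hist_eq]
  rw [List.getD_eq_getElem?_getD, List.getElem?_map, List.getElem?_range hk]
  rfl

def AiS (eA a0 : ℕ) (i : Bool) (s : ℕ) : Set ℕ :=
  {x | ∃ k < s, isNew eA a0 k = true ∧ aenum eA a0 k = x ∧ side eA a0 k = i}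
def Ai (eA a0 : ℕ) (i : Bool) : Set ℕ :=
  {x | ∃ k, isNew eA a0 k = true ∧ aenum eA a0 k = x ∧ side eA a0 k = i}

lemma AiS_subset_Ai {eA a0 : ℕ} {i : Bool} {s : ℕ} : AiS eA a0 i s ⊆ Ai eA a0 i :=
  fun x ⟨k, _, h⟩ => ⟨k, h⟩

lemma mem_Ai_iff {eA a0 : ℕ} {i : Bool} {x : ℕ} :
    x ∈ Ai eA a0 i ↔ ∃ s, x ∈ AiS eA a0 i s := by
  constructor
  · rintro ⟨k, h⟩; exact ⟨k+1, k, Nat.lt_succ_self k, h⟩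
  · rintro ⟨s, k, _, h⟩; exact ⟨k, h⟩

lemma memA_iff {eA a0 s n : ℕ} {i : Bool} {x : ℕ} (hs : s ≤ n) :
    memA eA a0 (hist eA a0 n) s i x = true ↔ x ∈ AiS eA a0 i s := by
  rw [memA, bEx_iff]
  constructor
  · rintro ⟨k, hk, hb⟩
    simp only [Bool.and_eq_true, beq_iff_eq] at hb
    refine ⟨k, hk, hb.1.2, hb.1.1, ?_⟩
    rw [← hb.2, sideOf, hist_getD eA a0 (lt_of_lt_of_le hk hs)]
    rfl
  · rintro ⟨k, hk, h1, h2, h3⟩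
    refine ⟨k, hk, ?_⟩
    simp only [Bool.and_eq_true, beq_iff_eq]
    exact ⟨⟨h2, h1⟩, by rw [sideOf, hist_getD eA a0 (lt_of_lt_of_le hk hs)]; exact h3⟩

lemma satB_iff {eA a0 n m : ℕ} :
    satB (hist eA a0 n) m = true ↔ ∃ t < n, act eA a0 t = some m := by
  rw [satB, bEx_iff]
  simp only [hist_length]
  constructor
  · rintro ⟨t, ht, hb⟩
    rw [hist_getD eA a0 ht] at hb
    exact ⟨t, ht, by simpa [act] using hb⟩
  · rintro ⟨t, ht, hb⟩
    refine ⟨t, ht, ?_⟩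
    rw [hist_getD eA a0 ht]
    simpa [act] using hb

def AgreeP (eA a0 m s y : ℕ) : Prop :=
  (wIn (rqE m) s y = true ∧ y ∉ AiS eA a0 (rqI m) s) ↔ wIn (rqJ m) s y = true
def ConfP (eA a0 m s x : ℕ) : Prop :=
  (∀ y ≤ x, AgreeP eA a0 m s y) ∧ wIn (rqJ m) s x = true ∧ x ∉ AiS eA a0 (rqI m) s

lemma agreeB_iff {eA a0 s n m y : ℕ} (hs : s ≤ n) :
    agreeB eA a0 (hist eA a0 n) s m y = true ↔ AgreeP eA a0 m s y := by
  rw [agreeB, beq_iff_eq, AgreeP, ← memA_iff (i := rqI m) (x := y) hs]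
  cases h1 : wIn (rqE m) s y <;> cases h2 : memA eA a0 (hist eA a0 n) s (rqI m) y <;>
    cases h3 : wIn (rqJ m) s y <;> simp

lemma confStage_iff {eA a0 s n m x : ℕ} (hs : s ≤ n) :
    confStage eA a0 (hist eA a0 n) s m x = true ↔ ConfP eA a0 m s x := by
  rw [confStage, ConfP]
  simp only [Bool.and_eq_true, Bool.not_eq_true']
  rw [bAll_iff]
  constructor
  · rintro ⟨⟨h1, h2⟩, h3⟩
    refine ⟨fun y hy => (agreeB_iff hs).1 (h1 y (Nat.lt_succ_of_le hy)), h2, ?_⟩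
    rw [← memA_iff (i := rqI m) (x := x) hs, h3]; simp
  · rintro ⟨h1, h2, h3⟩
    refine ⟨⟨fun y hy => (agreeB_iff hs).2 (h1 y (Nat.lt_succ_iff.1 hy)), h2⟩, ?_⟩
    rw [← Bool.not_eq_true]
    rw [memA_iff (i := rqI m) (x := x) hs]
    exact h3

lemma confirmed_iff {eA a0 n m x : ℕ} :
    confirmed eA a0 (hist eA a0 n) m x = true ↔ ∃ s ≤ n, ConfP eA a0 m s x := by
  rw [confirmed, bEx_iff]
  simp only [hist_length]
  constructor
  · rintro ⟨s, hs, hb⟩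
    exact ⟨s, Nat.lt_succ_iff.1 hs, (confStage_iff (Nat.lt_succ_iff.1 hs)).1 hb⟩
  · rintro ⟨s, hs, hb⟩
    exact ⟨s, Nat.lt_succ_of_le hs, (confStage_iff hs).2 hb⟩

lemma out_eq (eA a0 n : ℕ) :
    out eA a0 n =
      bif isNew eA a0 n && decide (least (stepP eA a0 (hist eA a0 n)) n < n)
      then (some (least (stepP eA a0 (hist eA a0 n)) n),
            rqI (least (stepP eA a0 (hist eA a0 n)) n))
      else (none, false) := by
  rw [out, step, hist_length]

lemma act_some {eA a0 t m : ℕ} (h : act eA a0 t = some m) :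
    m < t ∧ isNew eA a0 t = true ∧ side eA a0 t = rqI m ∧
      stepP eA a0 (hist eA a0 t) m = true := by
  rw [act, out_eq] at h
  rw [side, out_eq]
  cases hg : (isNew eA a0 t && decide (least (stepP eA a0 (hist eA a0 t)) t < t)) with
  | false => rw [hg] at h; simp at h
  | true =>
    rw [hg] at h
    simp only [cond_true] at h
    have hm : m = least (stepP eA a0 (hist eA a0 t)) t := by
      simpa using h.symm
    simp only [Bool.and_eq_true, decide_eq_true_eq] at hg
    subst hm
    exact ⟨hg.2, hg.1, by simp [hg], least_spec hg.2⟩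

lemma act_candidate {eA a0 t m : ℕ} (h1 : isNew eA a0 t = true) (h2 : m < t)
    (h3 : stepP eA a0 (hist eA a0 t) m = true) :
    ∃ m' ≤ m, act eA a0 t = some m' := by
  have hL := least_lt h2 h3
  refine ⟨least (stepP eA a0 (hist eA a0 t)) t, least_le_of h3, ?_⟩
  rw [act, out_eq, h1]
  simp [hL]

lemma act_unique {eA a0 t t' m : ℕ} (h : act eA a0 t = some m)
    (h' : act eA a0 t' = some m) : t = t' := by
  rcases lt_trichotomy t t' with ht | ht | ht
  · exfalso
    have := (act_some h').2.2.2
    rw [stepP, Bool.and_eq_true, Bool.not_eq_true'] at this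
    have hs : satB (hist eA a0 t') m = true := satB_iff.2 ⟨t, ht, h⟩
    rw [this.1] at hs; exact absurd hs (by simp)
  · exact ht
  · exfalso
    have := (act_some h).2.2.2
    rw [stepP, Bool.and_eq_true, Bool.not_eq_true'] at this
    have hs : satB (hist eA a0 t) m = true := satB_iff.2 ⟨t', ht, h'⟩
    rw [this.1] at hs; exact absurd hs (by simp)

lemma quiet_single (eA a0 m : ℕ) : ∃ b, ∀ t, b ≤ t → act eA a0 t ≠ some m := by
  by_cases h : ∃ t, act eA a0 t = some m
  · obtain ⟨t0, h0⟩ := h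
    exact ⟨t0 + 1, fun t ht hc => by
      have := act_unique hc h0; omega⟩
  · exact ⟨0, fun t _ hc => h ⟨t, hc⟩⟩

lemma quiet (eA a0 : ℕ) (M : ℕ) :
    ∃ s₀, ∀ t, s₀ ≤ t → ∀ m' ≤ M, act eA a0 t ≠ some m' := by
  induction M with
  | zero =>
    obtain ⟨b, hb⟩ := quiet_single eA a0 0
    exact ⟨b, fun t ht m' hm' => by interval_cases m'; exact hb t ht⟩
  | succ M ih =>
    obtain ⟨s₀, hs₀⟩ := ih
    obtain ⟨b, hb⟩ := quiet_single eA a0 (M+1)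
    refine ⟨max s₀ b, fun t ht m' hm' => ?_⟩
    rcases Nat.lt_succ_iff_lt_or_eq.1 (Nat.lt_succ_of_le hm') with h | rfl
    · exact hs₀ t (le_trans (le_max_left _ _) ht) m' (Nat.lt_succ_iff.1 h)
    · exact hb t (le_trans (le_max_right _ _) ht)

lemma wIn_stab (e y : ℕ) : ∃ S, ∀ s, S ≤ s → (wIn e s y = true ↔ y ∈ wSet e) := by
  by_cases h : y ∈ wSet e
  · obtain ⟨s0, hs0⟩ := h
    exact ⟨s0, fun s hs => ⟨fun _ => ⟨s0, hs0⟩, fun _ => wIn_mono hs hs0⟩⟩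
  · exact ⟨0, fun s _ => ⟨fun hw => absurd ⟨s, hw⟩ h, fun hy => absurd hy h⟩⟩

lemma AiS_stab (eA a0 : ℕ) (i : Bool) (y : ℕ) :
    ∃ S, ∀ s, S ≤ s → (y ∈ AiS eA a0 i s ↔ y ∈ Ai eA a0 i) := by
  by_cases h : y ∈ Ai eA a0 i
  · obtain ⟨k, hk⟩ := h
    exact ⟨k + 1, fun s hs => ⟨fun _ => ⟨k, hk⟩,
      fun _ => ⟨k, lt_of_lt_of_le (Nat.lt_succ_self k) hs, hk⟩⟩⟩
  · exact ⟨0, fun s _ => ⟨fun hy => absurd (AiS_subset_Ai hy) h, fun hy => absurd hy h⟩⟩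

lemma stab1 (eA a0 e j : ℕ) (i : Bool) (Heq : wSet e \ Ai eA a0 i = wSet j) (y : ℕ) :
    ∃ S, ∀ s, S ≤ s → AgreeP eA a0 (rqCode e j i) s y := by
  obtain ⟨S1, h1⟩ := wIn_stab e y
  obtain ⟨S2, h2⟩ := wIn_stab j y
  obtain ⟨S3, h3⟩ := AiS_stab eA a0 i y
  refine ⟨max S1 (max S2 S3), fun s hs => ?_⟩
  have hs1 := h1 s (le_trans (le_max_left _ _) hs)
  have hs2 := h2 s (le_trans (le_max_left _ _) (le_trans (le_max_right _ _) hs))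
  have hs3 := h3 s (le_trans (le_max_right _ _) (le_trans (le_max_right _ _) hs))
  rw [AgreeP]
  simp only [rqE_code, rqJ_code, rqI_code]
  rw [hs1, hs2, hs3]
  constructor
  · rintro ⟨hye, hyA⟩; rw [← Heq]; exact ⟨hye, hyA⟩
  · intro hyj; rw [← Heq] at hyj; exact ⟨hyj.1, hyj.2⟩

lemma stab (eA a0 e j : ℕ) (i : Bool) (Heq : wSet e \ Ai eA a0 i = wSet j) (x : ℕ) :
    ∃ S, ∀ s, S ≤ s → ∀ y ≤ x, AgreeP eA a0 (rqCode e j i) s y := by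
  induction x with
  | zero =>
    obtain ⟨S, hS⟩ := stab1 eA a0 e j i Heq 0
    exact ⟨S, fun s hs y hy => by interval_cases y; exact hS s hs⟩
  | succ x ih =>
    obtain ⟨S1, hS1⟩ := ih
    obtain ⟨S2, hS2⟩ := stab1 eA a0 e j i Heq (x+1)
    refine ⟨max S1 S2, fun s hs y hy => ?_⟩
    rcases Nat.lt_succ_iff_lt_or_eq.1 (Nat.lt_succ_of_le hy) with h | rfl
    · exact hS1 s (le_trans (le_max_left _ _) hs) y (Nat.lt_succ_iff.1 h)
    · exact hS2 s (le_trans (le_max_right _ _) hs)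

lemma req_set (eA a0 : ℕ) (A : Set ℕ) (hAr : ∀ x, x ∈ A ↔ ∃ k, aenum eA a0 k = x)
    (e j : ℕ) (i : Bool) (Heq : wSet e \ Ai eA a0 i = wSet j) :
    ∃ s₀, wSet e \ A =
      {x | ∃ s, s₀ ≤ s ∧ ConfP eA a0 (rqCode e j i) s x ∧ ∀ k < s, aenum eA a0 k ≠ x} := by
  classical
  set m := rqCode e j i with hm
  have hAi : Ai eA a0 i ⊆ A := fun x ⟨k, _, hk, _⟩ => (hAr x).2 ⟨k, hk⟩
  -- requirement m never acts
  have hnact : ∀ t, act eA a0 t ≠ some m := by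
    intro t hc
    obtain ⟨hmt, hnew, hside, hstep⟩ := act_some hc
    rw [stepP, Bool.and_eq_true, hist_length] at hstep
    obtain ⟨s, _, hcp⟩ := confirmed_iff.1 hstep.2
    have hxj : aenum eA a0 t ∈ wSet j := ⟨s, by simpa [hm] using hcp.2.1⟩
    have hxA : aenum eA a0 t ∈ Ai eA a0 i :=
      ⟨t, hnew, rfl, by rw [hside]; simp [hm]⟩
    rw [← Heq] at hxj
    exact hxj.2 hxA
  have hnsat : ∀ t, satB (hist eA a0 t) m = false := by
    intro t
    rw [← Bool.not_eq_true]
    intro hc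
    obtain ⟨t', _, ha⟩ := satB_iff.1 hc
    exact hnact t' ha
  obtain ⟨s₀', hq⟩ := quiet eA a0 m
  refine ⟨max s₀' (m+1), ?_⟩
  ext x
  simp only [Set.mem_diff, Set.mem_setOf_eq]
  constructor
  · -- x ∈ wSet e \ A → confirmed cofinally
    rintro ⟨hxe, hxA⟩
    have hxAi : x ∉ Ai eA a0 i := fun h => hxA (hAi h)
    have hxj : x ∈ wSet j := by rw [← Heq]; exact ⟨hxe, hxAi⟩
    obtain ⟨sj, hsj⟩ := hxj
    obtain ⟨S, hS⟩ := stab eA a0 e j i Heq x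
    refine ⟨max (max S sj) (max s₀' (m+1)), le_max_right _ _, ?_, ?_⟩
    · refine ⟨fun y hy => hS _ (le_trans (le_max_left _ _) (le_max_left _ _)) y hy, ?_, ?_⟩
      · exact wIn_mono (le_trans (le_max_right _ _) (le_max_left _ _)) (by simpa [hm] using hsj)
      · intro hc
        exact hxAi (by simpa [hm] using AiS_subset_Ai hc)
    · intro k _ hk
      exact hxA ((hAr x).2 ⟨k, hk⟩)
  · -- confirmed → x ∈ wSet e \ A
    rintro ⟨s, hs₀s, hcp, hfresh⟩
    have hxj : x ∈ wSet j := ⟨s, by simpa [hm] using hcp.2.1⟩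
    rw [← Heq] at hxj
    refine ⟨hxj.1, ?_⟩
    intro hxA
    obtain ⟨k0, hk0⟩ := (hAr x).1 hxA
    have hex : ∃ k, aenum eA a0 k = x := ⟨k0, hk0⟩
    set t := Nat.find hex with ht_def
    have ht : aenum eA a0 t = x := Nat.find_spec hex
    have htmin : ∀ k < t, aenum eA a0 k ≠ x := fun k hk => Nat.find_min hex hk
    have hnew : isNew eA a0 t = true := by
      rw [isNew, bAll_iff]
      intro k hk
      have := htmin k hk
      simp only [Bool.not_eq_true', beq_eq_false_iff_ne, ne_eq]
      rw [ht]
      exact this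
    have hts : s ≤ t := by
      by_contra hcon
      exact hfresh t (by omega) ht
    have hconf : confirmed eA a0 (hist eA a0 t) m x = true :=
      confirmed_iff.2 ⟨s, hts, hcp⟩
    have hstep : stepP eA a0 (hist eA a0 t) m = true := by
      rw [stepP, hist_length, ht, Bool.and_eq_true, Bool.not_eq_true']
      exact ⟨hnsat t, hconf⟩
    have hmt : m < t := by
      have h1 : m + 1 ≤ max s₀' (m+1) := le_max_right _ _
      omega
    obtain ⟨m', hm', hact⟩ := act_candidate hnew hmt hstep
    have hs₀'t : s₀' ≤ t := by
      have : s₀' ≤ max s₀' (m+1) := le_max_left _ _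
      omega
    exact hq t hs₀'t m' hm' hact

section PRstack
open Primrec
variable {α : Type*} [Primcodable α]

lemma primrec_wIn {e s x : α → ℕ} (he : Primrec e) (hs : Primrec s) (hx : Primrec x) :
    Primrec fun a => wIn (e a) (s a) (x a) := by
  unfold wIn
  exact option_isSome.comp (Nat.Partrec.Code.primrec_evaln.comp
    ((hs.pair ((Primrec.ofNat Nat.Partrec.Code).comp he)).pair hx))

lemma primrec_aenum (eA a0 : ℕ) : Primrec (aenum eA a0) := by
  unfold aenum
  exact Primrec.cond
    (primrec_wIn (const eA) (snd.comp Primrec.unpair) (fst.comp Primrec.unpair))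
    (fst.comp Primrec.unpair) (const a0)

lemma primrec_isNew (eA a0 : ℕ) : Primrec (isNew eA a0) := by
  unfold isNew
  refine primrec_bAll ?_ Primrec.id
  exact (dom_bool not).comp (Primrec.beq.comp
    ((primrec_aenum eA a0).comp snd) ((primrec_aenum eA a0).comp fst))

lemma primrec_sideOf : Primrec₂ sideOf :=
  snd.comp ((Primrec.list_getD ((none, false) : Ent)).comp fst snd)

lemma primrec_memA (eA a0 : ℕ) {h : α → List Ent} {s : α → ℕ} {i : α → Bool} {x : α → ℕ}
    (hh : Primrec h) (hs : Primrec s) (hi : Primrec i) (hx : Primrec x) :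
    Primrec fun a => memA eA a0 (h a) (s a) (i a) (x a) := by
  unfold memA
  refine primrec_bEx ?_ hs
  exact ((dom_bool₂ (· && ·)).comp
    ((dom_bool₂ (· && ·)).comp
      (Primrec.beq.comp ((primrec_aenum eA a0).comp snd) (hx.comp fst))
      ((primrec_isNew eA a0).comp snd))
    ((dom_bool₂ (· == ·)).comp (primrec_sideOf.comp (hh.comp fst) snd) (hi.comp fst)))

lemma primrec_satB : Primrec₂ satB := by
  have := primrec_bEx
    (p := fun (a : List Ent × ℕ) k => decide ((a.1.getD k ((none, false) : Ent)).1 = some a.2))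
    (f := fun a : List Ent × ℕ => a.1.length)
    (Primrec.eq.comp
      (fst.comp ((Primrec.list_getD ((none, false) : Ent)).comp (fst.comp fst) snd))
      (option_some.comp (snd.comp fst))).decide
    (Primrec.list_length.comp fst)
  exact this

lemma primrec_rqE : Primrec rqE := fst.comp (Primrec.unpair.comp (fst.comp Primrec.unpair))
lemma primrec_rqJ : Primrec rqJ := snd.comp (Primrec.unpair.comp (fst.comp Primrec.unpair))
lemma primrec_rqI : Primrec rqI := Primrec.beq.comp (snd.comp Primrec.unpair) (const 1)

lemma primrec_agreeB (eA a0 : ℕ) {h : α → List Ent} {s m y : α → ℕ}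
    (hh : Primrec h) (hs : Primrec s) (hm : Primrec m) (hy : Primrec y) :
    Primrec fun a => agreeB eA a0 (h a) (s a) (m a) (y a) := by
  unfold agreeB
  exact (dom_bool₂ (· == ·)).comp
    ((dom_bool₂ (· && ·)).comp
      (primrec_wIn (primrec_rqE.comp hm) hs hy)
      ((dom_bool not).comp (primrec_memA eA a0 hh hs (primrec_rqI.comp hm) hy)))
    (primrec_wIn (primrec_rqJ.comp hm) hs hy)

lemma primrec_confStage (eA a0 : ℕ) {h : α → List Ent} {s m x : α → ℕ}
    (hh : Primrec h) (hs : Primrec s) (hm : Primrec m) (hx : Primrec x) :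
    Primrec fun a => confStage eA a0 (h a) (s a) (m a) (x a) := by
  unfold confStage
  refine (dom_bool₂ (· && ·)).comp ((dom_bool₂ (· && ·)).comp ?_ ?_) ?_
  · exact primrec_bAll
      (primrec_agreeB eA a0 (hh.comp fst) (hs.comp fst) (hm.comp fst) snd)
      (succ.comp hx)
  · exact primrec_wIn (primrec_rqJ.comp hm) hs hx
  · exact (dom_bool not).comp (primrec_memA eA a0 hh hs (primrec_rqI.comp hm) hx)

lemma primrec_confirmed (eA a0 : ℕ) {h : α → List Ent} {m x : α → ℕ}
    (hh : Primrec h) (hm : Primrec m) (hx : Primrec x) :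
    Primrec fun a => confirmed eA a0 (h a) (m a) (x a) := by
  unfold confirmed
  exact primrec_bEx
    (primrec_confStage eA a0 (hh.comp fst) snd (hm.comp fst) (hx.comp fst))
    (succ.comp (Primrec.list_length.comp hh))

lemma primrec_stepP (eA a0 : ℕ) {h : α → List Ent} {m : α → ℕ}
    (hh : Primrec h) (hm : Primrec m) :
    Primrec fun a => stepP eA a0 (h a) (m a) := by
  unfold stepP
  exact (dom_bool₂ (· && ·)).comp
    ((dom_bool not).comp (primrec_satB.comp hh hm))
    (primrec_confirmed eA a0 hh hm
      ((primrec_aenum eA a0).comp (Primrec.list_length.comp hh)))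

lemma primrec_step (eA a0 : ℕ) : Primrec (step eA a0) := by
  unfold step
  have hL : Primrec fun h : List Ent => least (stepP eA a0 h) h.length :=
    primrec_least (primrec_stepP eA a0 fst snd) Primrec.list_length
  refine Primrec.cond ?_ ?_ (const (none, false))
  · exact (dom_bool₂ (· && ·)).comp
      ((primrec_isNew eA a0).comp Primrec.list_length)
      (Primrec.nat_lt.comp hL Primrec.list_length).decide
  · exact (option_some.comp hL).pair (primrec_rqI.comp hL)

lemma primrec_out (eA a0 : ℕ) : Primrec (out eA a0) := by
  have hg : Primrec₂ (fun (_ : Unit) (l : List Ent) => some (step eA a0 l)) :=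
    (option_some.comp ((primrec_step eA a0).comp snd)).to₂
  have h2 : Primrec₂ (fun (_ : Unit) n => out eA a0 n) :=
    Primrec.nat_strong_rec _ hg (fun _ n => by rw [← hist_eq]; rfl)
  exact h2.comp (const ()) Primrec.id

lemma primrec_hist (eA a0 : ℕ) : Primrec (hist eA a0) := by
  have : Primrec fun n : ℕ => (List.range n).map (out eA a0) := by
    refine Primrec.list_map Primrec.list_range ?_
    exact ((primrec_out eA a0).comp snd).to₂
  exact this.of_eq fun n => (hist_eq eA a0 n).symm

end PRstack

lemma re_exists {p : ℕ → ℕ → Bool} (hp : Primrec fun q : ℕ × ℕ => p q.1 q.2) :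
    REPred fun x : ℕ => ∃ s, p x s = true := by
  have hc : Computable fun q : ℕ × ℕ => p q.1 q.2 := hp.to_comp
  have h2 : Partrec fun x : ℕ => Nat.rfind fun n => (Part.some (p x n) : Part Bool) :=
    Partrec.rfind (Computable₂.partrec₂ hc)
  refine h2.dom_re.of_eq fun x => ?_
  refine Nat.rfind_dom.trans ?_
  constructor
  · rintro ⟨n, h, _⟩; exact ⟨n, by simpa using h⟩
  · rintro ⟨s, hs⟩; exact ⟨s, by simpa using hs, fun {m} _ => trivial⟩

lemma isNew_iff {eA a0 k : ℕ} :
    isNew eA a0 k = true ↔ ∀ j < k, aenum eA a0 j ≠ aenum eA a0 k := by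
  rw [isNew, bAll_iff]
  constructor
  · intro h j hj
    have := h j hj
    simpa using this
  · intro h j hj
    simpa using h j hj

lemma ce_Ai (eA a0 : ℕ) (i : Bool) : Ce (Ai eA a0 i) := by
  have hp : Primrec fun q : ℕ × ℕ =>
      (isNew eA a0 q.2 && decide (aenum eA a0 q.2 = q.1) && (side eA a0 q.2 == i)) := by
    refine (Primrec.dom_bool₂ (· && ·)).comp ((Primrec.dom_bool₂ (· && ·)).comp ?_ ?_) ?_
    · exact (primrec_isNew eA a0).comp Primrec.snd
    · exact (Primrec.eq.comp ((primrec_aenum eA a0).comp Primrec.snd) Primrec.fst).decide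
    · exact (Primrec.dom_bool₂ (· == ·)).comp
        (Primrec.snd.comp ((primrec_out eA a0).comp Primrec.snd)) (Primrec.const i)
  refine (re_exists (p := fun x k =>
    isNew eA a0 k && decide (aenum eA a0 k = x) && (side eA a0 k == i)) hp).of_eq fun x => ?_
  simp only [Bool.and_eq_true, decide_eq_true_eq, beq_iff_eq]
  constructor
  · rintro ⟨k, ⟨h1, h2⟩, h3⟩; exact ⟨k, h1, h2, h3⟩
  · rintro ⟨k, h1, h2, h3⟩; exact ⟨k, ⟨h1, h2⟩, h3⟩

lemma ce_req (eA a0 : ℕ) (A : Set ℕ) (hAr : ∀ x, x ∈ A ↔ ∃ k, aenum eA a0 k = x)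
    (e j : ℕ) (i : Bool) (Heq : wSet e \ Ai eA a0 i = wSet j) :
    Ce (wSet e \ A) := by
  obtain ⟨s₀, hset⟩ := req_set eA a0 A hAr e j i Heq
  have hp : Primrec fun q : ℕ × ℕ =>
      (decide (s₀ ≤ q.2) &&
        confStage eA a0 (hist eA a0 q.2) q.2 (rqCode e j i) q.1 &&
        !(bEx (fun k => decide (aenum eA a0 k = q.1)) q.2)) := by
    refine (Primrec.dom_bool₂ (· && ·)).comp ((Primrec.dom_bool₂ (· && ·)).comp ?_ ?_) ?_
    · exact PrimrecPred.decide (p := fun q : ℕ × ℕ => s₀ ≤ q.2) (Primrec.nat_le.comp (Primrec.const s₀) Primrec.snd)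
    · exact primrec_confStage eA a0 ((primrec_hist eA a0).comp Primrec.snd) Primrec.snd
        (Primrec.const (rqCode e j i)) Primrec.fst
    · refine (Primrec.dom_bool not).comp ?_
      refine primrec_bEx (p := fun (q : ℕ × ℕ) k => decide (aenum eA a0 k = q.1))
        (f := fun q : ℕ × ℕ => q.2) ?_ Primrec.snd
      exact PrimrecPred.decide (p := fun q : (ℕ × ℕ) × ℕ => aenum eA a0 q.2 = q.1.1)
        (Primrec.eq.comp ((primrec_aenum eA a0).comp Primrec.snd)
        (Primrec.fst.comp Primrec.fst))
  have hre := re_exists (p := fun x s =>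
    decide (s₀ ≤ s) && confStage eA a0 (hist eA a0 s) s (rqCode e j i) x &&
      !(bEx (fun k => decide (aenum eA a0 k = x)) s)) hp
  show REPred (· ∈ (wSet e \ A))
  rw [hset]
  refine hre.of_eq fun x => ?_
  constructor
  · rintro ⟨s, hs⟩
    simp only [Bool.and_eq_true, decide_eq_true_eq, Bool.not_eq_true'] at hs
    refine ⟨s, hs.1.1, (confStage_iff le_rfl).1 hs.1.2, ?_⟩
    intro k hk
    have := hs.2
    rw [← Bool.not_eq_true, bEx_iff] at this
    intro hc
    exact this ⟨k, hk, by simp [hc]⟩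
  · rintro ⟨s, h1, h2, h3⟩
    refine ⟨s, ?_⟩
    simp only [Bool.and_eq_true, decide_eq_true_eq, Bool.not_eq_true']
    refine ⟨⟨h1, (confStage_iff le_rfl).2 h2⟩, ?_⟩
    rw [← Bool.not_eq_true, bEx_iff]
    rintro ⟨k, hk, hc⟩
    simp only [decide_eq_true_eq] at hc
    exact h3 k hk hc

theorem friedberg_splitting' (A : Set ℕ) (hA : Ce A) (hAnc : ¬ CompSet A) :
    ∃ A₀ A₁ : Set ℕ,
      ((Ce A₀ ∧ Ce A₁ ∧ Disjoint A₀ A₁ ∧ A₀ ∪ A₁ = A) ∧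
        ∀ W : Set ℕ, Ce W → ¬ Ce (W \ A) → ¬ Ce (W \ A₀) ∧ ¬ Ce (W \ A₁)) ∧
      ¬ CompSet A₀ ∧ ¬ CompSet A₁ := by
  classical
  have hne : A.Nonempty := by
    by_contra h
    rw [Set.not_nonempty_iff_eq_empty] at h
    apply hAnc
    refine ComputablePred.computable_iff.2 ⟨fun _ => false, Computable.const false, ?_⟩
    funext x
    exact propext (by simp [h])
  obtain ⟨a0, ha0⟩ := hne
  obtain ⟨eA, hEA⟩ := exists_index hA
  have hAr : ∀ x, x ∈ A ↔ ∃ k, aenum eA a0 k = x := by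
    intro x
    constructor
    · intro hx
      rw [hEA] at hx
      obtain ⟨s, hs⟩ := hx
      exact ⟨Nat.pair x s, by simp [aenum, Nat.unpair_pair, hs]⟩
    · rintro ⟨k, rfl⟩
      unfold aenum
      cases hw : wIn eA k.unpair.2 k.unpair.1
      · simpa using ha0
      · simp only [cond_true]
        rw [hEA]
        exact ⟨_, hw⟩
  have hdisj : Disjoint (Ai eA a0 false) (Ai eA a0 true) := by
    rw [Set.disjoint_left]
    rintro x ⟨k1, hn1, ha1, hs1⟩ ⟨k2, hn2, ha2, hs2⟩
    have hk : k1 = k2 := by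
      rcases lt_trichotomy k1 k2 with h | h | h
      · exact absurd (ha2 ▸ ha1) (isNew_iff.1 hn2 k1 h)
      · exact h
      · exact absurd (ha1 ▸ ha2) (isNew_iff.1 hn1 k2 h)
    rw [hk, hs2] at hs1
    exact Bool.true_eq_false ▸ (by simp at hs1)
  have huni : Ai eA a0 false ∪ Ai eA a0 true = A := by
    ext x
    constructor
    · rintro (⟨k, _, hk, _⟩ | ⟨k, _, hk, _⟩) <;> exact (hAr x).2 ⟨k, hk⟩
    · intro hx
      obtain ⟨k0, hk0⟩ := (hAr x).1 hx
      have hex : ∃ k, aenum eA a0 k = x := ⟨k0, hk0⟩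
      have hnew : isNew eA a0 (Nat.find hex) = true :=
        isNew_iff.2 fun j hj heq => Nat.find_min hex hj (heq.trans (Nat.find_spec hex))
      cases hside : side eA a0 (Nat.find hex)
      · exact Or.inl ⟨Nat.find hex, hnew, Nat.find_spec hex, hside⟩
      · exact Or.inr ⟨Nat.find hex, hnew, Nat.find_spec hex, hside⟩
  have hFP : ∀ W : Set ℕ, Ce W → ¬ Ce (W \ A) → ∀ i : Bool, ¬ Ce (W \ Ai eA a0 i) := by
    intro W hW hWA i hCe
    obtain ⟨e, rfl⟩ := exists_index hW
    obtain ⟨j, hj⟩ := exists_index hCe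
    exact hWA (ce_req eA a0 A hAr e j i hj)
  have hUnivCe : Ce (Set.univ : Set ℕ) := by
    refine ComputablePred.to_re ?_
    refine ComputablePred.computable_iff.2 ⟨fun _ => true, Computable.const true, ?_⟩
    funext x
    exact propext (by simp)
  have hUnivA : ¬ Ce (Set.univ \ A) := by
    intro h
    apply hAnc
    refine ComputablePred.computable_iff_re_compl_re'.2 ⟨hA, ?_⟩
    exact h.of_eq fun x => by simp [Set.mem_diff]
  have hnc : ∀ i : Bool, ¬ CompSet (Ai eA a0 i) := by
    intro i hC
    refine hFP Set.univ hUnivCe hUnivA i ?_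
    exact (ComputablePred.to_re (ComputablePred.not hC)).of_eq fun x => by
      simp [Set.mem_diff]
  exact ⟨Ai eA a0 false, Ai eA a0 true,
    ⟨⟨ce_Ai eA a0 false, ce_Ai eA a0 true, hdisj, huni⟩,
      fun W hW hWA => ⟨hFP W hW hWA false, hFP W hW hWA true⟩⟩,
    hnc false, hnc true⟩

end FriedbergAux

/-- Friedberg's Splitting Theorem: every non-computable c.e. set has a
Friedberg split, and both halves are non-computable. -/
theorem friedberg_splitting (A : Set ℕ) (hA : Ce A) (hAnc : ¬ CompSet A) :
    ∃ A₀ A₁ : Set ℕ, FriedbergSplit A A₀ A₁ ∧ ¬ CompSet A₀ ∧ ¬ CompSet A₁ := by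
  obtain ⟨A₀, A₁, h1, h2⟩ := friedberg_splitting' A hA hAnc
  exact ⟨A₀, A₁, h1, h2⟩
end

section
/- (Uniform Friedberg Splitting) There is a total computable function h : ℕ → ℕ × ℕ such that for every e, writing h(e) = (e₀, e₁): W_{e₀} and W_{e₁} are disjoint with W_{e₀} ∪ W_{e₁} = W_e, and if W_e is not computable then W_{e₀}, W_{e₁} is a Friedberg split of W_e (hence neither W_{e₀} nor W_{e₁} is computable). In particular h is a splitting procedure. -/
namespace UFS

open Nat.Partrec (Code)
open Nat.Partrec.Code

def cc (e : ℕ) : Code := Denumerable.ofNat Code e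

def dI (n : ℕ) : ℕ := n.unpair.1
def dJ (n : ℕ) : ℕ := (Nat.unpair n.unpair.2).1
def dK (n : ℕ) : Bool := (Nat.unpair n.unpair.2).2.bodd

def wn (s i x : ℕ) : Bool := (evaln s (cc i) x).isSome

def elig (s n x : ℕ) : Bool := wn s (dI n) x && wn s (dJ n) x

def memb {α : Type} [DecidableEq α] (l : List α) (a : α) : Bool :=
  l.foldl (fun acc b => acc || (b == a)) false

def search (q : ℕ → Bool) : ℕ → Option ℕ
  | 0 => none
  | s + 1 => search q s <|> (bif q s then some s else none)

abbrev St : Type := List (ℕ × Bool) × List ℕ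

def keys (l : List (ℕ × Bool)) : List ℕ := l.map Prod.fst

def proc (s : ℕ) (st : St) (x : ℕ) : St :=
  Option.casesOn (search (fun n => !memb st.2 n && elig s n x) (s + 1))
    ((x, false) :: st.1, st.2) (fun n => ((x, dK n) :: st.1, n :: st.2))

def news (e s : ℕ) (l : List (ℕ × Bool)) : List ℕ :=
  (List.range s).filter fun x => wn s e x && !memb (keys l) x

def stages (e : ℕ) : ℕ → St
  | 0 => ([], [])
  | s + 1 => (news e (s + 1) (stages e s).1).foldl (proc (s + 1)) (stages e s)

/-! ### memb and search -/

theorem memb_aux {α : Type} [DecidableEq α] (a : α) :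
    ∀ (l : List α) (acc : Bool),
      (l.foldl (fun acc b => acc || (b == a)) acc = true) ↔ (acc = true ∨ a ∈ l) := by
  intro l
  induction l with
  | nil => simp
  | cons b l ih =>
    intro acc
    simp only [List.foldl_cons, ih, Bool.or_eq_true, beq_iff_eq, List.mem_cons]
    constructor
    · rintro (⟨h | h⟩ | h)
      · exact Or.inl h
      · exact Or.inr (Or.inl h.symm)
      · exact Or.inr (Or.inr h)
    · rintro (h | h | h)
      · exact Or.inl (Or.inl h)
      · exact Or.inl (Or.inr h.symm)
      · exact Or.inr h

theorem memb_iff {α : Type} [DecidableEq α] {l : List α} {a : α} :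
    memb l a = true ↔ a ∈ l := by
  simp [memb, memb_aux]

theorem some_orElse' {α : Type} (a : α) (o : Option α) : (some a <|> o) = some a := rfl

theorem none_orElse' {α : Type} (o : Option α) : (none <|> o) = o := rfl

theorem search_eq_none {q : ℕ → Bool} : ∀ {s : ℕ}, search q s = none ↔ ∀ n < s, q n = false := by
  intro s
  induction s with
  | zero => simp [search]
  | succ s ih =>
    simp only [search]
    cases h : search q s with
    | some n =>
      simp only [some_orElse']
      constructor
      · intro hh; exact absurd hh (by simp)
      · intro hh
        have := ih.2 fun n hn => hh n (by omega)
        rw [this] at h; exact absurd h (by simp)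
    | none =>
      simp only [none_orElse']
      cases hq : q s with
      | true =>
        simp only [cond_true]
        constructor
        · intro hh; exact absurd hh (by simp)
        · intro hh; exact absurd (hh s (by omega)) (by simp [hq])
      | false =>
        simp only [cond_false, true_iff]
        intro n hn
        rcases Nat.lt_succ_iff_lt_or_eq.1 hn with h' | h'
        · exact ih.1 h n h'
        · subst h'; exact hq

theorem search_some {q : ℕ → Bool} :
    ∀ {s n : ℕ}, search q s = some n → q n = true ∧ n < s ∧ ∀ m < n, q m = false := by
  intro s
  induction s with
  | zero => intro n h; simp [search] at h
  | succ s ih =>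
    intro n h
    rw [search] at h
    cases h' : search q s with
    | some m =>
      rw [h', some_orElse'] at h
      obtain rfl : m = n := by simpa using h
      obtain ⟨h1, h2, h3⟩ := ih h'
      exact ⟨h1, by omega, h3⟩
    | none =>
      rw [h', none_orElse'] at h
      cases hq : q s with
      | true =>
        rw [hq, cond_true] at h
        obtain rfl : s = n := by simpa using h
        exact ⟨hq, by omega, search_eq_none.1 h'⟩
      | false => rw [hq, cond_false] at h; simp at h

theorem search_finds {q : ℕ → Bool} {s n : ℕ} (hn : n < s) (hq : q n = true) :
    ∃ m ≤ n, search q s = some m := by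
  cases h : search q s with
  | none => exact absurd (search_eq_none.1 h n hn) (by simp [hq])
  | some m =>
    refine ⟨m, ?_, rfl⟩
    obtain ⟨h1, h2, h3⟩ := search_some h
    by_contra hc
    exact absurd (h3 n (by omega)) (by simp [hq])

/-! ### proc lemmas -/

theorem proc_fst (s : ℕ) (st : St) (x : ℕ) : ∃ b, (proc s st x).1 = (x, b) :: st.1 := by
  unfold proc
  cases search (fun n => !memb st.2 n && elig s n x) (s + 1) with
  | none => exact ⟨false, rfl⟩
  | some n => exact ⟨dK n, rfl⟩

theorem proc_keys (s : ℕ) (st : St) (x : ℕ) : keys (proc s st x).1 = x :: keys st.1 := by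
  obtain ⟨b, hb⟩ := proc_fst s st x
  simp [keys, hb]

theorem proc_fst_sub (s : ℕ) (st : St) (x : ℕ) : st.1 ⊆ (proc s st x).1 := by
  obtain ⟨b, hb⟩ := proc_fst s st x
  rw [hb]; exact List.subset_cons_self _ _

theorem proc_snd_sub (s : ℕ) (st : St) (x : ℕ) : st.2 ⊆ (proc s st x).2 := by
  unfold proc
  cases search (fun n => !memb st.2 n && elig s n x) (s + 1) with
  | none => exact fun _ h => h
  | some n => exact List.subset_cons_self _ _

theorem proc_snd_cases {s : ℕ} {st : St} {x n : ℕ} (h : n ∈ (proc s st x).2) :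
    n ∈ st.2 ∨ (elig s n x = true ∧ (x, dK n) ∈ (proc s st x).1 ∧ n ∉ st.2) := by
  unfold proc at h ⊢
  cases hs : search (fun n => !memb st.2 n && elig s n x) (s + 1) with
  | none => rw [hs] at h; exact Or.inl h
  | some m =>
    rw [hs] at h
    have h2 : n ∈ m :: st.2 := h
    rcases List.mem_cons.1 h2 with rfl | h'
    · obtain ⟨h1, _, _⟩ := search_some hs
      simp only [Bool.and_eq_true, Bool.not_eq_true'] at h1
      refine Or.inr ⟨h1.2, ?_, fun hc => ?_⟩
      · show (x, dK n) ∈ (x, dK n) :: st.1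
        exact List.mem_cons_self
      · rw [(memb_iff).2 hc] at h1
        exact absurd h1.1 (by simp)
    · exact Or.inl h'

theorem proc_priority {s : ℕ} {st : St} {x n₀ : ℕ} (hb : n₀ < s + 1)
    (he : elig s n₀ x = true) (hns : n₀ ∉ st.2) :
    ∃ n' ≤ n₀, n' ∉ st.2 ∧ n' ∈ (proc s st x).2 := by
  have hq : (!memb st.2 n₀ && elig s n₀ x) = true := by
    simp only [Bool.and_eq_true, Bool.not_eq_true']
    refine ⟨?_, he⟩
    rw [← Bool.not_eq_true]
    simpa [memb_iff] using hns
  obtain ⟨m, hm, hsm⟩ := search_finds (q := fun n => !memb st.2 n && elig s n x) hb hq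
  obtain ⟨h1, _, _⟩ := search_some hsm
  simp only [Bool.and_eq_true, Bool.not_eq_true'] at h1
  refine ⟨m, hm, ?_, ?_⟩
  · intro hc; rw [(memb_iff).2 hc] at h1; exact absurd h1.1 (by simp)
  · unfold proc; rw [hsm]; exact List.mem_cons_self

/-! ### foldl lemmas -/

theorem foldl_fst_sub (s : ℕ) : ∀ (l : List ℕ) (st : St), st.1 ⊆ (l.foldl (proc s) st).1 := by
  intro l
  induction l with
  | nil => intro st; exact fun _ h => h
  | cons a l ih =>
    intro st
    exact List.Subset.trans (proc_fst_sub s st a) (ih (proc s st a))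

theorem foldl_snd_sub (s : ℕ) : ∀ (l : List ℕ) (st : St), st.2 ⊆ (l.foldl (proc s) st).2 := by
  intro l
  induction l with
  | nil => intro st; exact fun _ h => h
  | cons a l ih =>
    intro st
    exact List.Subset.trans (proc_snd_sub s st a) (ih (proc s st a))

theorem foldl_keys (s : ℕ) {y : ℕ} :
    ∀ (l : List ℕ) (st : St), y ∈ keys (l.foldl (proc s) st).1 ↔ y ∈ l ∨ y ∈ keys st.1 := by
  intro l
  induction l with
  | nil => intro st; simp
  | cons a l ih =>
    intro st
    rw [List.foldl_cons, ih, proc_keys]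
    simp [List.mem_cons, or_comm, or_assoc, or_left_comm]

theorem foldl_sat_cases (s : ℕ) {n : ℕ} :
    ∀ (l : List ℕ) (st : St), n ∈ (l.foldl (proc s) st).2 →
      n ∈ st.2 ∨ ∃ x ∈ l, elig s n x = true ∧ (x, dK n) ∈ (l.foldl (proc s) st).1 := by
  intro l
  induction l with
  | nil => intro st h; exact Or.inl h
  | cons a l ih =>
    intro st h
    rw [List.foldl_cons] at h ⊢
    rcases ih (proc s st a) h with h' | ⟨x, hx, h1, h2⟩
    · rcases proc_snd_cases h' with h'' | ⟨h1, h2, _⟩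
      · exact Or.inl h''
      · exact Or.inr ⟨a, List.mem_cons_self, h1, foldl_fst_sub s l _ h2⟩
    · exact Or.inr ⟨x, List.mem_cons_of_mem _ hx, h1, h2⟩

theorem foldl_priority (s : ℕ) {x n₀ : ℕ} (hb : n₀ < s + 1) (he : elig s n₀ x = true) :
    ∀ (l : List ℕ) (st : St), x ∈ l → n₀ ∉ st.2 →
      ∃ n' ≤ n₀, n' ∉ st.2 ∧ n' ∈ (l.foldl (proc s) st).2 := by
  intro l
  induction l with
  | nil => intro st h; simp at h
  | cons a l ih =>
    intro st hx hns
    rw [List.foldl_cons]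
    rcases List.mem_cons.1 hx with rfl | hx'
    · obtain ⟨n', h1, h2, h3⟩ := proc_priority hb he hns
      exact ⟨n', h1, h2, foldl_snd_sub s l _ h3⟩
    · by_cases hc : n₀ ∈ (proc s st a).2
      · exact ⟨n₀, le_refl _, hns, foldl_snd_sub s l _ hc⟩
      · obtain ⟨n', h1, h2, h3⟩ := ih (proc s st a) hx' hc
        exact ⟨n', h1, fun hc' => h2 (proc_snd_sub s st a hc'), h3⟩

theorem foldl_nodup (s : ℕ) :
    ∀ (l : List ℕ) (st : St), (keys st.1).Nodup → l.Nodup → (∀ x ∈ l, x ∉ keys st.1) →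
      (keys (l.foldl (proc s) st).1).Nodup := by
  intro l
  induction l with
  | nil => intro st h _ _; exact h
  | cons a l ih =>
    intro st h hl hd
    rw [List.foldl_cons]
    rcases List.nodup_cons.1 hl with ⟨ha, hl'⟩
    refine ih (proc s st a) ?_ hl' ?_
    · rw [proc_keys]
      exact List.nodup_cons.2 ⟨hd a (List.mem_cons_self), h⟩
    · intro x hx
      rw [proc_keys, List.mem_cons]
      rintro (rfl | hc)
      · exact ha hx
      · exact hd x (List.mem_cons_of_mem _ hx) hc

/-! ### stages lemmas -/

theorem stages_mono_fst {e : ℕ} : ∀ {s t : ℕ}, s ≤ t → (stages e s).1 ⊆ (stages e t).1 := by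
  intro s t h
  induction t, h using Nat.le_induction with
  | base => exact fun _ h => h
  | succ t _ ih =>
    refine List.Subset.trans ih ?_
    rw [stages]
    exact foldl_fst_sub _ _ _

theorem stages_mono_snd {e : ℕ} : ∀ {s t : ℕ}, s ≤ t → (stages e s).2 ⊆ (stages e t).2 := by
  intro s t h
  induction t, h using Nat.le_induction with
  | base => exact fun _ h => h
  | succ t _ ih =>
    refine List.Subset.trans ih ?_
    rw [stages]
    exact foldl_snd_sub _ _ _

theorem wn_mono {s t e x : ℕ} (h : s ≤ t) (hw : wn s e x = true) : wn t e x = true := by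
  unfold wn at hw ⊢
  obtain ⟨a, ha⟩ := Option.isSome_iff_exists.1 hw
  exact Option.isSome_iff_exists.2 ⟨a, evaln_mono h ha⟩

theorem mem_news {e s x : ℕ} {l : List (ℕ × Bool)} :
    x ∈ news e s l ↔ x < s ∧ wn s e x = true ∧ x ∉ keys l := by
  simp only [news, List.mem_filter, List.mem_range, Bool.and_eq_true, Bool.not_eq_true',
    ← Bool.not_eq_true, memb_iff]

theorem keys_stages {e : ℕ} : ∀ {s x : ℕ},
    x ∈ keys (stages e s).1 ↔ x < s ∧ wn s e x = true := by
  intro s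
  induction s with
  | zero => simp [stages, keys]
  | succ s ih =>
    intro x
    rw [stages, foldl_keys, mem_news, ih]
    constructor
    · rintro (⟨h1, h2, _⟩ | ⟨h1, h2⟩)
      · exact ⟨h1, h2⟩
      · exact ⟨by omega, wn_mono (Nat.le_succ s) h2⟩
    · rintro ⟨h1, h2⟩
      by_cases hc : x < s ∧ wn s e x = true
      · exact Or.inr hc
      · exact Or.inl ⟨h1, h2, hc⟩

theorem nodup_keys_stages {e : ℕ} : ∀ {s : ℕ}, (keys (stages e s).1).Nodup := by
  intro s
  induction s with
  | zero => simp [stages, keys]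
  | succ s ih =>
    rw [stages]
    refine foldl_nodup _ _ _ ih (List.Nodup.filter _ (List.nodup_range)) ?_
    intro x hx
    exact (mem_news.1 hx).2.2

theorem keys_unique : ∀ {l : List (ℕ × Bool)}, (keys l).Nodup →
    ∀ {x : ℕ} {b b' : Bool}, (x, b) ∈ l → (x, b') ∈ l → b = b' := by
  intro l
  induction l with
  | nil => intro _ x b b' h; simp at h
  | cons p l ih =>
    intro hn x b b' h1 h2
    rw [keys, List.map_cons, List.nodup_cons] at hn
    rcases List.mem_cons.1 h1 with rfl | h1'
    · rcases List.mem_cons.1 h2 with h2' | h2'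
      · injection h2' with hx hb
        exact hb.symm
      · exact absurd (List.mem_map_of_mem (f := Prod.fst) h2') hn.1
    · rcases List.mem_cons.1 h2 with rfl | h2'
      · exact absurd (List.mem_map_of_mem (f := Prod.fst) h1') hn.1
      · exact ih hn.2 h1' h2'

theorem side_unique {e s x} {b b' : Bool} (h1 : (x, b) ∈ (stages e s).1)
    (h2 : (x, b') ∈ (stages e s).1) : b = b' :=
  keys_unique nodup_keys_stages h1 h2

theorem sat_sound {e : ℕ} : ∀ {s n : ℕ}, n ∈ (stages e s).2 →
    ∃ x s', elig s' n x = true ∧ (x, dK n) ∈ (stages e s).1 := by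
  intro s
  induction s with
  | zero => intro n h; simp [stages] at h
  | succ s ih =>
    intro n h
    rw [stages] at h
    rcases foldl_sat_cases _ _ _ h with h' | ⟨x, _, h1, h2⟩
    · obtain ⟨x, s', hx⟩ := ih h'
      exact ⟨x, s', hx.1, stages_mono_fst (Nat.le_succ s) hx.2⟩
    · exact ⟨x, s + 1, h1, by rw [stages]; exact h2⟩

theorem stages_priority {e t x n₀ : ℕ} (hx1 : x ∈ keys (stages e (t + 1)).1)
    (hx0 : x ∉ keys (stages e t).1) (hb : n₀ < t + 2) (he : elig (t + 1) n₀ x = true)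
    (hns : n₀ ∉ (stages e t).2) :
    ∃ n' ≤ n₀, n' ∉ (stages e t).2 ∧ n' ∈ (stages e (t + 1)).2 := by
  have hx : x ∈ news e (t + 1) (stages e t).1 := by
    rw [stages, foldl_keys] at hx1
    rcases hx1 with h | h
    · exact h
    · exact absurd h hx0
  obtain ⟨n', h1, h2, h3⟩ := foldl_priority (t + 1) hb he _ (stages e t) hx hns
  exact ⟨n', h1, h2, by rw [stages]; exact h3⟩

set_option maxHeartbeats 1000000

theorem band_primrec {α : Type} [Primcodable α] {f g : α → Bool} (hf : Primrec f)
    (hg : Primrec g) : Primrec fun a => f a && g a := by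
  have h := (Primrec.dom_bool₂ (· && ·)).comp hf hg
  exact h

theorem bnot_primrec {α : Type} [Primcodable α] {f : α → Bool} (hf : Primrec f) :
    Primrec fun a => !f a := by
  have h := (Primrec.dom_bool (!·)).comp hf
  exact h

theorem memb_primrec {α : Type} [Primcodable α] [DecidableEq α] :
    Primrec₂ (memb (α := α)) := by
  have := Primrec.list_foldl (α := List α × α) (β := α) (σ := Bool)
    (f := fun p => p.1) (g := fun _ => false)
    (h := fun p q => q.1 || (q.2 == p.2))
    Primrec.fst (Primrec.const false)
    ((Primrec.dom_bool₂ (· || ·)).comp₂ (Primrec.fst.comp₂ Primrec₂.right)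
      (Primrec.beq.comp₂ (Primrec.snd.comp₂ Primrec₂.right)
        (Primrec.snd.comp₂ Primrec₂.left)))
  exact this.to₂

theorem cc_primrec : Primrec cc := Primrec.ofNat Code

theorem wn_primrec : Primrec fun p : ℕ × ℕ × ℕ => wn p.1 p.2.1 p.2.2 := by
  have p1 : Primrec fun p : ℕ × ℕ × ℕ => p.2.1 := Primrec.fst.comp Primrec.snd
  have p2 : Primrec fun p : ℕ × ℕ × ℕ => p.2.2 := Primrec.snd.comp Primrec.snd
  have hcc := cc_primrec.comp p1
  have hgg := (Primrec.fst.pair hcc).pair p2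
  have h := primrec_evaln.comp hgg
  have h2 := Primrec.option_isSome.comp h
  exact h2

theorem dI_primrec : Primrec dI := Primrec.fst.comp Primrec.unpair
theorem dJ_primrec : Primrec dJ :=
  Primrec.fst.comp (Primrec.unpair.comp (Primrec.snd.comp Primrec.unpair))
theorem dK_primrec : Primrec dK :=
  Primrec.nat_bodd.comp (Primrec.snd.comp (Primrec.unpair.comp (Primrec.snd.comp Primrec.unpair)))

theorem elig_primrec : Primrec fun p : ℕ × ℕ × ℕ => elig p.1 p.2.1 p.2.2 := by
  have p1 : Primrec fun p : ℕ × ℕ × ℕ => p.2.1 := Primrec.fst.comp Primrec.snd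
  have p2 : Primrec fun p : ℕ × ℕ × ℕ => p.2.2 := Primrec.snd.comp Primrec.snd
  have hdi := dI_primrec.comp p1
  have hdj := dJ_primrec.comp p1
  have h1 := wn_primrec.comp (Primrec.fst.pair (hdi.pair p2))
  have h2 := wn_primrec.comp (Primrec.fst.pair (hdj.pair p2))
  have h := band_primrec h1 h2
  exact h

theorem search_eq_rec {q : ℕ → Bool} : ∀ s : ℕ,
    search q s = Nat.rec none (fun n acc => acc <|> (bif q n then some n else none)) s := by
  intro s
  induction s with
  | zero => rfl
  | succ s ih => rw [search, ih]

theorem search_primrec {α : Type} [Primcodable α] {q : α → ℕ → Bool} (hq : Primrec₂ q) :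
    Primrec₂ fun a s => search (q a) s := by
  have r1 : Primrec fun r : (α × ℕ) × ℕ × Option ℕ => r.1.1 := Primrec.fst.comp Primrec.fst
  have r2 : Primrec fun r : (α × ℕ) × ℕ × Option ℕ => r.2.1 := Primrec.fst.comp Primrec.snd
  have r3 : Primrec fun r : (α × ℕ) × ℕ × Option ℕ => r.2.2 := Primrec.snd.comp Primrec.snd
  have hqr := hq.comp r1 r2
  have hsome := Primrec.option_some.comp r2
  have hcond := Primrec.cond hqr hsome (Primrec.const (none : Option ℕ))
  have horelse := Primrec.option_orElse.comp r3 hcond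
  have hstep : Primrec₂ fun (p : α × ℕ) (r : ℕ × Option ℕ) =>
      ((r.2 <|> (bif q p.1 r.1 then some r.1 else none)) : Option ℕ) := horelse.to₂
  have h := Primrec.nat_rec' (f := fun p : α × ℕ => p.2)
    (g := fun _ : α × ℕ => (none : Option ℕ)) Primrec.snd
    (Primrec.const (none : Option ℕ)) hstep
  have h2 : Primrec fun p : α × ℕ => search (q p.1) p.2 := by
    refine h.of_eq fun p => ?_
    exact (search_eq_rec p.2).symm
  exact h2.to₂

theorem keys_primrec : Primrec keys := by
  have h := Primrec.list_map (α := List (ℕ × Bool)) (β := ℕ × Bool) (σ := ℕ)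
    (f := fun l => l) (g := fun _ q => q.1) Primrec.id (Primrec.fst.comp Primrec.snd).to₂
  exact h

theorem proc_primrec : Primrec fun p : ℕ × St × ℕ => proc p.1 p.2.1 p.2.2 := by
  have q1 : Primrec fun r : (ℕ × St × ℕ) × ℕ => r.1.1 := Primrec.fst.comp Primrec.fst
  have q12 : Primrec fun r : (ℕ × St × ℕ) × ℕ => r.1.2 := Primrec.snd.comp Primrec.fst
  have q121 : Primrec fun r : (ℕ × St × ℕ) × ℕ => r.1.2.1 := Primrec.fst.comp q12
  have q1211 : Primrec fun r : (ℕ × St × ℕ) × ℕ => r.1.2.1.1 := Primrec.fst.comp q121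
  have q1212 : Primrec fun r : (ℕ × St × ℕ) × ℕ => r.1.2.1.2 := Primrec.snd.comp q121
  have q122 : Primrec fun r : (ℕ × St × ℕ) × ℕ => r.1.2.2 := Primrec.snd.comp q12
  have q2 : Primrec fun r : (ℕ × St × ℕ) × ℕ => r.2 := Primrec.snd
  have hm := memb_primrec.comp q1212 q2
  have he := elig_primrec.comp (q1.pair (q2.pair q122))
  have hqq := band_primrec (bnot_primrec hm) he
  have hq : Primrec₂ fun (p : ℕ × St × ℕ) (n : ℕ) =>
      (!memb p.2.1.2 n && elig p.1 n p.2.2 : Bool) := hqq.to₂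
  have hsearch := search_primrec hq
  have p1 : Primrec fun p : ℕ × St × ℕ => p.1 := Primrec.fst
  have hos := hsearch.comp Primrec.id (Primrec.succ.comp p1)
  have ho : Primrec fun p : ℕ × St × ℕ =>
      search (fun n => !memb p.2.1.2 n && elig p.1 n p.2.2) (p.1 + 1) := hos
  have s21 : Primrec fun p : ℕ × St × ℕ => p.2.1 := Primrec.fst.comp Primrec.snd
  have s211 : Primrec fun p : ℕ × St × ℕ => p.2.1.1 := Primrec.fst.comp s21
  have s212 : Primrec fun p : ℕ × St × ℕ => p.2.1.2 := Primrec.snd.comp s21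
  have s22 : Primrec fun p : ℕ × St × ℕ => p.2.2 := Primrec.snd.comp Primrec.snd
  have hpairf := s22.pair (Primrec.const false)
  have hconsf := Primrec.list_cons.comp hpairf s211
  have hf := hconsf.pair s212
  have hgpair := (q122.pair (dK_primrec.comp q2)).pair q1211
  have hgcons1 := Primrec.list_cons.comp ((q122.pair (dK_primrec.comp q2))) q1211
  have hgcons2 := Primrec.list_cons.comp q2 q1212
  have hg0 := hgcons1.pair hgcons2
  have hg : Primrec₂ fun (p : ℕ × St × ℕ) (n : ℕ) =>
      ((((p.2.2, dK n) :: p.2.1.1, n :: p.2.1.2)) : St) := hg0.to₂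
  have h := Primrec.option_casesOn ho hf hg
  exact h

theorem filter_eq_filterMap {α : Type} (pr : α → Bool) (l : List α) :
    l.filter pr = l.filterMap fun x => bif pr x then some x else none := by
  induction l with
  | nil => rfl
  | cons a l ih =>
    rw [List.filter_cons, List.filterMap_cons]
    cases h : pr a <;> simp [h, ih]

theorem news_primrec : Primrec fun p : (ℕ × ℕ) × List (ℕ × Bool) => news p.1.1 p.1.2 p.2 := by
  have q11 : Primrec fun r : ((ℕ × ℕ) × List (ℕ × Bool)) × ℕ => r.1.1 :=
    Primrec.fst.comp Primrec.fst
  have q111 : Primrec fun r : ((ℕ × ℕ) × List (ℕ × Bool)) × ℕ => r.1.1.1 :=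
    Primrec.fst.comp q11
  have q112 : Primrec fun r : ((ℕ × ℕ) × List (ℕ × Bool)) × ℕ => r.1.1.2 :=
    Primrec.snd.comp q11
  have q12 : Primrec fun r : ((ℕ × ℕ) × List (ℕ × Bool)) × ℕ => r.1.2 :=
    Primrec.snd.comp Primrec.fst
  have q2 : Primrec fun r : ((ℕ × ℕ) × List (ℕ × Bool)) × ℕ => r.2 := Primrec.snd
  have h1 := wn_primrec.comp (q112.pair (q111.pair q2))
  have h2 := memb_primrec.comp (keys_primrec.comp q12) q2
  have hc := band_primrec h1 (bnot_primrec h2)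
  have hsome := Primrec.option_some.comp q2
  have hcond := Primrec.cond hc hsome (Primrec.const (none : Option ℕ))
  have hg : Primrec₂ fun (p : (ℕ × ℕ) × List (ℕ × Bool)) (x : ℕ) =>
      (bif wn p.1.2 p.1.1 x && !memb (keys p.2) x then some x else none : Option ℕ) :=
    hcond.to₂
  have p12 : Primrec fun p : (ℕ × ℕ) × List (ℕ × Bool) => p.1.2 :=
    Primrec.snd.comp Primrec.fst
  have hrange := Primrec.list_range.comp p12
  have h : Primrec fun p : (ℕ × ℕ) × List (ℕ × Bool) => (List.range p.1.2).filterMap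
      (fun x => bif wn p.1.2 p.1.1 x && !memb (keys p.2) x then some x else none) :=
    Primrec.listFilterMap hrange hg
  refine h.of_eq fun p => ?_
  rw [news, filter_eq_filterMap]

theorem stages_primrec : Primrec₂ stages := by
  have f11 : Primrec fun a : ((ℕ × ℕ) × (ℕ × St)) × (St × ℕ) => a.1.2.1 :=
    Primrec.fst.comp (Primrec.snd.comp Primrec.fst)
  have f21 : Primrec fun a : ((ℕ × ℕ) × (ℕ × St)) × (St × ℕ) => a.2.1 :=
    Primrec.fst.comp Primrec.snd
  have f22 : Primrec fun a : ((ℕ × ℕ) × (ℕ × St)) × (St × ℕ) => a.2.2 :=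
    Primrec.snd.comp Primrec.snd
  have hh0 := proc_primrec.comp ((Primrec.succ.comp f11).pair (f21.pair f22))
  have hh : Primrec₂ fun (a : (ℕ × ℕ) × (ℕ × St)) (q : St × ℕ) =>
      (proc (a.2.1 + 1) q.1 q.2 : St) := hh0.to₂
  have e11 : Primrec fun a : (ℕ × ℕ) × (ℕ × St) => a.1.1 := Primrec.fst.comp Primrec.fst
  have e21 : Primrec fun a : (ℕ × ℕ) × (ℕ × St) => a.2.1 := Primrec.fst.comp Primrec.snd
  have e22 : Primrec fun a : (ℕ × ℕ) × (ℕ × St) => a.2.2 := Primrec.snd.comp Primrec.snd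
  have e221 : Primrec fun a : (ℕ × ℕ) × (ℕ × St) => a.2.2.1 := Primrec.fst.comp e22
  have hfo := news_primrec.comp ((e11.pair (Primrec.succ.comp e21)).pair e221)
  have hstep0 := Primrec.list_foldl hfo e22 hh
  have hstep : Primrec₂ fun (p : ℕ × ℕ) (r : ℕ × St) =>
      ((news p.1 (r.1 + 1) r.2.1).foldl (proc (r.1 + 1)) r.2 : St) := hstep0.to₂
  have h := Primrec.nat_rec' (f := fun p : ℕ × ℕ => p.2)
    (g := fun _ : ℕ × ℕ => (([], []) : St)) Primrec.snd (Primrec.const (([], []) : St)) hstep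
  have h2 : Primrec fun p : ℕ × ℕ => stages p.1 p.2 := by
    refine h.of_eq fun p => ?_
    obtain ⟨e, s⟩ := p
    induction s with
    | zero => rfl
    | succ s ih => simp only [stages, ← ih]
  exact h2.to₂

/-! ### c.e. predicates from the construction -/

theorem ce_of_exists {p : ℕ → ℕ → Bool} (hp : Computable₂ p) :
    Ce {x | ∃ s, p x s = true} := by
  have h : Partrec fun x : ℕ => Nat.rfind fun s => ((p x s : Part Bool)) :=
    Partrec.rfind hp.partrec₂
  have h2 := h.dom_re
  have heq : (fun x : ℕ => x ∈ {x : ℕ | ∃ s, p x s = true})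
      = fun x => (Nat.rfind fun s => ((p x s : Part Bool))).Dom := by
    funext x
    simp only [Set.mem_setOf_eq, eq_iff_iff, Nat.rfind_dom]
    constructor
    · rintro ⟨s, hs⟩
      exact ⟨s, by simp [hs], fun {_} _ => trivial⟩
    · rintro ⟨s, hs, _⟩
      refine ⟨s, ?_⟩
      simpa using hs
  show REPred _
  rw [heq]
  exact h2

theorem ce_verif (e n₀ B : ℕ) :
    Ce {x | ∃ s, (decide (B < s) && elig s n₀ x && !memb (keys (stages e s).1) x) = true} := by
  refine ce_of_exists (Primrec₂.to_comp ?_)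
  have r1 : Primrec fun r : ℕ × ℕ => r.1 := Primrec.fst
  have r2 : Primrec fun r : ℕ × ℕ => r.2 := Primrec.snd
  have h1 := Primrec.nat_lt.comp (Primrec.const B) r2
  have h2 := elig_primrec.comp (r2.pair ((Primrec.const n₀).pair r1))
  have hst := stages_primrec.comp (Primrec.const e) r2
  have h3 := memb_primrec.comp (keys_primrec.comp (Primrec.fst.comp hst)) r1
  have h0 := band_primrec (band_primrec h1.decide h2) (bnot_primrec h3)
  exact h0.to₂

/-! ### the enumeration function -/

def QB (m s : ℕ) : Bool :=
  memb (stages m.unpair.1.unpair.1 s).1 (m.unpair.2, (m.unpair.1.unpair.2).bodd)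

theorem QB_primrec : Primrec₂ QB := by
  have r1 : Primrec fun r : ℕ × ℕ => r.1 := Primrec.fst
  have r2 : Primrec fun r : ℕ × ℕ => r.2 := Primrec.snd
  have u1 : Primrec fun r : ℕ × ℕ => r.1.unpair.1 := Primrec.fst.comp (Primrec.unpair.comp r1)
  have u2 : Primrec fun r : ℕ × ℕ => r.1.unpair.2 := Primrec.snd.comp (Primrec.unpair.comp r1)
  have u11 : Primrec fun r : ℕ × ℕ => r.1.unpair.1.unpair.1 :=
    Primrec.fst.comp (Primrec.unpair.comp u1)
  have u12 : Primrec fun r : ℕ × ℕ => r.1.unpair.1.unpair.2 :=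
    Primrec.snd.comp (Primrec.unpair.comp u1)
  have hst := stages_primrec.comp u11 r2
  have harg := u2.pair (Primrec.nat_bodd.comp u12)
  have h0 := memb_primrec.comp (Primrec.fst.comp hst) harg
  exact h0.to₂

def G : ℕ →. ℕ := fun m => Nat.rfind fun s => ((QB m s : Part Bool))

theorem G_partrec : Partrec G := Partrec.rfind QB_primrec.to_comp.partrec₂

theorem G_dom {m : ℕ} : (G m).Dom ↔ ∃ s, QB m s = true := by
  simp only [G, Nat.rfind_dom]
  constructor
  · rintro ⟨s, hs, _⟩
    exact ⟨s, by simpa using hs⟩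
  · rintro ⟨s, hs⟩
    exact ⟨s, by simp [hs], fun {_} _ => trivial⟩

theorem stages_zero (e : ℕ) : stages e 0 = ([], []) := rfl

/-- The two halves of the splitting of `We e`. -/
def Ab (e : ℕ) (b : Bool) : Set ℕ := {x | ∃ s, (x, b) ∈ (stages e s).1}

/-! ### We and wn -/

theorem mem_We_iff {i x : ℕ} : x ∈ We i ↔ ∃ s, wn s i x = true := by
  show ((cc i).eval x).Dom ↔ _
  rw [Part.dom_iff_mem]
  constructor
  · rintro ⟨a, ha⟩
    obtain ⟨k, hk⟩ := evaln_complete.1 ha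
    exact ⟨k, Option.isSome_iff_exists.2 ⟨a, hk⟩⟩
  · rintro ⟨s, hs⟩
    obtain ⟨a, ha⟩ := Option.isSome_iff_exists.1 hs
    exact ⟨a, evaln_sound ha⟩

theorem mem_We_of_wn {s i x : ℕ} (h : wn s i x = true) : x ∈ We i :=
  mem_We_iff.2 ⟨s, h⟩

theorem We_ce (i : ℕ) : Ce (We i) := by
  have : Partrec fun x : ℕ => (cc i).eval x :=
    eval_part.comp (Computable.const (cc i)) Computable.id
  exact this.dom_re

theorem ce_exists_index {A : Set ℕ} (h : Ce A) : ∃ i, We i = A := by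
  have hp : Partrec fun a : ℕ => (Part.assert (a ∈ A) fun _ => Part.some ()).map fun _ => (0 : ℕ) :=
    Partrec.map h (Computable.const 0).to₂
  obtain ⟨c, hc⟩ := exists_code.1 (Partrec.nat_iff.1 hp)
  refine ⟨Encodable.encode c, ?_⟩
  ext x
  show ((Denumerable.ofNat Code (Encodable.encode c)).eval x).Dom ↔ x ∈ A
  rw [Denumerable.ofNat_encode, hc]
  simp [Part.assert]

/-! ### basic structure of the halves -/

theorem Ab_sub_We {e : ℕ} {b : Bool} : Ab e b ⊆ We e := by
  rintro x ⟨s, hs⟩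
  have : x ∈ keys (stages e s).1 := List.mem_map_of_mem (f := Prod.fst) hs
  exact mem_We_of_wn (keys_stages.1 this).2

theorem Ab_disjoint (e : ℕ) : Disjoint (Ab e false) (Ab e true) := by
  rw [Set.disjoint_left]
  rintro x ⟨s, hs⟩ ⟨t, ht⟩
  have h1 : (x, false) ∈ (stages e (max s t)).1 := stages_mono_fst (le_max_left s t) hs
  have h2 : (x, true) ∈ (stages e (max s t)).1 := stages_mono_fst (le_max_right s t) ht
  exact absurd (side_unique h1 h2) (by simp)

theorem Ab_union (e : ℕ) : Ab e false ∪ Ab e true = We e := by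
  ext x
  constructor
  · rintro (h | h)
    · exact Ab_sub_We h
    · exact Ab_sub_We h
  · intro h
    obtain ⟨s, hs⟩ := mem_We_iff.1 h
    have hx : x ∈ keys (stages e (max s (x + 1))).1 :=
      keys_stages.2 ⟨by omega, wn_mono (le_max_left _ _) hs⟩
    obtain ⟨⟨y, b⟩, hyb, hy⟩ := List.mem_map.1 hx
    obtain rfl : y = x := hy
    cases b
    · exact Or.inl ⟨_, hyb⟩
    · exact Or.inr ⟨_, hyb⟩

/-! ### verification -/

theorem never_sat {e i j : ℕ} {b : Bool} (HJ : We j = We i \ Ab e b) {n₀ : ℕ}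
    (h1 : dI n₀ = i) (h2 : dJ n₀ = j) (h3 : dK n₀ = b) : ∀ s, n₀ ∉ (stages e s).2 := by
  intro s hc
  obtain ⟨x, s', he, hx⟩ := sat_sound hc
  rw [elig, h1, h2, Bool.and_eq_true] at he
  have hwj : x ∈ We j := mem_We_of_wn he.2
  rw [HJ] at hwj
  exact hwj.2 ⟨s, h3 ▸ hx⟩

theorem exists_sat_bound (e n₀ : ℕ) :
    ∃ s₀, ∀ n < n₀, (∃ s, n ∈ (stages e s).2) → n ∈ (stages e s₀).2 := by
  induction n₀ with
  | zero => exact ⟨0, fun n hn => by omega⟩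
  | succ n₀ ih =>
    obtain ⟨s₀, hs₀⟩ := ih
    by_cases hn : ∃ s, n₀ ∈ (stages e s).2
    · obtain ⟨s₁, hs₁⟩ := hn
      refine ⟨max s₀ s₁, fun n hn h => ?_⟩
      rcases Nat.lt_succ_iff_lt_or_eq.1 hn with h' | rfl
      · exact stages_mono_snd (le_max_left _ _) (hs₀ n h' h)
      · exact stages_mono_snd (le_max_right _ _) hs₁
    · refine ⟨s₀, fun n hn2 h => ?_⟩
      rcases Nat.lt_succ_iff_lt_or_eq.1 hn2 with h' | rfl
      · exact hs₀ n h' h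
      · exact absurd h hn

theorem key_verif {e i j : ℕ} (b : Bool) (HJ : We j = We i \ Ab e b) :
    Ce (We i \ We e) := by
  set n₀ : ℕ := Nat.pair i (Nat.pair j (cond b 1 0)) with hn₀
  have hdI : dI n₀ = i := by simp [dI, hn₀]
  have hdJ : dJ n₀ = j := by simp [dJ, hn₀]
  have hdK : dK n₀ = b := by cases b <;> simp [dK, hn₀]
  have hnever : ∀ s, n₀ ∉ (stages e s).2 := never_sat HJ hdI hdJ hdK
  obtain ⟨s₀, hs₀⟩ := exists_sat_bound e n₀
  set B : ℕ := max s₀ n₀ with hB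
  have hmain : {x | ∃ s, (decide (B < s) && elig s n₀ x && !memb (keys (stages e s).1) x)
      = true} = We i \ We e := by
    ext x
    simp only [Set.mem_setOf_eq, Bool.and_eq_true, Bool.not_eq_true', decide_eq_true_eq,
      ← Bool.not_eq_true, memb_iff]
    constructor
    · rintro ⟨s, ⟨hBs, he⟩, hk⟩
      rw [elig, Bool.and_eq_true, hdI, hdJ] at he
      refine ⟨mem_We_of_wn he.1, fun hWe => ?_⟩
      -- x enters A at some least stage t+1 > s
      have hex : ∃ t, x ∈ keys (stages e t).1 := by
        obtain ⟨s₁, hs₁⟩ := mem_We_iff.1 hWe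
        exact ⟨max s₁ (x + 1), keys_stages.2 ⟨by omega, wn_mono (le_max_left _ _) hs₁⟩⟩
      have hTmem := Nat.find_spec hex
      have hT0 : Nat.find hex ≠ 0 := by
        intro h0
        rw [h0, stages_zero] at hTmem
        simp [keys] at hTmem
      obtain ⟨t, ht⟩ := Nat.exists_eq_succ_of_ne_zero hT0
      rw [ht] at hTmem
      have hsT : s < t + 1 := by
        by_contra hle
        push_neg at hle
        have : x ∈ keys (stages e s).1 :=
          List.map_subset Prod.fst (stages_mono_fst hle) hTmem
        exact hk this
      have hnotT : x ∉ keys (stages e t).1 := Nat.find_min hex (by omega)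
      have helig : elig (t + 1) n₀ x = true := by
        rw [elig, Bool.and_eq_true, hdI, hdJ]
        exact ⟨wn_mono (by omega) he.1, wn_mono (by omega) he.2⟩
      obtain ⟨n', hn'le, hn'old, hn'new⟩ := stages_priority hTmem hnotT
        (by have : n₀ ≤ B := le_max_right _ _; omega) helig (hnever t)
      rcases Nat.lt_or_ge n' n₀ with hlt | hge
      · have : n' ∈ (stages e s₀).2 := hs₀ n' hlt ⟨t + 1, hn'new⟩
        have hs₀t : s₀ ≤ t := by have : s₀ ≤ B := le_max_left _ _; omega
        exact hn'old (stages_mono_snd hs₀t this)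
      · obtain rfl : n' = n₀ := by omega
        exact hnever _ hn'new
    · rintro ⟨hWi, hWe⟩
      have hWj : x ∈ We j := by
        rw [HJ]
        exact ⟨hWi, fun hc => hWe (Ab_sub_We hc)⟩
      obtain ⟨s₁, hs₁⟩ := mem_We_iff.1 hWi
      obtain ⟨s₂, hs₂⟩ := mem_We_iff.1 hWj
      refine ⟨max (max s₁ s₂) (B + 1), ⟨by omega, ?_⟩, fun hc => hWe ?_⟩
      · rw [elig, Bool.and_eq_true, hdI, hdJ]
        exact ⟨wn_mono (by omega) hs₁, wn_mono (by omega) hs₂⟩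
      · exact mem_We_of_wn (keys_stages.1 hc).2
  have := ce_verif e n₀ B
  rwa [hmain] at this

/-- The halves satisfy the Friedberg property unconditionally. -/
theorem friedberg_Ab (e : ℕ) (b : Bool) (W : Set ℕ) (hW : Ce W)
    (hnW : ¬ Ce (W \ We e)) : ¬ Ce (W \ Ab e b) := by
  intro hCe
  obtain ⟨i, rfl⟩ := ce_exists_index hW
  obtain ⟨j, hj⟩ := ce_exists_index hCe
  exact hnW (key_verif b hj)

theorem ce_univ : Ce (Set.univ : Set ℕ) := by
  have : ComputablePred fun x : ℕ => x ∈ (Set.univ : Set ℕ) :=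
    ⟨fun _ => instDecidableTrue, by
      simpa using (Computable.const true)⟩
  exact this.to_re

theorem compl_eq_univ_diff (A : Set ℕ) : (fun x => ¬ x ∈ A) = (· ∈ Set.univ \ A) := by
  funext x
  simp

theorem not_comp_halves {e : ℕ} (hA : ¬ CompSet (We e)) (b : Bool) : ¬ CompSet (Ab e b) := by
  have hU : ¬ Ce (Set.univ \ We e) := by
    intro hc
    refine hA (ComputablePred.computable_iff_re_compl_re'.2 ⟨We_ce e, ?_⟩)
    rw [compl_eq_univ_diff]
    exact hc
  intro hcomp
  have h1 : ¬ Ce (Set.univ \ Ab e b) := by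
    cases b
    · exact (friedberg_Ab e false _ ce_univ hU)
    · exact (friedberg_Ab e true _ ce_univ hU)
  refine h1 ?_
  show REPred _
  rw [← compl_eq_univ_diff]
  exact hcomp.not.to_re

end UFS

/-- Uniform Friedberg splitting: there is a total computable `h` which splits
every `We`, giving a Friedberg split whenever `We` is not computable. -/
theorem uniform_friedberg_splitting :
    ∃ h : ℕ → ℕ × ℕ, Computable h ∧ ∀ e : ℕ,
      Disjoint (We (h e).1) (We (h e).2) ∧
      We (h e).1 ∪ We (h e).2 = We e ∧
      (¬ CompSet (We e) →
        FriedbergSplit (We e) (We (h e).1) (We (h e).2) ∧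
        ¬ CompSet (We (h e).1) ∧ ¬ CompSet (We (h e).2)) := by
  obtain ⟨sf, sfc, sfe⟩ := Nat.Partrec.Code.smn
  obtain ⟨cF, hcF⟩ := Nat.Partrec.Code.exists_code.1 (Partrec.nat_iff.1 UFS.G_partrec)
  refine ⟨fun e => (Encodable.encode (sf cF (Nat.pair e 0)),
    Encodable.encode (sf cF (Nat.pair e 1))), ?_, ?_⟩
  · have h0 : Computable fun e : ℕ => Nat.pair e 0 :=
      (Primrec₂.natPair.comp Primrec.id (Primrec.const 0)).to_comp
    have h1 : Computable fun e : ℕ => Nat.pair e 1 :=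
      (Primrec₂.natPair.comp Primrec.id (Primrec.const 1)).to_comp
    have c0 := Computable.encode.comp (sfc.comp (Computable.const cF) h0)
    have c1 := Computable.encode.comp (sfc.comp (Computable.const cF) h1)
    exact c0.pair c1
  · intro e
    have key : ∀ b' : ℕ, We (Encodable.encode (sf cF (Nat.pair e b')))
        = UFS.Ab e b'.bodd := by
      intro b'
      ext x
      show ((Denumerable.ofNat Nat.Partrec.Code (Encodable.encode (sf cF (Nat.pair e b')))).eval x).Dom ↔ _
      rw [Denumerable.ofNat_encode, sfe, hcF]
      rw [UFS.G_dom]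
      have hq : ∀ s, UFS.QB (Nat.pair (Nat.pair e b') x) s
          = UFS.memb (UFS.stages e s).1 (x, b'.bodd) := by
        intro s
        simp [UFS.QB, Nat.unpair_pair]
      constructor
      · rintro ⟨s, hs⟩
        rw [hq s, UFS.memb_iff] at hs
        exact ⟨s, hs⟩
      · rintro ⟨s, hs⟩
        exact ⟨s, by rw [hq s, UFS.memb_iff]; exact hs⟩
    have k0 : We (Encodable.encode (sf cF (Nat.pair e 0))) = UFS.Ab e false := by
      have := key 0
      simpa using this
    have k1 : We (Encodable.encode (sf cF (Nat.pair e 1))) = UFS.Ab e true := by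
      have := key 1
      simpa using this
    dsimp only
    rw [k0, k1]
    refine ⟨UFS.Ab_disjoint e, UFS.Ab_union e, fun hnc => ?_⟩
    refine ⟨⟨⟨k0 ▸ UFS.We_ce _, k1 ▸ UFS.We_ce _, UFS.Ab_disjoint e, UFS.Ab_union e⟩, fun W hW hnW =>
      ⟨UFS.friedberg_Ab e false W hW hnW, UFS.friedberg_Ab e true W hW hnW⟩⟩,
      UFS.not_comp_halves hnc false, UFS.not_comp_halves hnc true⟩
end

section
/- (Cholak–Downey–Herrmann) If A is a D-maximal c.e. set, then every non-trivial split of A is a Friedberg split: whenever A₀, A₁ are disjoint c.e. sets with A₀ ∪ A₁ = A and neither A₀ nor A₁ computable, then for every c.e. set W with W \ A not c.e., neither W \ A₀ nor W \ A₁ is c.e. -/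
/-- `W` is complemented modulo `D(A)`: there is a c.e. `Y` with
`W ∪ Y ∪ A = ℕ` and `(W ∩ Y) \\ A` c.e. -/
def ComplementedModD (A W : Set ℕ) : Prop :=
  ∃ Y : Set ℕ, Ce Y ∧ W ∪ Y ∪ A = Set.univ ∧ Ce ((W ∩ Y) \ A)

/-- `W` is `0` modulo `D(A)`: `W \\ A` is c.e. -/
def ZeroModD (A W : Set ℕ) : Prop := Ce (W \ A)

/-- `W` is `1` modulo `D(A)`: there is a c.e. `Y` disjoint from `A` with
`W ∪ Y ∪ A = ℕ`. -/
def OneModD (A W : Set ℕ) : Prop :=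
  ∃ Y : Set ℕ, Ce Y ∧ Y ∩ A = ∅ ∧ W ∪ Y ∪ A = Set.univ

/-- A non-computable c.e. set `A` is `D`-maximal if every c.e. set `W` is
complemented modulo `D(A)` and is either `0` or `1` modulo `D(A)`. -/
def DMaximal (A : Set ℕ) : Prop :=
  Ce A ∧ ¬ CompSet A ∧
    ∀ W : Set ℕ, Ce W → ComplementedModD A W ∧ (ZeroModD A W ∨ OneModD A W)

theorem rePred_or {p q : ℕ → Prop} (hp : REPred p) (hq : REPred q) :
    REPred fun a => p a ∨ q a := by
  obtain ⟨k, hk, K⟩ := Partrec.merge hp hq (fun a x _ y _ => Subsingleton.elim x y)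
  exact hk.of_eq fun a => Part.ext fun x => by
    simp only [K, Part.mem_assert_iff, Part.mem_some_iff, and_true, exists_prop,
      exists_const]

theorem Ce.union {S T : Set ℕ} (hS : Ce S) (hT : Ce T) : Ce (S ∪ T) :=
  rePred_or hS hT

theorem aux_not_ce_diff (A : Set ℕ) (hA : DMaximal A) (A₀ A₁ : Set ℕ)
    (hce0 : Ce A₀) (hce1 : Ce A₁) (hdisj : Disjoint A₀ A₁) (hunion : A₀ ∪ A₁ = A)
    (h0 : ¬ CompSet A₀) (W : Set ℕ) (hW : Ce W) (hWA : ¬ Ce (W \ A)) :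
    ¬ Ce (W \ A₀) := by
  intro hV
  set V : Set ℕ := W \ A₀ with hVdef
  have hA0sub : A₀ ⊆ A := hunion ▸ Set.subset_union_left
  have hA1sub : A₁ ⊆ A := hunion ▸ Set.subset_union_right
  have hVA : V \ A = W \ A := by
    rw [hVdef, Set.diff_diff, Set.union_eq_self_of_subset_left hA0sub]
  rcases (hA.2.2 V hV).2 with hz | ⟨Y, hY, hYA, hcov⟩
  · exact hWA (hVA ▸ hz)
  · -- complement of A₀ is V ∪ Y ∪ A₁, hence c.e.
    have hcompl : (V ∪ Y) ∪ A₁ = A₀ᶜ := by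
      ext x
      constructor
      · intro hx hx0
        rcases hx with (h | h) | h
        · exact h.2 hx0
        · have : x ∈ Y ∩ A := ⟨h, hA0sub hx0⟩
          rw [hYA] at this
          exact this
        · exact hdisj.ne_of_mem hx0 h rfl
      · intro hx
        have hxA : x ∈ V ∪ Y ∪ A := hcov ▸ Set.mem_univ x
        rcases hxA with (h | h) | h
        · exact Or.inl (Or.inl h)
        · exact Or.inl (Or.inr h)
        · rcases (hunion ▸ h : x ∈ A₀ ∪ A₁) with h | h
          · exact absurd h hx
          · exact Or.inr h
    have hce_compl : Ce (A₀ᶜ) := hcompl ▸ (hV.union hY).union hce1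
    apply h0
    rw [CompSet]
    rw [ComputablePred.computable_iff_re_compl_re']
    exact ⟨hce0, hce_compl.of_eq fun a => by simp [Set.mem_compl_iff]⟩

/-- (Cholak–Downey–Herrmann) Every non-trivial split of a `D`-maximal set is a
Friedberg split. -/
theorem dmaximal_nontrivial_splits_friedberg (A : Set ℕ) (hA : DMaximal A)
    (A₀ A₁ : Set ℕ) (hsplit : IsSplit A A₀ A₁)
    (h0 : ¬ CompSet A₀) (h1 : ¬ CompSet A₁) :
    ∀ W : Set ℕ, Ce W → ¬ Ce (W \ A) → ¬ Ce (W \ A₀) ∧ ¬ Ce (W \ A₁) := by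
  obtain ⟨hce0, hce1, hdisj, hunion⟩ := hsplit
  intro W hW hWA
  exact ⟨aux_not_ce_diff A hA A₀ A₁ hce0 hce1 hdisj hunion h0 W hW hWA,
    aux_not_ce_diff A hA A₁ A₀ hce1 hce0 hdisj.symm (Set.union_comm A₁ A₀ ▸ hunion) h1 W hW hWA⟩
end

section
/- (Herrmann–Kummer Splitting Theorem) Let A and B be c.e. sets with A ⊆ B such that B is not complemented modulo D(A). Then there are disjoint c.e. sets B₀, B₁ with B₀ ∪ B₁ = B such that neither B₀ nor B₁ is complemented modulo D(A). -/
open Nat.Partrec (Code)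
open Nat.Partrec.Code

namespace HKS

attribute [local instance 10] Classical.propDecidable

def memS (c : Code) (s x : ℕ) : Bool := (evaln s c x).isSome

lemma dom_iff_memS {c : Code} {x : ℕ} : (eval c x).Dom ↔ ∃ s, memS c s x = true := by
  rw [Part.dom_iff_mem]
  constructor
  · rintro ⟨y, hy⟩
    rcases evaln_complete.1 hy with ⟨k, hk⟩
    exact ⟨k, Option.isSome_iff_exists.2 ⟨y, hk⟩⟩
  · rintro ⟨s, hs⟩
    rcases Option.isSome_iff_exists.1 hs with ⟨y, hy⟩
    exact ⟨y, evaln_complete.2 ⟨s, hy⟩⟩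

lemma ceCode {S : Set ℕ} (h : Ce S) : ∃ c : Code, ∀ x, x ∈ S ↔ ∃ s, memS c s x = true := by
  have h' : Partrec fun a : ℕ => (Part.assert (a ∈ S) fun _ => Part.some ()).map fun _ => (0 : ℕ) :=
    Partrec.map h ((Computable.const (0 : ℕ)).comp Computable.fst).to₂
  rcases exists_code.1 (Partrec.nat_iff.1 h') with ⟨c, hc⟩
  refine ⟨c, fun x => ?_⟩
  rw [← dom_iff_memS, hc]
  simp [Part.assert]

lemma ce_of_sigma {f : ℕ → ℕ → Bool} (hf : Computable₂ f) :
    Ce {x | ∃ s, f x s = true} := by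
  have hp : Partrec fun x : ℕ => Nat.rfind (f x : ℕ →. Bool) :=
    Partrec.rfind hf.partrec₂
  have := hp.dom_re
  refine this.of_eq fun x => ?_
  rw [Nat.rfind_dom]
  constructor
  · rintro ⟨n, hn, _⟩
    exact ⟨n, by simpa [PFun.coe_val] using hn⟩
  · rintro ⟨s, hs⟩
    exact ⟨s, by simpa [PFun.coe_val] using hs, fun {m} _ => trivial⟩

/-- first element of `l` satisfying `p` -/
def ofind {α : Type*} (l : List α) (p : α → Bool) : Option α :=
  l.foldr (fun a acc => if p a then some a else acc) none

lemma ofind_eq_none {α : Type*} {l : List α} {p : α → Bool} :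
    ofind l p = none ↔ ∀ a ∈ l, p a = false := by
  induction l with
  | nil => simp [ofind]
  | cons a l ih =>
    by_cases h : p a <;> simp [ofind, h] at * <;> simp [ih, h]

lemma ofind_mem {α : Type*} {l : List α} {p : α → Bool} {a : α}
    (h : ofind l p = some a) : a ∈ l ∧ p a = true := by
  induction l with
  | nil => simp [ofind] at h
  | cons b l ih =>
    by_cases hb : p b
    · simp [ofind, hb] at h; subst h; exact ⟨List.mem_cons_self, hb⟩
    · simp [ofind, hb] at h
      rcases ih h with ⟨h1, h2⟩
      exact ⟨List.mem_cons_of_mem _ h1, h2⟩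

lemma ofind_append {α : Type*} {l₁ l₂ : List α} {p : α → Bool} :
    ofind (l₁ ++ l₂) p = (ofind l₁ p).orElse (fun _ => ofind l₂ p) := by
  induction l₁ with
  | nil => simp [ofind]
  | cons a l ih => by_cases h : p a <;> simp [ofind, h] at * <;> simp [ih]

lemma ofind_range_succ {n : ℕ} {p : ℕ → Bool} :
    ofind (List.range (n+1)) p =
      (ofind (List.range n) p).orElse (fun _ => if p n then some n else none) := by
  rw [List.range_succ, ofind_append]; rfl

lemma ofind_range_some {n k : ℕ} {p : ℕ → Bool} (h : ofind (List.range n) p = some k) :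
    k < n ∧ p k = true ∧ ∀ j < k, p j = false := by
  induction n with
  | zero => simp [ofind] at h
  | succ n ih =>
    rw [ofind_range_succ] at h
    cases hn : ofind (List.range n) p with
    | some a =>
      rw [hn] at h; simp [Option.orElse] at h; subst h
      rcases ih hn with ⟨h1, h2, h3⟩
      exact ⟨Nat.lt_succ_of_lt h1, h2, h3⟩
    | none =>
      rw [hn] at h; simp [Option.orElse] at h
      by_cases hp : p n
      · simp [hp] at h; subst h
        exact ⟨Nat.lt_succ_self _, hp, fun j hj =>
          (ofind_eq_none.1 hn) j (List.mem_range.2 hj)⟩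
      · simp [hp] at h

lemma ofind_range_isSome {n k : ℕ} {p : ℕ → Bool} (hk : k < n) (hp : p k = true) :
    (ofind (List.range n) p).isSome := by
  cases h : ofind (List.range n) p with
  | some a => rfl
  | none => exact absurd (ofind_eq_none.1 h k (List.mem_range.2 hk)) (by simp [hp])


/-! ## more Ce machinery -/

lemma primrec_mem_list (l : List ℕ) : PrimrecPred fun x => x ∈ l := by
  induction l with
  | nil => exact Primrec.primrecPred (Primrec.of_eq (Primrec.const false) (fun x => by simp))
  | cons a l ih =>
    have : PrimrecPred fun x : ℕ => x = a ∨ x ∈ l :=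
      PrimrecPred.or (Primrec.eq.comp Primrec.id (Primrec.const a)) ih
    exact this.of_eq (by simp)

lemma ce_finite {S : Set ℕ} (h : S.Finite) : Ce S := by
  classical
  obtain ⟨l, hl⟩ : ∃ l : List ℕ, ∀ x, x ∈ S ↔ x ∈ l :=
    ⟨h.toFinset.toList, fun x => by simp⟩
  have : ComputablePred fun x => x ∈ S := by
    have : ComputablePred fun x : ℕ => x ∈ l :=
      ⟨fun x => List.instDecidableMemOfLawfulBEq x l, ((primrec_mem_list l).decide.to_comp).of_eq
        (fun x => by congr)⟩
    exact this.of_eq fun x => (hl x).symm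
  exact this.to_re

lemma ce_union_finite {S T : Set ℕ} (hS : Ce S) (hT : T.Finite) : Ce (S ∪ T) := by
  classical
  obtain ⟨c, hc⟩ := ceCode hS
  obtain ⟨l, hl⟩ : ∃ l : List ℕ, ∀ x, x ∈ T ↔ x ∈ l :=
    ⟨hT.toFinset.toList, fun x => by simp⟩
  have h1 : Primrec₂ fun x s : ℕ => memS c s x :=
    (Primrec.option_isSome.comp
      (primrec_evaln.comp (((Primrec.snd).pair (Primrec.const c)).pair Primrec.fst))).to₂
  have h2 : Primrec fun x : ℕ => decide (x ∈ l) := (primrec_mem_list l).decide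
  have hcomp : Computable₂ fun x s : ℕ => memS c s x || decide (x ∈ l) :=
    ((Primrec.dom_bool₂ (· || ·)).comp₂ h1 ((h2.comp Primrec.fst).to₂)).to_comp
  have := ce_of_sigma hcomp
  refine this.of_eq fun x => ?_
  simp only [Set.mem_setOf_eq, Bool.or_eq_true, Set.mem_union]
  constructor
  · rintro ⟨s, hs | hs⟩
    · exact Or.inl ((hc x).2 ⟨s, hs⟩)
    · exact Or.inr ((hl x).2 (by simpa using hs))
  · rintro (hx | hx)
    · rcases (hc x).1 hx with ⟨s, hs⟩
      exact ⟨s, Or.inl hs⟩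
    · exact ⟨0, Or.inr (by simp [(hl x).1 hx])⟩

abbrev Ent := ℕ × ℕ × Bool

def trip (w : ℕ) : Code × Code := Denumerable.ofNat _ (w / 2)

def iw (w : ℕ) : Bool := decide (w % 2 = 1)

def cy (w : ℕ) : Code := (trip w).1
def cz (w : ℕ) : Code := (trip w).2

section Construction

variable (cA cB : Code)

def placeIn (L : List Ent) (v x : ℕ) : Option Bool :=
  (ofind L fun p => decide (p.1 = x) && decide (p.2.1 ≤ v)).map fun p => p.2.2

def phi (L : List Ent) (w x v : ℕ) : Bool :=
  (decide (placeIn L v x = some (iw w)) || memS (cy w) v x || memS cA v x) &&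
    (memS (cz w) v x ==
      (decide (placeIn L v x = some (iw w)) && memS (cy w) v x && !(memS cA v x)))

def good (L : List Ent) (w x v : ℕ) : Bool :=
  decide (x < v) && !(ofind (List.range (x+1)) fun y => !(phi cA L w y v)).isSome

def condf (L : List Ent) (w x v : ℕ) : Bool :=
  good cA L w x v && decide (w ≤ v) && !(memS cB v x) && !(memS cA v x) &&
    (memS (cy w) v x || memS (cz w) v x)

def winner (L : List Ent) (u x : ℕ) : Option ℕ :=
  ofind (List.range (u+1)) fun w =>
    (ofind (List.range (u+1)) fun v => condf cA cB L w x v).isSome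

def sideAt (L : List Ent) (u x : ℕ) : Bool :=
  Option.casesOn (winner cA cB L u x) false fun w =>
    Option.casesOn (ofind (List.range (u+1)) fun v => condf cA cB L w x v) false fun v₀ =>
      if memS (cz w) v₀ x then !(iw w) else iw w

def stepC (L : List Ent) (u : ℕ) : List Ent :=
  L ++ (List.range u).flatMap fun x =>
    if memS cB u x && !(placeIn L u x).isSome then [(x, u+1, sideAt cA cB L u x)] else []

def allPl : ℕ → List Ent
  | 0 => []
  | u+1 => stepC cA cB (allPl u) u

def place (v x : ℕ) : Option Bool := placeIn (allPl cA cB v) v x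

def Bi (i : Bool) : Set ℕ := {x | ∃ u, place cA cB u x = some i}

def Sset (c : Code) : Set ℕ := {x | ∃ s, memS c s x = true}

def Phi (w x : ℕ) : Prop :=
  (x ∈ Bi cA cB (iw w) ∨ x ∈ Sset (cy w) ∨ x ∈ Sset cA) ∧
    (x ∈ Sset (cz w) ↔ x ∈ Bi cA cB (iw w) ∧ x ∈ Sset (cy w) ∧ x ∉ Sset cA)

def TrueReq (w : ℕ) : Prop := ∀ x, Phi cA cB w x

end Construction


section Structural

variable (cA cB : Code)

lemma memS_mono {c : Code} {s t x : ℕ} (h : s ≤ t) (hx : memS c s x = true) :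
    memS c t x = true := by
  unfold memS at *
  rcases Option.isSome_iff_exists.1 hx with ⟨y, hy⟩
  exact Option.isSome_iff_exists.2 ⟨y, evaln_mono h hy⟩

lemma memS_bound {c : Code} {s x : ℕ} (h : memS c s x = true) : x < s := by
  unfold memS at h
  rcases Option.isSome_iff_exists.1 h with ⟨y, hy⟩
  exact evaln_bound hy

lemma mem_allPl_mono {u u' : ℕ} (h : u ≤ u') {p : Ent} (hp : p ∈ allPl cA cB u) :
    p ∈ allPl cA cB u' := by
  induction u' with
  | zero => rw [Nat.le_zero.1 h] at hp; exact hp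
  | succ n ih =>
    rcases Nat.lt_or_ge u (n+1) with h1 | h1
    · have := ih (Nat.lt_succ_iff.1 h1)
      simp only [allPl, stepC]
      exact List.mem_append_left _ this
    · rw [Nat.le_antisymm h h1] at hp; exact hp

lemma tag_mem {u : ℕ} {p : Ent} (hp : p ∈ allPl cA cB u) :
    1 ≤ p.2.1 ∧ p.2.1 ≤ u ∧ memS cB (p.2.1 - 1) p.1 = true ∧ p ∈ allPl cA cB p.2.1 := by
  induction u with
  | zero => simp [allPl] at hp
  | succ n ih =>
    simp only [allPl, stepC, List.mem_append] at hp
    rcases hp with hp | hp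
    · rcases ih hp with ⟨h1, h2, h3, h4⟩
      exact ⟨h1, Nat.le_succ_of_le h2, h3, h4⟩
    · simp only [List.mem_flatMap] at hp
      rcases hp with ⟨x, _, hx2⟩
      by_cases hc : memS cB n x && !(placeIn (allPl cA cB n) n x).isSome
      · rw [if_pos hc] at hx2
        simp at hx2; subst hx2
        refine ⟨Nat.succ_le_succ (Nat.zero_le _), le_refl _, ?_, ?_⟩
        · simpa using (Bool.and_elim_left hc)
        · simp only [allPl, stepC, List.mem_append, List.mem_flatMap]
          refine Or.inr ⟨x, ?_, ?_⟩
          · exact List.mem_range.2 (memS_bound (by simpa using (Bool.and_elim_left hc)))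
          · rw [if_pos hc]; simp
      · rw [if_neg hc] at hx2; simp at hx2

lemma placeIn_some_mem {L : List Ent} {v x : ℕ} {b : Bool}
    (h : placeIn L v x = some b) : ∃ t, t ≤ v ∧ (x, t, b) ∈ L := by
  unfold placeIn at h
  cases hf : ofind L fun p => decide (p.1 = x) && decide (p.2.1 ≤ v) with
  | none => rw [hf] at h; simp at h
  | some p =>
    rw [hf] at h; simp at h
    rcases ofind_mem hf with ⟨hm, hpred⟩
    simp at hpred
    obtain ⟨h1, h2⟩ := hpred
    refine ⟨p.2.1, h2, ?_⟩
    have : p = (x, p.2.1, b) := by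
      rcases p with ⟨a, t, c⟩; simp at h1 h ⊢; exact ⟨h1, h⟩
    rwa [this] at hm

lemma placeIn_none {L : List Ent} {v x : ℕ}
    (h : placeIn L v x = none) : ∀ t b, (x, t, b) ∈ L → ¬ t ≤ v := by
  intro t b hm htv
  unfold placeIn at h
  cases hf : ofind L fun p => decide (p.1 = x) && decide (p.2.1 ≤ v) with
  | some p => rw [hf] at h; simp at h
  | none =>
    have := ofind_eq_none.1 hf _ hm
    simp at this
    exact absurd htv (Nat.not_le.2 this)

/-- keys in `allPl` are unique -/
lemma allPl_unique {u : ℕ} {p q : Ent} (hp : p ∈ allPl cA cB u) (hq : q ∈ allPl cA cB u)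
    (hpq : p.1 = q.1) : p = q := by
  induction u with
  | zero => simp [allPl] at hp
  | succ n ih =>
    simp only [allPl, stepC, List.mem_append, List.mem_flatMap] at hp hq
    have hnew : ∀ r : Ent, (∃ x ∈ List.range n,
        r ∈ if memS cB n x && !(placeIn (allPl cA cB n) n x).isSome then
          [(x, n+1, sideAt cA cB (allPl cA cB n) n x)] else []) →
        r = (r.1, n+1, sideAt cA cB (allPl cA cB n) n r.1) ∧
          (placeIn (allPl cA cB n) n r.1).isSome = false := by
      intro r hr
      rcases hr with ⟨x, _, hx⟩
      by_cases hc : memS cB n x && !(placeIn (allPl cA cB n) n x).isSome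
      · rw [if_pos hc] at hx; simp at hx; subst hx
        simpa using Bool.and_elim_right hc
      · rw [if_neg hc] at hx; simp at hx
    rcases hp with hp | hp <;> rcases hq with hq | hq
    · exact ih hp hq
    · exfalso
      rcases hnew q hq with ⟨_, h2⟩
      rcases tag_mem cA cB hp with ⟨_, ht2, _, _⟩
      cases hpl : placeIn (allPl cA cB n) n q.1 with
      | some b => rw [hpl] at h2; simp at h2
      | none =>
        exact placeIn_none hpl p.2.1 p.2.2 (by rw [← hpq]; simpa using hp) ht2
    · exfalso
      rcases hnew p hp with ⟨_, h2⟩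
      rcases tag_mem cA cB hq with ⟨_, ht2, _, _⟩
      cases hpl : placeIn (allPl cA cB n) n p.1 with
      | some b => rw [hpl] at h2; simp at h2
      | none =>
        exact placeIn_none hpl q.2.1 q.2.2 (by rw [hpq]; simpa using hq) ht2
    · rcases hnew p hp with ⟨h1, _⟩
      rcases hnew q hq with ⟨h3, _⟩
      rw [h1, h3, hpq]

lemma placeIn_allPl_some_iff {u v x : ℕ} {b : Bool} :
    placeIn (allPl cA cB u) v x = some b ↔ ∃ t, t ≤ v ∧ (x, t, b) ∈ allPl cA cB u := by
  constructor
  · exact placeIn_some_mem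
  · rintro ⟨t, htv, hm⟩
    unfold placeIn
    cases hf : ofind (allPl cA cB u) fun p => decide (p.1 = x) && decide (p.2.1 ≤ v) with
    | none =>
      exfalso
      have := ofind_eq_none.1 hf _ hm
      simp at this
      exact absurd htv (Nat.not_le.2 this)
    | some q =>
      rcases ofind_mem hf with ⟨hqm, hq⟩
      simp at hq
      have : q = (x, t, b) := allPl_unique cA cB hqm hm hq.1
      rw [this]; rfl

lemma place_coherent {v u x : ℕ} (h : v ≤ u) :
    placeIn (allPl cA cB u) v x = place cA cB v x := by
  unfold place
  cases hv : placeIn (allPl cA cB v) v x with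
  | some b =>
    rcases placeIn_some_mem hv with ⟨t, htv, hm⟩
    exact (placeIn_allPl_some_iff cA cB).2 ⟨t, htv, mem_allPl_mono cA cB h hm⟩
  | none =>
    cases hu : placeIn (allPl cA cB u) v x with
    | none => rfl
    | some b =>
      exfalso
      rcases placeIn_some_mem hu with ⟨t, htv, hm⟩
      have h4 := (tag_mem cA cB hm).2.2.2
      exact placeIn_none hv t b (mem_allPl_mono cA cB htv h4) htv

lemma place_mono {v v' x : ℕ} {b : Bool} (h : v ≤ v') (hp : place cA cB v x = some b) :
    place cA cB v' x = some b := by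
  rcases placeIn_some_mem hp with ⟨t, htv, hm⟩
  exact (placeIn_allPl_some_iff cA cB).2 ⟨t, le_trans htv h, mem_allPl_mono cA cB h hm⟩

lemma place_unique {v v' x : ℕ} {b b' : Bool} (h : place cA cB v x = some b)
    (h' : place cA cB v' x = some b') : b = b' := by
  rcases Nat.le_total v v' with hle | hle
  · have := place_mono cA cB hle h
    rw [this] at h'; injection h'
  · have := place_mono cA cB hle h'
    rw [this] at h; injection h with h; exact h.symm

lemma entry_placed {x t₀ : ℕ} (h1 : memS cB t₀ x = true)
    (h2 : ∀ v < t₀, memS cB v x = false) :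
    (x, t₀ + 1, sideAt cA cB (allPl cA cB t₀) t₀ x) ∈ allPl cA cB (t₀ + 1) := by
  have hxlt : x < t₀ := memS_bound h1
  have hnp : placeIn (allPl cA cB t₀) t₀ x = none := by
    cases hn : placeIn (allPl cA cB t₀) t₀ x with
    | none => rfl
    | some b =>
      exfalso
      rcases placeIn_some_mem hn with ⟨t, htv, hm⟩
      rcases tag_mem cA cB hm with ⟨ht1, ht2, ht3, _⟩
      have : t - 1 < t₀ := by omega
      rw [h2 _ this] at ht3; exact Bool.false_ne_true ht3
  simp only [allPl, stepC, List.mem_append, List.mem_flatMap]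
  refine Or.inr ⟨x, List.mem_range.2 hxlt, ?_⟩
  rw [if_pos (by rw [h1, hnp]; rfl)]
  simp

lemma placed_memB {u x : ℕ} {b : Bool} (h : place cA cB u x = some b) :
    ∃ s, memS cB s x = true := by
  rcases placeIn_some_mem h with ⟨t, _, hm⟩
  exact ⟨t - 1, (tag_mem cA cB hm).2.2.1⟩

lemma memB_placed {x : ℕ} (h : ∃ s, memS cB s x = true) :
    ∃ u b, place cA cB u x = some b := by
  classical
  have hex : ∃ s, memS cB s x = true := h
  let t₀ := Nat.find hex
  have h1 : memS cB t₀ x = true := Nat.find_spec hex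
  have h2 : ∀ v < t₀, memS cB v x = false := by
    intro v hv
    have := Nat.find_min hex hv
    simpa using this
  refine ⟨t₀ + 1, sideAt cA cB (allPl cA cB t₀) t₀ x, ?_⟩
  exact (placeIn_allPl_some_iff cA cB).2 ⟨t₀ + 1, le_refl _, entry_placed cA cB h1 h2⟩

/-! ## limit lemmas -/

lemma memS_lim_decide (c : Code) (x : ℕ) :
    ∃ s₀, ∀ s ≥ s₀, memS c s x = decide (x ∈ Sset c) := by
  by_cases h : x ∈ Sset c
  · rcases h with ⟨s, hs⟩
    refine ⟨s, fun t ht => ?_⟩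
    rw [memS_mono ht hs]
    exact (decide_eq_true ⟨s, hs⟩).symm
  · refine ⟨0, fun s _ => ?_⟩
    have : memS c s x = false := by
      cases hm : memS c s x
      · rfl
      · exact absurd ⟨s, hm⟩ h
    rw [this, decide_eq_false h]

lemma placeBit_lim (i : Bool) (x : ℕ) :
    ∃ v₀, ∀ v ≥ v₀, decide (place cA cB v x = some i) = decide (x ∈ Bi cA cB i) := by
  by_cases h : x ∈ Bi cA cB i
  · rcases h with ⟨u, hu⟩
    refine ⟨u, fun v hv => ?_⟩
    rw [place_mono cA cB hv hu, decide_eq_true (show x ∈ Bi cA cB i from ⟨u, hu⟩),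
      decide_eq_true rfl]
  · refine ⟨0, fun v _ => ?_⟩
    have : place cA cB v x ≠ some i := fun hc => h ⟨v, hc⟩
    rw [decide_eq_false this, decide_eq_false h]

lemma phi_lim (w x : ℕ) :
    ∃ v₀, ∀ v ≥ v₀, phi cA (allPl cA cB v) w x v = decide (Phi cA cB w x) := by
  obtain ⟨v₁, hv₁⟩ := placeBit_lim cA cB (iw w) x
  obtain ⟨v₂, hv₂⟩ := memS_lim_decide (cy w) x
  obtain ⟨v₃, hv₃⟩ := memS_lim_decide cA x
  obtain ⟨v₄, hv₄⟩ := memS_lim_decide (cz w) x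
  refine ⟨max (max v₁ v₂) (max v₃ v₄), fun v hv => ?_⟩
  have h1 := hv₁ v (by omega)
  have h2 := hv₂ v (by omega)
  have h3 := hv₃ v (by omega)
  have h4 := hv₄ v (by omega)
  unfold phi
  have hpl : placeIn (allPl cA cB v) v x = place cA cB v x := rfl
  rw [hpl, h1, h2, h3, h4]
  by_cases p1 : x ∈ Bi cA cB (iw w) <;> by_cases p2 : x ∈ Sset (cy w) <;>
    by_cases p3 : x ∈ Sset cA <;> by_cases p4 : x ∈ Sset (cz w) <;>
      simp [Phi, p1, p2, p3, p4]

/-! ## stage coherence -/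

lemma phi_coherent {u v w x : ℕ} (h : v ≤ u) :
    phi cA (allPl cA cB u) w x v = phi cA (allPl cA cB v) w x v := by
  unfold phi
  rw [place_coherent cA cB h]
  rfl

lemma good_coherent {u v w x : ℕ} (h : v ≤ u) :
    good cA (allPl cA cB u) w x v = good cA (allPl cA cB v) w x v := by
  unfold good
  have : (fun y => !phi cA (allPl cA cB u) w y v) = fun y => !phi cA (allPl cA cB v) w y v := by
    funext y; rw [phi_coherent cA cB h]
  rw [this]

lemma condf_coherent {u v w x : ℕ} (h : v ≤ u) :
    condf cA cB (allPl cA cB u) w x v = condf cA cB (allPl cA cB v) w x v := by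
  unfold condf
  rw [good_coherent cA cB h]

def goodV (w x v : ℕ) : Bool := good cA (allPl cA cB v) w x v

def condV (w x v : ℕ) : Bool := condf cA cB (allPl cA cB v) w x v

lemma goodV_spec {w x v : ℕ} (h : goodV cA cB w x v = true) :
    x < v ∧ ∀ y ≤ x, phi cA (allPl cA cB v) w y v = true := by
  unfold goodV good at h
  simp only [Bool.and_eq_true, decide_eq_true_eq, Bool.not_eq_true'] at h
  obtain ⟨h1, h2⟩ := h
  refine ⟨h1, fun y hy => ?_⟩
  cases ho : ofind (List.range (x+1)) fun y => !(phi cA (allPl cA cB v) w y v) with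
  | some a => rw [ho] at h2; simp at h2
  | none =>
    have := ofind_eq_none.1 ho y (List.mem_range.2 (by omega))
    simpa using this

lemma goodV_intro {w x v : ℕ} (h1 : x < v)
    (h2 : ∀ y ≤ x, phi cA (allPl cA cB v) w y v = true) : goodV cA cB w x v = true := by
  unfold goodV good
  simp only [Bool.and_eq_true, decide_eq_true_eq, Bool.not_eq_true']
  refine ⟨h1, ?_⟩
  cases ho : ofind (List.range (x+1)) fun y => !(phi cA (allPl cA cB v) w y v) with
  | none => rfl
  | some a =>
    exfalso
    rcases ofind_mem ho with ⟨ham, hap⟩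
    have := h2 a (by simpa using Nat.lt_succ_iff.1 (List.mem_range.1 ham))
    rw [this] at hap; simp at hap

lemma phi_lim_all (w x : ℕ) :
    ∃ v₀, ∀ v ≥ v₀, ∀ y ≤ x, phi cA (allPl cA cB v) w y v = decide (Phi cA cB w y) := by
  induction x with
  | zero =>
    obtain ⟨v₀, hv₀⟩ := phi_lim cA cB w 0
    exact ⟨v₀, fun v hv y hy => by rw [Nat.le_zero.1 hy]; exact hv₀ v hv⟩
  | succ n ih =>
    obtain ⟨v₁, hv₁⟩ := ih
    obtain ⟨v₂, hv₂⟩ := phi_lim cA cB w (n+1)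
    refine ⟨max v₁ v₂, fun v hv y hy => ?_⟩
    rcases Nat.lt_or_ge y (n+1) with h | h
    · exact hv₁ v (by omega) y (by omega)
    · have : y = n + 1 := by omega
      rw [this]; exact hv₂ v (by omega)

lemma goodV_lim {w : ℕ} (h : TrueReq cA cB w) (x : ℕ) :
    ∃ v₀, ∀ v ≥ v₀, goodV cA cB w x v = true := by
  obtain ⟨v₀, hv₀⟩ := phi_lim_all cA cB w x
  refine ⟨max v₀ (x+1), fun v hv => ?_⟩
  refine goodV_intro cA cB (by omega) fun y hy => ?_
  rw [hv₀ v (by omega) y hy, decide_eq_true (h y)]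

lemma condV_spec {w x v : ℕ} (h : condV cA cB w x v = true) :
    goodV cA cB w x v = true ∧ w ≤ v ∧ memS cB v x = false ∧ memS cA v x = false ∧
      (memS (cy w) v x = true ∨ memS (cz w) v x = true) := by
  unfold condV condf at h
  simp only [Bool.and_eq_true, decide_eq_true_eq, Bool.not_eq_true', Bool.or_eq_true] at h
  exact ⟨h.1.1.1.1, h.1.1.1.2, h.1.1.2, h.1.2, h.2⟩

lemma condV_intro {w x v : ℕ} (h1 : goodV cA cB w x v = true) (h2 : w ≤ v)
    (h3 : memS cB v x = false) (h4 : memS cA v x = false)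
    (h5 : memS (cy w) v x = true ∨ memS (cz w) v x = true) : condV cA cB w x v = true := by
  unfold condV condf
  simp only [Bool.and_eq_true, decide_eq_true_eq, Bool.not_eq_true', Bool.or_eq_true]
  exact ⟨⟨⟨⟨h1, h2⟩, h3⟩, h4⟩, h5⟩

lemma condV_bound {w : ℕ} (h : ¬ TrueReq cA cB w) :
    ∃ N, ∀ x v, condV cA cB w x v = true → x < N := by
  have : ∃ x₀, ¬ Phi cA cB w x₀ := by
    by_contra hc
    push_neg at hc
    exact h hc
  obtain ⟨x₀, hx₀⟩ := this
  obtain ⟨v₀, hv₀⟩ := phi_lim cA cB w x₀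
  refine ⟨max x₀ v₀, fun x v hc => ?_⟩
  rcases condV_spec cA cB hc with ⟨hg, _, _, _, _⟩
  rcases goodV_spec cA cB hg with ⟨hxv, hall⟩
  by_contra hcon
  push_neg at hcon
  have hx₀x : x₀ ≤ x := le_trans (le_max_left _ _) hcon
  have hv₀v : v₀ ≤ v := by
    have : v₀ ≤ x := le_trans (le_max_right _ _) hcon
    omega
  have := hall x₀ hx₀x
  rw [hv₀ v hv₀v, decide_eq_false hx₀] at this
  exact Bool.false_ne_true this

end Structural

section Verify

variable (cA cB : Code)

def Ymat (e x v : ℕ) : Bool :=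
  goodV cA cB e x v && memS (cy e) v x && !(memS cA v x) && !(memS cB v x) &&
    !(memS (cz e) v x)

def Ytil (e : ℕ) : Set ℕ := {x | ∃ v, Ymat cA cB e x v = true}

lemma Ymat_spec {e x v : ℕ} (h : Ymat cA cB e x v = true) :
    goodV cA cB e x v = true ∧ memS (cy e) v x = true ∧ memS cA v x = false ∧
      memS cB v x = false ∧ memS (cz e) v x = false := by
  unfold Ymat at h
  simp only [Bool.and_eq_true, Bool.not_eq_true'] at h
  exact ⟨h.1.1.1.1, h.1.1.1.2, h.1.1.2, h.1.2, h.2⟩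

lemma sideAt_eq {L : List Ent} {u x w v₀ : ℕ}
    (h1 : winner cA cB L u x = some w)
    (h2 : (ofind (List.range (u+1)) fun v => condf cA cB L w x v) = some v₀) :
    sideAt cA cB L u x = if memS (cz w) v₀ x then !(iw w) else iw w := by
  unfold sideAt
  rw [h1]
  dsimp only
  rw [h2]

lemma main_contra (A B : Set ℕ)
    (hAc : ∀ x, x ∈ A ↔ x ∈ Sset cA) (hBc : ∀ x, x ∈ B ↔ x ∈ Sset cB)
    (hCeY : ∀ e, Ce (Ytil cA cB e))
    (hCeZY : ∀ e, Ce (Sset (cz e) ∩ Ytil cA cB e))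
    (hex : ∃ w, TrueReq cA cB w) :
    ComplementedModD A B := by
  classical
  set e := Nat.find hex with he_def
  have he : TrueReq cA cB e := Nat.find_spec hex
  have hmin : ∀ w < e, ¬ TrueReq cA cB w := fun w hw => Nat.find_min hex hw
  -- x ∈ Bi implies x ∈ B
  have hBiB : ∀ i x, x ∈ Bi cA cB i → x ∈ B := by
    rintro i x ⟨u, hu⟩
    exact (hBc x).2 (placed_memB cA cB hu)
  -- coverage
  have hcov : B ∪ Ytil cA cB e ∪ A = Set.univ := by
    ext x
    simp only [Set.mem_union, Set.mem_univ, iff_true]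
    by_cases hxB : x ∈ B
    · exact Or.inl (Or.inl hxB)
    by_cases hxA : x ∈ A
    · exact Or.inr hxA
    refine Or.inl (Or.inr ?_)
    have hxB' : ∀ s, memS cB s x = false := by
      intro s
      cases hm : memS cB s x
      · rfl
      · exact absurd ((hBc x).2 ⟨s, hm⟩) hxB
    have hxA' : ∀ s, memS cA s x = false := by
      intro s
      cases hm : memS cA s x
      · rfl
      · exact absurd ((hAc x).2 ⟨s, hm⟩) hxA
    have hxBi : x ∉ Bi cA cB (iw e) := fun hb => hxB (hBiB _ _ hb)
    have hxY : x ∈ Sset (cy e) := by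
      rcases (he x).1 with h | h | h
      · exact absurd h hxBi
      · exact h
      · exact absurd ((hAc x).2 h) hxA
    have hxZ : ∀ s, memS (cz e) s x = false := by
      intro s
      cases hm : memS (cz e) s x
      · rfl
      · exact absurd ((he x).2.1 ⟨s, hm⟩).1 hxBi
    obtain ⟨s₁, hs₁⟩ := memS_lim_decide (cy e) x
    obtain ⟨s₂, hs₂⟩ := goodV_lim cA cB he x
    refine ⟨max s₁ s₂, ?_⟩
    unfold Ymat
    rw [hs₂ _ (le_max_right _ _), hs₁ _ (le_max_left _ _), decide_eq_true hxY,
      hxA' _, hxB' _, hxZ _]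
    rfl
  -- finite exceptional bound
  have hNf : ∀ w, w < e → ∃ N, ∀ x v, condV cA cB w x v = true → x < N :=
    fun w hw => condV_bound cA cB (hmin w hw)
  choose Nf hNfs using hNf
  set M := max e ((Finset.range e).sup fun w => if h : w < e then Nf w h else 0) with hM_def
  have hMe : e ≤ M := le_max_left _ _
  have hMw : ∀ w (hw : w < e), Nf w hw ≤ M := by
    intro w hw
    refine le_trans ?_ (le_max_right _ _)
    have : (if h : w < e then Nf w h else 0) ≤ (Finset.range e).sup
        fun w => if h : w < e then Nf w h else 0 :=
      Finset.le_sup (f := fun w => if h : w < e then Nf w h else 0) (Finset.mem_range.2 hw)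
    rwa [dif_pos hw] at this
  set F' : Set ℕ := ((B ∩ Ytil cA cB e) \ A) ∩ {x | x < M} with hF'_def
  have hF'fin : F'.Finite :=
    (Set.finite_Iio M).subset fun x hx => hx.2
  -- main identity
  have hid : (B ∩ Ytil cA cB e) \ A = (Sset (cz e) ∩ Ytil cA cB e) ∪ F' := by
    apply Set.Subset.antisymm
    · intro x hx
      by_cases hxM : x < M
      · exact Or.inr ⟨hx, hxM⟩
      left
      obtain ⟨⟨hxB, hxYt⟩, hxA⟩ := hx
      refine ⟨?_, hxYt⟩
      obtain ⟨vq, hvq⟩ := hxYt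
      obtain ⟨hg, hy1, ha1, hb1, hz1⟩ := Ymat_spec cA cB hvq
      have hex' : e ≤ x := le_trans hMe (Nat.le_of_not_lt hxM)
      have hxv : x < vq := (goodV_spec cA cB hg).1
      have hcondq : condV cA cB e x vq = true :=
        condV_intro cA cB hg (by omega) hb1 ha1 (Or.inl hy1)
      -- entry stage
      have hxB' : x ∈ Sset cB := (hBc x).1 hxB
      set t₀ := Nat.find hxB' with ht₀_def
      have ht1 : memS cB t₀ x = true := Nat.find_spec hxB'
      have ht2 : ∀ v < t₀, memS cB v x = false := by
        intro v hv
        cases hm : memS cB v x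
        · rfl
        · exact absurd hm (Nat.find_min hxB' hv)
      have hvqt : vq < t₀ := by
        by_contra hcon
        push_neg at hcon
        rw [memS_mono hcon ht1] at hb1
        simp at hb1
      set L := allPl cA cB t₀ with hL_def
      have hLco : ∀ w v, v ≤ t₀ → condf cA cB L w x v = condV cA cB w x v := by
        intro w v hv
        rw [hL_def, condf_coherent cA cB hv]
        rfl
      -- inner search for e succeeds
      have hie : (ofind (List.range (t₀+1)) fun v => condf cA cB L e x v).isSome := by
        have hc : condf cA cB L e x vq = true := by
          rw [hLco e vq (by omega)]
          exact hcondq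
        exact ofind_range_isSome (k := vq) (by omega) hc
      -- winner is some w* ≤ e and in fact = e
      have hwin : winner cA cB L t₀ x = some e := by
        unfold winner
        cases hw : ofind (List.range (t₀+1)) fun w =>
            (ofind (List.range (t₀+1)) fun v => condf cA cB L w x v).isSome with
        | none =>
          exfalso
          have := ofind_eq_none.1 hw e (List.mem_range.2 (by omega))
          rw [hie] at this
          simp at this
        | some w' =>
          rcases ofind_range_some hw with ⟨hw1, hw2, hw3⟩
          have hw'e : w' ≤ e := by
            by_contra hcon
            push_neg at hcon
            have := hw3 e hcon
            rw [hie] at this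
            simp at this
          rcases Nat.lt_or_ge w' e with hlt | hge
          · exfalso
            cases hv' : ofind (List.range (t₀+1)) fun v => condf cA cB L w' x v with
            | none => rw [hv'] at hw2; simp at hw2
            | some v' =>
              rcases ofind_range_some hv' with ⟨hv'1, hv'2, _⟩
              rw [hLco w' v' (by omega)] at hv'2
              have := hNfs w' hlt x v' hv'2
              exact hxM (lt_of_lt_of_le this (hMw w' hlt))
          · congr 1
            omega
      obtain ⟨v₀, hv₀⟩ := Option.isSome_iff_exists.1 hie
      have hcond₀ : condV cA cB e x v₀ = true := by
        rcases ofind_range_some hv₀ with ⟨h1, h2, _⟩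
        rw [← hLco e v₀ (by omega)]
        exact h2
      have hv₀t : v₀ ≤ t₀ := by
        rcases ofind_range_some hv₀ with ⟨h1, _, _⟩
        omega
      cases hz : memS (cz e) v₀ x with
      | true => exact ⟨v₀, hz⟩
      | false =>
        -- x gets placed on side iw e
        have hside : sideAt cA cB L t₀ x = iw e := by
          rw [sideAt_eq cA cB hwin hv₀, hz]
          rfl
        have hplaced : (x, t₀ + 1, sideAt cA cB L t₀ x) ∈ allPl cA cB (t₀ + 1) :=
          entry_placed cA cB ht1 ht2
        have hxBi : x ∈ Bi cA cB (iw e) := by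
          refine ⟨t₀ + 1, (placeIn_allPl_some_iff cA cB).2 ⟨t₀ + 1, le_refl _, ?_⟩⟩
          rw [← hside]
          exact hplaced
        have hxy : x ∈ Sset (cy e) := by
          rcases (condV_spec cA cB hcond₀).2.2.2.2 with h | h
          · exact ⟨v₀, h⟩
          · rw [hz] at h; exact absurd h Bool.false_ne_true
        have hxna : x ∉ Sset cA := fun hc => hxA ((hAc x).2 hc)
        exact (he x).2.2 ⟨hxBi, hxy, hxna⟩
    · rintro x (⟨hxZ, hxYt⟩ | hx)
      · have h2 := (he x).2.1 hxZ
        exact ⟨⟨hBiB _ _ h2.1, hxYt⟩, fun hc => h2.2.2 ((hAc x).1 hc)⟩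
      · exact hx.1
  refine ⟨Ytil cA cB e, hCeY e, hcov, ?_⟩
  rw [hid]
  exact ce_union_finite (hCeZY e) hF'fin

end Verify

/-! ## computability of the construction -/

section Grind

set_option maxHeartbeats 1000000

open Primrec

private lemma pband {α : Type*} [Primcodable α] {f g : α → Bool} (hf : Primrec f)
    (hg : Primrec g) : Primrec fun a => f a && g a :=
  (Primrec.dom_bool₂ (· && ·)).comp hf hg

private lemma pbor {α : Type*} [Primcodable α] {f g : α → Bool} (hf : Primrec f)
    (hg : Primrec g) : Primrec fun a => f a || g a :=
  (Primrec.dom_bool₂ (· || ·)).comp hf hg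

private lemma pbeq {α : Type*} [Primcodable α] {f g : α → Bool} (hf : Primrec f)
    (hg : Primrec g) : Primrec fun a => f a == g a :=
  (Primrec.dom_bool₂ (· == ·)).comp hf hg

private lemma pbnot {α : Type*} [Primcodable α] {f : α → Bool} (hf : Primrec f) :
    Primrec fun a => !(f a) :=
  (Primrec.dom_bool (!·)).comp hf

private lemma pPred {α : Type*} [Primcodable α] {f : α → Bool} (hf : Primrec f) :
    PrimrecPred fun a => f a = true :=
  Primrec.primrecPred (hf.of_eq fun a => by cases h : f a <;> simp [h])

variable (cA cB : Code)

lemma memS_primrec : Primrec fun p : Code × ℕ × ℕ => memS p.1 p.2.1 p.2.2 :=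
  Primrec.option_isSome.comp
    (primrec_evaln.comp (((fst.comp snd).pair fst).pair (snd.comp snd)))

lemma memSc_primrec (c : Code) : Primrec fun p : ℕ × ℕ => memS c p.1 p.2 :=
  (memS_primrec).comp ((const c).pair Primrec.id)

lemma trip_primrec : Primrec trip :=
  (Primrec.ofNat (Code × Code)).comp (nat_div.comp Primrec.id (const 2))

lemma cy_primrec : Primrec cy := fst.comp trip_primrec

lemma cz_primrec : Primrec cz := snd.comp trip_primrec

lemma iw_primrec : Primrec iw :=
  (Primrec.eq.comp (nat_mod.comp Primrec.id (const 2)) (const 1)).decide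

lemma memSy_primrec : Primrec fun p : ℕ × ℕ × ℕ => memS (cy p.1) p.2.1 p.2.2 :=
  memS_primrec.comp ((cy_primrec.comp fst).pair snd)

lemma memSz_primrec : Primrec fun p : ℕ × ℕ × ℕ => memS (cz p.1) p.2.1 p.2.2 :=
  memS_primrec.comp ((cz_primrec.comp fst).pair snd)

lemma placeIn_primrec : Primrec fun p : List Ent × ℕ × ℕ => placeIn p.1 p.2.1 p.2.2 := by
  have hc : Primrec fun q : (List Ent × ℕ × ℕ) × Ent × Option Ent =>
      (decide (q.2.1.1 = q.1.2.2) && decide (q.2.1.2.1 ≤ q.1.2.1)) :=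
    pband (Primrec.eq.comp (fst.comp (fst.comp snd)) (snd.comp (snd.comp fst))).decide
      (Primrec.nat_le.comp (fst.comp (snd.comp (fst.comp snd))) (fst.comp (snd.comp fst))).decide
  have hfind : Primrec fun p : List Ent × ℕ × ℕ =>
      ofind p.1 fun q => decide (q.1 = p.2.2) && decide (q.2.1 ≤ p.2.1) := by
    unfold ofind
    exact Primrec.list_foldr fst (const none)
      (Primrec.ite (pPred hc) (option_some.comp (fst.comp snd)) (snd.comp snd)).to₂
  exact Primrec.option_map hfind (snd.comp (snd.comp snd)).to₂

lemma phi_primrec : Primrec fun q : (List Ent × ℕ) × ℕ × ℕ =>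
    phi cA q.1.1 q.1.2 q.2.1 q.2.2 := by
  unfold phi
  have L : Primrec fun q : (List Ent × ℕ) × ℕ × ℕ => q.1.1 := fst.comp fst
  have w : Primrec fun q : (List Ent × ℕ) × ℕ × ℕ => q.1.2 := snd.comp fst
  have x : Primrec fun q : (List Ent × ℕ) × ℕ × ℕ => q.2.1 := fst.comp snd
  have v : Primrec fun q : (List Ent × ℕ) × ℕ × ℕ => q.2.2 := snd.comp snd
  have b1 : Primrec fun q : (List Ent × ℕ) × ℕ × ℕ =>
      decide (placeIn q.1.1 q.2.2 q.2.1 = some (iw q.1.2)) :=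
    (Primrec.eq.comp (placeIn_primrec.comp (L.pair (v.pair x)))
      (option_some.comp (iw_primrec.comp w))).decide
  have b2 : Primrec fun q : (List Ent × ℕ) × ℕ × ℕ => memS (cy q.1.2) q.2.2 q.2.1 :=
    memSy_primrec.comp (w.pair (v.pair x))
  have b3 : Primrec fun q : (List Ent × ℕ) × ℕ × ℕ => memS cA q.2.2 q.2.1 :=
    (memSc_primrec cA).comp (v.pair x)
  have b4 : Primrec fun q : (List Ent × ℕ) × ℕ × ℕ => memS (cz q.1.2) q.2.2 q.2.1 :=
    memSz_primrec.comp (w.pair (v.pair x))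
  exact pband (pbor (pbor b1 b2) b3) (pbeq b4 (pband (pband b1 b2) (pbnot b3)))

lemma good_primrec : Primrec fun q : (List Ent × ℕ) × ℕ × ℕ =>
    good cA q.1.1 q.1.2 q.2.1 q.2.2 := by
  unfold good
  have x : Primrec fun q : (List Ent × ℕ) × ℕ × ℕ => q.2.1 := fst.comp snd
  have v : Primrec fun q : (List Ent × ℕ) × ℕ × ℕ => q.2.2 := snd.comp snd
  have hin : Primrec fun q : (List Ent × ℕ) × ℕ × ℕ =>
      ofind (List.range (q.2.1+1)) fun y => !(phi cA q.1.1 q.1.2 y q.2.2) := by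
    unfold ofind
    have hcond : Primrec fun r : ((List Ent × ℕ) × ℕ × ℕ) × ℕ × Option ℕ =>
        !(phi cA r.1.1.1 r.1.1.2 r.2.1 r.1.2.2) :=
      pbnot ((phi_primrec cA).comp ((fst.comp fst).pair ((fst.comp snd).pair
        (snd.comp (snd.comp fst)))))
    exact Primrec.list_foldr (Primrec.list_range.comp (Primrec.succ.comp x)) (const none)
      (Primrec.ite (pPred hcond) (option_some.comp (fst.comp snd)) (snd.comp snd)).to₂
  exact pband (Primrec.nat_lt.comp x v).decide (pbnot (Primrec.option_isSome.comp hin))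

lemma condf_primrec : Primrec fun q : (List Ent × ℕ) × ℕ × ℕ =>
    condf cA cB q.1.1 q.1.2 q.2.1 q.2.2 := by
  unfold condf
  have w : Primrec fun q : (List Ent × ℕ) × ℕ × ℕ => q.1.2 := snd.comp fst
  have x : Primrec fun q : (List Ent × ℕ) × ℕ × ℕ => q.2.1 := fst.comp snd
  have v : Primrec fun q : (List Ent × ℕ) × ℕ × ℕ => q.2.2 := snd.comp snd
  exact pband (pband (pband (pband (good_primrec cA) (Primrec.nat_le.comp w v).decide)
    (pbnot ((memSc_primrec cB).comp (v.pair x))))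
    (pbnot ((memSc_primrec cA).comp (v.pair x))))
    (pbor (memSy_primrec.comp (w.pair (v.pair x))) (memSz_primrec.comp (w.pair (v.pair x))))

lemma innerfind_primrec : Primrec fun q : (List Ent × ℕ) × ℕ × ℕ =>
    ofind (List.range (q.2.2+1)) fun v => condf cA cB q.1.1 q.1.2 q.2.1 v := by
  unfold ofind
  have u : Primrec fun q : (List Ent × ℕ) × ℕ × ℕ => q.2.2 := snd.comp snd
  have hcond : Primrec fun r : ((List Ent × ℕ) × ℕ × ℕ) × ℕ × Option ℕ =>
      condf cA cB r.1.1.1 r.1.1.2 r.1.2.1 r.2.1 :=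
    (condf_primrec cA cB).comp ((fst.comp fst).pair ((fst.comp (snd.comp fst)).pair (fst.comp snd)))
  exact Primrec.list_foldr (Primrec.list_range.comp (Primrec.succ.comp u)) (const none)
    (Primrec.ite (pPred hcond) (option_some.comp (fst.comp snd)) (snd.comp snd)).to₂

lemma winner_primrec : Primrec fun q : List Ent × ℕ × ℕ =>
    winner cA cB q.1 q.2.1 q.2.2 := by
  unfold winner
  have L : Primrec fun q : List Ent × ℕ × ℕ => q.1 := fst
  have u : Primrec fun q : List Ent × ℕ × ℕ => q.2.1 := fst.comp snd
  have x : Primrec fun q : List Ent × ℕ × ℕ => q.2.2 := snd.comp snd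
  have hcond : Primrec fun r : (List Ent × ℕ × ℕ) × ℕ × Option ℕ =>
      (ofind (List.range (r.1.2.1+1)) fun v =>
        condf cA cB r.1.1 r.2.1 r.1.2.2 v).isSome :=
    Primrec.option_isSome.comp ((innerfind_primrec cA cB).comp
      (((fst.comp fst).pair (fst.comp snd)).pair
        ((snd.comp (snd.comp fst)).pair (fst.comp (snd.comp fst)))))
  have : Primrec fun q : List Ent × ℕ × ℕ =>
      ofind (List.range (q.2.1+1)) fun w =>
        (ofind (List.range (q.2.1+1)) fun v => condf cA cB q.1 w q.2.2 v).isSome := by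
    unfold ofind
    exact Primrec.list_foldr (Primrec.list_range.comp (Primrec.succ.comp u)) (const none)
      (Primrec.ite (pPred hcond) (option_some.comp (fst.comp snd)) (snd.comp snd)).to₂
  exact this

lemma sideAt_primrec : Primrec fun q : List Ent × ℕ × ℕ =>
    sideAt cA cB q.1 q.2.1 q.2.2 := by
  unfold sideAt
  have hwin : Primrec fun q : List Ent × ℕ × ℕ => winner cA cB q.1 q.2.1 q.2.2 :=
    winner_primrec cA cB
  have hinner : Primrec fun r : (List Ent × ℕ × ℕ) × ℕ =>
      ofind (List.range (r.1.2.1+1)) fun v => condf cA cB r.1.1 r.2 r.1.2.2 v :=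
    (innerfind_primrec cA cB).comp (((fst.comp fst).pair snd).pair
      ((snd.comp (snd.comp fst)).pair (fst.comp (snd.comp fst))))
  have hg2 : Primrec₂ fun (r : (List Ent × ℕ × ℕ) × ℕ) (v₀ : ℕ) =>
      if memS (cz r.2) v₀ r.1.2.2 then !(iw r.2) else iw r.2 := by
    have hc : Primrec fun s : ((List Ent × ℕ × ℕ) × ℕ) × ℕ =>
        memS (cz s.1.2) s.2 s.1.1.2.2 :=
      memSz_primrec.comp ((snd.comp fst).pair (snd.pair (snd.comp (snd.comp (fst.comp fst)))))
    have hiw : Primrec fun s : ((List Ent × ℕ × ℕ) × ℕ) × ℕ => iw s.1.2 :=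
      iw_primrec.comp (snd.comp fst)
    exact (Primrec.ite (pPred hc) (pbnot hiw) hiw).to₂
  exact Primrec.option_casesOn hwin (const false)
    (Primrec.option_casesOn hinner (const false) hg2).to₂

lemma stepC_primrec : Primrec fun p : List Ent × ℕ => stepC cA cB p.1 p.2 := by
  unfold stepC
  have L : Primrec fun r : (List Ent × ℕ) × ℕ => r.1.1 := fst.comp fst
  have u : Primrec fun r : (List Ent × ℕ) × ℕ => r.1.2 := snd.comp fst
  have x : Primrec fun r : (List Ent × ℕ) × ℕ => r.2 := snd
  have hcond : Primrec fun r : (List Ent × ℕ) × ℕ =>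
      memS cB r.1.2 r.2 && !(placeIn r.1.1 r.1.2 r.2).isSome :=
    pband ((memSc_primrec cB).comp (u.pair x))
      (pbnot (Primrec.option_isSome.comp (placeIn_primrec.comp (L.pair (u.pair x)))))
  have hent : Primrec fun r : (List Ent × ℕ) × ℕ =>
      ((r.2, r.1.2 + 1, sideAt cA cB r.1.1 r.1.2 r.2) : Ent) :=
    x.pair ((Primrec.succ.comp u).pair ((sideAt_primrec cA cB).comp (L.pair (u.pair x))))
  have hbody : Primrec₂ fun (p : List Ent × ℕ) (x : ℕ) =>
      if memS cB p.2 x && !(placeIn p.1 p.2 x).isSome then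
        [((x, p.2 + 1, sideAt cA cB p.1 p.2 x) : Ent)] else [] :=
    (Primrec.ite (pPred hcond) (Primrec.list_cons.comp hent (const [])) (const [])).to₂
  exact Primrec.list_append.comp fst
    (Primrec.list_flatMap (Primrec.list_range.comp snd) hbody)

lemma allPl_primrec : Primrec (allPl cA cB) := by
  have heq : allPl cA cB = fun u => Nat.rec [] (fun n IH => stepC cA cB IH n) u := by
    funext u
    induction u with
    | zero => rfl
    | succ n ih => simp only [allPl, ih]
  rw [heq]
  exact Primrec.nat_rec₁ [] ((stepC_primrec cA cB).comp (snd.pair fst)).to₂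

lemma place_primrec : Primrec fun p : ℕ × ℕ => place cA cB p.1 p.2 := by
  unfold place
  exact placeIn_primrec.comp (((allPl_primrec cA cB).comp fst).pair (fst.pair snd))

lemma ce_Sset (c : Code) : Ce (Sset c) := by
  have h : Computable₂ fun x s : ℕ => memS c s x :=
    ((memSc_primrec c).comp (snd.pair fst)).to_comp
  exact ce_of_sigma h

lemma ce_Bi (i : Bool) : Ce (Bi cA cB i) := by
  have h : Computable₂ fun x u : ℕ => decide (place cA cB u x = some i) :=
    (Primrec.eq.comp ((place_primrec cA cB).comp (snd.pair fst))
      (const (some i))).decide.to_comp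
  refine (ce_of_sigma h).of_eq fun x => ?_
  simp [Bi]

lemma goodV_primrec : Primrec fun p : ℕ × ℕ × ℕ => goodV cA cB p.1 p.2.1 p.2.2 := by
  unfold goodV
  exact (good_primrec cA).comp
    ((((allPl_primrec cA cB).comp (snd.comp snd)).pair fst).pair
      ((fst.comp snd).pair (snd.comp snd)))

lemma Ymat_primrec (e : ℕ) : Primrec fun p : ℕ × ℕ => Ymat cA cB e p.1 p.2 := by
  unfold Ymat
  have a1 : Primrec fun p : ℕ × ℕ => goodV cA cB e p.1 p.2 :=
    (goodV_primrec cA cB).comp ((const e).pair (fst.pair snd))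
  have a2 : Primrec fun p : ℕ × ℕ => memS (cy e) p.2 p.1 :=
    (memSc_primrec (cy e)).comp (snd.pair fst)
  have a3 : Primrec fun p : ℕ × ℕ => memS cA p.2 p.1 :=
    (memSc_primrec cA).comp (snd.pair fst)
  have a4 : Primrec fun p : ℕ × ℕ => memS cB p.2 p.1 :=
    (memSc_primrec cB).comp (snd.pair fst)
  have a5 : Primrec fun p : ℕ × ℕ => memS (cz e) p.2 p.1 :=
    (memSc_primrec (cz e)).comp (snd.pair fst)
  exact pband (pband (pband (pband a1 a2) (pbnot a3)) (pbnot a4)) (pbnot a5)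

lemma ce_Ytil (e : ℕ) : Ce (Ytil cA cB e) :=
  ce_of_sigma (Ymat_primrec cA cB e).to_comp

lemma ce_ZYtil (e : ℕ) : Ce (Sset (cz e) ∩ Ytil cA cB e) := by
  have h : Computable₂ fun x n : ℕ =>
      memS (cz e) n.unpair.1 x && Ymat cA cB e x n.unpair.2 := by
    have u1 : Primrec fun p : ℕ × ℕ => p.2.unpair.1 :=
      fst.comp (Primrec.unpair.comp snd)
    have u2 : Primrec fun p : ℕ × ℕ => p.2.unpair.2 :=
      snd.comp (Primrec.unpair.comp snd)
    exact (pband ((memSc_primrec (cz e)).comp (u1.pair fst))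
      ((Ymat_primrec cA cB e).comp (fst.pair u2))).to_comp
  refine (ce_of_sigma h).of_eq fun x => ?_
  simp only [Set.mem_setOf_eq, Set.mem_inter_iff, Bool.and_eq_true]
  constructor
  · rintro ⟨n, h1, h2⟩
    exact ⟨⟨_, h1⟩, ⟨_, h2⟩⟩
  · rintro ⟨⟨s, hs⟩, ⟨v, hv⟩⟩
    exact ⟨Nat.pair s v, by simp [Nat.unpair_pair, hs, hv]⟩

end Grind

/-! ## final assembly -/

section Assemble

variable (cA cB : Code)

lemma trip_even (c₁ c₂ : Code) :
    trip (2 * Encodable.encode ((c₁, c₂) : Code × Code)) = (c₁, c₂) ∧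
      iw (2 * Encodable.encode ((c₁, c₂) : Code × Code)) = false := by
  constructor
  · unfold trip
    rw [Nat.mul_div_cancel_left _ (by norm_num : 0 < 2)]
    exact Denumerable.ofNat_encode _
  · unfold iw
    rw [Nat.mul_mod_right]
    simp

lemma trip_odd (c₁ c₂ : Code) :
    trip (2 * Encodable.encode ((c₁, c₂) : Code × Code) + 1) = (c₁, c₂) ∧
      iw (2 * Encodable.encode ((c₁, c₂) : Code × Code) + 1) = true := by
  constructor
  · unfold trip
    have : (2 * Encodable.encode ((c₁, c₂) : Code × Code) + 1) / 2 =
        Encodable.encode ((c₁, c₂) : Code × Code) := by omega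
    rw [this]
    exact Denumerable.ofNat_encode _
  · unfold iw
    have : (2 * Encodable.encode ((c₁, c₂) : Code × Code) + 1) % 2 = 1 := by omega
    rw [this]
    simp

lemma true_req_of_compl (A : Set ℕ) (hAc : ∀ x, x ∈ A ↔ x ∈ Sset cA) (i : Bool)
    (hc : ComplementedModD A (Bi cA cB i)) : ∃ w, TrueReq cA cB w := by
  obtain ⟨Y, hYce, hYcov, hYZce⟩ := hc
  obtain ⟨c₁, hc₁⟩ := ceCode hYce
  obtain ⟨c₂, hc₂⟩ := ceCode hYZce
  set k := 2 * Encodable.encode ((c₁, c₂) : Code × Code) with hk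
  obtain ⟨w, hw1, hw2⟩ : ∃ w, trip w = (c₁, c₂) ∧ iw w = i := by
    cases i
    · exact ⟨k, (trip_even c₁ c₂).1, (trip_even c₁ c₂).2⟩
    · exact ⟨k + 1, (trip_odd c₁ c₂).1, (trip_odd c₁ c₂).2⟩
  refine ⟨w, fun x => ?_⟩
  have hy : cy w = c₁ := by rw [cy, hw1]
  have hz : cz w = c₂ := by rw [cz, hw1]
  have hYS : x ∈ Y ↔ x ∈ Sset c₁ := hc₁ x
  have hZS : x ∈ (Bi cA cB i ∩ Y) \ A ↔ x ∈ Sset c₂ := hc₂ x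
  constructor
  · rw [hw2, hy]
    have : x ∈ Bi cA cB i ∪ Y ∪ A := hYcov ▸ Set.mem_univ x
    rcases this with (h | h) | h
    · exact Or.inl h
    · exact Or.inr (Or.inl (hYS.1 h))
    · exact Or.inr (Or.inr ((hAc x).1 h))
  · rw [hw2, hy, hz]
    rw [← hZS]
    constructor
    · rintro ⟨⟨h1, h2⟩, h3⟩
      exact ⟨h1, hYS.1 h2, fun hx => h3 ((hAc x).2 hx)⟩
    · rintro ⟨h1, h2, h3⟩
      exact ⟨⟨h1, hYS.2 h2⟩, fun hx => h3 ((hAc x).1 hx)⟩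

lemma bi_disjoint : Disjoint (Bi cA cB false) (Bi cA cB true) := by
  rw [Set.disjoint_left]
  rintro x ⟨u, hu⟩ ⟨u', hu'⟩
  exact Bool.false_ne_true (place_unique cA cB hu hu')

lemma bi_union (B : Set ℕ) (hBc : ∀ x, x ∈ B ↔ x ∈ Sset cB) :
    Bi cA cB false ∪ Bi cA cB true = B := by
  ext x
  constructor
  · rintro (⟨u, hu⟩ | ⟨u, hu⟩) <;> exact (hBc x).2 (placed_memB cA cB hu)
  · intro hx
    rcases memB_placed cA cB ((hBc x).1 hx) with ⟨u, b, hb⟩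
    cases b
    · exact Or.inl ⟨u, hb⟩
    · exact Or.inr ⟨u, hb⟩

end Assemble

end HKS

/-- (Herrmann–Kummer Splitting Theorem) If `A ⊆ B` are c.e. and `B` is not
complemented modulo `D(A)`, then `B` splits into two c.e. sets neither of
which is complemented modulo `D(A)`. -/
theorem herrmann_kummer_splitting (A B : Set ℕ)
    (hA : Ce A) (hB : Ce B) (hsub : A ⊆ B)
    (hnc : ¬ ComplementedModD A B) :
    ∃ B₀ B₁ : Set ℕ, Ce B₀ ∧ Ce B₁ ∧ Disjoint B₀ B₁ ∧ B₀ ∪ B₁ = B ∧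
      ¬ ComplementedModD A B₀ ∧ ¬ ComplementedModD A B₁ := by
  classical
  obtain ⟨cA, hAc⟩ := HKS.ceCode hA
  obtain ⟨cB, hBc⟩ := HKS.ceCode hB
  refine ⟨HKS.Bi cA cB false, HKS.Bi cA cB true, HKS.ce_Bi cA cB false,
    HKS.ce_Bi cA cB true, HKS.bi_disjoint cA cB, HKS.bi_union cA cB B hBc, ?_, ?_⟩
  · intro hc
    exact hnc (HKS.main_contra cA cB A B hAc hBc (HKS.ce_Ytil cA cB) (HKS.ce_ZYtil cA cB)
      (HKS.true_req_of_compl cA cB A hAc false hc))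
  · intro hc
    exact hnc (HKS.main_contra cA cB A B hAc hBc (HKS.ce_Ytil cA cB) (HKS.ce_ZYtil cA cB)
      (HKS.true_req_of_compl cA cB A hAc true hc))
end

section
/- Let I be a Σ⁰₃ ideal of the lattice of c.e. sets, i.e., a collection I of c.e. sets with ∅ ∈ I, closed under c.e. subsets (if B ∈ I and C is c.e. with C ⊆ B then C ∈ I) and under unions (if B, C ∈ I then B ∪ C ∈ I), such that there is a computable (decidable) relation R on ℕ⁴ with: W_e ∈ I ↔ ∃ a, ∀ b, ∃ c, R(e, a, b, c). If B is a c.e. set that is not complemented modulo I, then there are disjoint c.e. sets B₀, B₁ with B₀ ∪ B₁ = B such that neither B₀ nor B₁ is complemented modulo I. -/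
set_option maxHeartbeats 1000000

/-- `W` is complemented modulo the ideal `I`: there is a c.e. `Y` with
`W ∪ Y = ℕ` and `W ∩ Y ∈ I`. -/
def ComplementedModI (I : Set (Set ℕ)) (W : Set ℕ) : Prop :=
  ∃ Y : Set ℕ, Ce Y ∧ W ∪ Y = Set.univ ∧ W ∩ Y ∈ I

open Nat.Partrec (Code)
open Nat.Partrec.Code

namespace S3Split

/-- Stage-`t` approximation to the domain of code `c`. -/
def domt (c : Code) (t x : ℕ) : Bool := (evaln t c x).isSome

lemma domt_mono {c : Code} {t t' x : ℕ} (h : t ≤ t') (hx : domt c t x = true) :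
    domt c t' x = true := by
  rcases Option.isSome_iff_exists.1 hx with ⟨y, hy⟩
  exact Option.isSome_iff_exists.2 ⟨y, evaln_mono h hy⟩

lemma domt_sound {c : Code} {t x : ℕ} (h : domt c t x = true) : (eval c x).Dom := by
  rcases Option.isSome_iff_exists.1 h with ⟨y, hy⟩
  exact Part.dom_iff_mem.2 ⟨y, evaln_sound hy⟩

lemma domt_complete {c : Code} {x : ℕ} : (eval c x).Dom ↔ ∃ t, domt c t x = true := by
  constructor
  · intro h
    rcases Part.dom_iff_mem.1 h with ⟨y, hy⟩
    rcases evaln_complete.1 hy with ⟨k, hk⟩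
    exact ⟨k, Option.isSome_iff_exists.2 ⟨y, hk⟩⟩
  · rintro ⟨t, ht⟩; exact domt_sound ht

variable (R : ℕ → ℕ → ℕ → ℕ → Bool)

/-- Bounded search bound for `∃ c ≤ t, R d a b c`. -/
def okb (d a b t c : ℕ) : Bool := decide (t < c) || R d a b c

lemma okb_ex (d a b t : ℕ) : ∃ c, okb R d a b t c = true :=
  ⟨t + 1, by simp [okb]⟩

/-- whether `∃ c ≤ t, R d a b c`. -/
def okc (d a b t : ℕ) : Bool := decide (Nat.find (okb_ex R d a b t) ≤ t)

lemma okc_iff {d a b t : ℕ} : okc R d a b t = true ↔ ∃ c ≤ t, R d a b c = true := by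
  unfold okc
  rw [decide_eq_true_iff]
  constructor
  · intro h
    have hs := Nat.find_spec (okb_ex R d a b t)
    rw [okb, Bool.or_eq_true, decide_eq_true_iff] at hs
    rcases hs with h' | h'
    · omega
    · exact ⟨_, h, h'⟩
  · rintro ⟨c, hc, hRc⟩
    exact le_trans (Nat.find_min' _ (by simp [okb, hRc])) hc

lemma okc_mono {d a b t t' : ℕ} (h : t ≤ t') (hk : okc R d a b t = true) :
    okc R d a b t' = true := by
  rw [okc_iff] at hk ⊢
  rcases hk with ⟨c, hc, hRc⟩
  exact ⟨c, le_trans hc h, hRc⟩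

/-- Bounded search bound for the expansion length. -/
def lexpb (d a t b : ℕ) : Bool := decide (t < b) || !okc R d a b t

lemma lexpb_ex (d a t : ℕ) : ∃ b, lexpb R d a t b = true :=
  ⟨t + 1, by simp [lexpb]⟩

/-- The "expansion length" of witness `a` for index `d` at stage `t`:
the number of consecutive `b`'s (up to `t`) for which some `c ≤ t` with `R d a b c` has
appeared. -/
def lexp (d a t : ℕ) : ℕ := Nat.find (lexpb_ex R d a t)

lemma lexp_mono {d a t t' : ℕ} (h : t ≤ t') : lexp R d a t ≤ lexp R d a t' := by
  unfold lexp
  apply Nat.find_mono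
  intro n hn
  rw [lexpb, Bool.or_eq_true, decide_eq_true_iff] at hn ⊢
  rcases hn with h' | h'
  · exact Or.inl (lt_of_le_of_lt h h')
  · rw [Bool.not_eq_true'] at h' ⊢
    rcases Bool.eq_false_or_eq_true (okc R d a n t) with h0 | h0
    · exact absurd (okc_mono R h h0) (by simp [h'])
    · exact Or.inr h0

lemma lexp_gt {d a b t : ℕ} (h : b < lexp R d a t) : ∃ c, R d a b c = true := by
  have hb := Nat.find_min (lexpb_ex R d a t) h
  rw [lexpb] at hb
  simp only [Bool.or_eq_true, decide_eq_true_iff, Bool.not_eq_true', not_or] at hb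
  rcases (okc_iff R).1 (by simpa using hb.2) with ⟨c, _, hc⟩
  exact ⟨c, hc⟩

lemma lexp_unbounded {d a : ℕ} (h : ∀ b, ∃ c, R d a b c = true) (n : ℕ) :
    ∃ t, n < lexp R d a t := by
  classical
  set F : ℕ → ℕ := fun b => (h b).choose with hF
  refine ⟨(n + 1) + (Finset.range (n + 1)).sup F, ?_⟩
  set t := (n + 1) + (Finset.range (n + 1)).sup F with ht
  have hQ : ∀ m ≤ n, ¬ lexpb R d a t m = true := by
    intro m hm
    rw [lexpb]
    simp only [Bool.or_eq_true, decide_eq_true_iff, Bool.not_eq_true', not_or]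
    constructor
    · omega
    · rw [Bool.not_eq_false, okc_iff]
      refine ⟨F m, ?_, (h m).choose_spec⟩
      have : F m ≤ (Finset.range (n + 1)).sup F :=
        Finset.le_sup (Finset.mem_range.2 (Nat.lt_succ_of_le hm))
      omega
  by_contra hc
  push_neg at hc
  exact hQ _ hc (Nat.find_spec (lexpb_ex R d a t))

/-- The index (in the `We` numbering) of the `(e,i)`-section of the fixed-point code `z`. -/
def dcode (z : Code) (ei : ℕ) : ℕ := Encodable.encode (z.curry ei)

/-- The claiming condition for strategy `p = ⟨⟨e',i'⟩,a'⟩` on element `x` at stage `t`: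
`x` is already in `W_{e'}` and is below the current expansion length of witness `a'`. -/
def condc (z : Code) (x t p : ℕ) : Bool :=
  domt (Denumerable.ofNat Code p.unpair.1.unpair.1) t x &&
  decide (x < lexp R (dcode z p.unpair.1) p.unpair.2 t)

def minpb (z : Code) (x t p : ℕ) : Bool := decide (t < p) || condc R z x t p

lemma minpb_ex (z : Code) (x t : ℕ) : ∃ p, minpb R z x t p = true :=
  ⟨t + 1, by simp [minpb]⟩

/-- The strongest strategy claiming `x` at stage `t` (or `t+1` if none). -/
def minp (z : Code) (x t : ℕ) : ℕ := Nat.find (minpb_ex R z x t)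

/-- The side of `x` decided at stage `t`. -/
def sidec (z : Code) (x t : ℕ) : ℕ :=
  if minp R z x t ≤ t then (minp R z x t).unpair.1.unpair.2 % 2 else 0

lemma sidec_lt_two (z : Code) (x t : ℕ) : sidec R z x t < 2 := by
  unfold sidec; split <;> omega

lemma rfind_total {f : ℕ → Bool} (h : ∃ t, f t = true) :
    Nat.find h ∈ Nat.rfind (fun t => Part.some (f t)) := by
  refine Nat.mem_rfind.2 ?_
  constructor
  · simpa using Nat.find_spec h
  · intro m hm
    simpa using Nat.find_min h hm

lemma rfind_total_dom {f : ℕ → Bool} :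
    (Nat.rfind (fun t => Part.some (f t))).Dom ↔ ∃ t, f t = true := by
  constructor
  · intro h
    rcases Part.dom_iff_mem.1 h with ⟨n, hn⟩
    exact ⟨n, by simpa using Nat.rfind_spec hn⟩
  · intro h
    exact Part.dom_iff_mem.2 ⟨_, rfind_total h⟩

section Computability

lemma computable_nat_find {α : Type} [Primcodable α] {p : α → ℕ → Bool} (hp : Computable₂ p)
    (H : ∀ a, ∃ n, p a n = true) : Computable fun a => Nat.find (H a) := by
  have h1 : Partrec fun a => Nat.rfind fun n => Part.some (p a n) :=
    Partrec.rfind hp.partrec₂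
  exact h1.of_eq_tot fun a => rfind_total (H a)

open Computable in
lemma computable_bor : Computable₂ fun (a b : Bool) => a || b :=
  (Computable.cond Computable.fst (Computable.const true) Computable.snd).to₂.of_eq
    fun ⟨a, b⟩ => by cases a <;> simp

open Computable in
lemma computable_band : Computable₂ fun (a b : Bool) => a && b :=
  (Computable.cond Computable.fst Computable.snd (Computable.const false)).to₂.of_eq
    fun ⟨a, b⟩ => by cases a <;> simp

open Computable in
lemma computable_bnot : Computable fun (a : Bool) => !a :=
  (Computable.cond Computable.id (Computable.const false) (Computable.const true)).of_eq
    fun a => by cases a <;> simp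

variable {R : ℕ → ℕ → ℕ → ℕ → Bool}

open Computable in
lemma comp_okc (hR : Computable fun p : ℕ × ℕ × ℕ × ℕ => R p.1 p.2.1 p.2.2.1 p.2.2.2) :
    Computable fun q : (ℕ × ℕ) × (ℕ × ℕ) => okc R q.1.1 q.1.2 q.2.1 q.2.2 := by
  have hokb : Computable₂ fun (q : (ℕ × ℕ) × (ℕ × ℕ)) (c : ℕ) =>
      okb R q.1.1 q.1.2 q.2.1 q.2.2 c := by
    have hlt : Primrec fun w : ((ℕ × ℕ) × (ℕ × ℕ)) × ℕ => decide (w.1.2.2 < w.2) :=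
      (Primrec.nat_lt.comp (Primrec.snd.comp (Primrec.snd.comp Primrec.fst)) Primrec.snd).decide
    have hproj : Computable fun w : ((ℕ × ℕ) × (ℕ × ℕ)) × ℕ =>
        (w.1.1.1, w.1.1.2, w.1.2.1, w.2) :=
      (fst.comp <| fst.comp fst).pair ((snd.comp <| fst.comp fst).pair
        ((fst.comp <| snd.comp fst).pair snd))
    have hRc := hR.comp hproj
    have hor := computable_bor.comp hlt.to_comp hRc
    refine hor.to₂.of_eq fun w => ?_
    simp [okb]
  have hfind : Computable fun q : (ℕ × ℕ) × (ℕ × ℕ) =>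
      Nat.find (okb_ex R q.1.1 q.1.2 q.2.1 q.2.2) :=
    computable_nat_find hokb fun q => okb_ex R q.1.1 q.1.2 q.2.1 q.2.2
  have hsnd : Computable fun q : (ℕ × ℕ) × (ℕ × ℕ) => q.2.2 :=
    (Primrec.snd.comp Primrec.snd).to_comp
  have hle := (Primrec.nat_le.decide : Primrec₂ fun a b : ℕ => decide (a ≤ b)).to_comp.comp hfind hsnd
  refine hle.of_eq fun q => ?_
  simp [okc]

open Computable in
lemma comp_lexp (hR : Computable fun p : ℕ × ℕ × ℕ × ℕ => R p.1 p.2.1 p.2.2.1 p.2.2.2) :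
    Computable fun q : (ℕ × ℕ) × ℕ => lexp R q.1.1 q.1.2 q.2 := by
  have hlexpb : Computable₂ fun (q : (ℕ × ℕ) × ℕ) (b : ℕ) => lexpb R q.1.1 q.1.2 q.2 b := by
    have hlt : Primrec fun w : ((ℕ × ℕ) × ℕ) × ℕ => decide (w.1.2 < w.2) :=
      (Primrec.nat_lt.comp (Primrec.snd.comp Primrec.fst) Primrec.snd).decide
    have hproj : Computable fun w : ((ℕ × ℕ) × ℕ) × ℕ =>
        ((w.1.1.1, w.1.1.2), (w.2, w.1.2)) :=
      ((fst.comp <| fst.comp fst).pair (snd.comp <| fst.comp fst)).pair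
        (snd.pair (snd.comp fst))
    have hok := (comp_okc hR).comp hproj
    have hnot := computable_bnot.comp hok
    have hor := computable_bor.comp hlt.to_comp hnot
    refine hor.to₂.of_eq fun w => ?_
    simp [lexpb]
  exact computable_nat_find hlexpb fun q => lexpb_ex R q.1.1 q.1.2 q.2

open Computable in
lemma comp_condc (hR : Computable fun p : ℕ × ℕ × ℕ × ℕ => R p.1 p.2.1 p.2.2.1 p.2.2.2) :
    Computable₂ fun (q : Code × ℕ × ℕ) (p : ℕ) => condc R q.1 q.2.1 q.2.2 p := by
  have hdomt : Primrec fun w : (Code × ℕ × ℕ) × ℕ =>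
      domt (Denumerable.ofNat Code w.2.unpair.1.unpair.1) w.1.2.2 w.1.2.1 := by
    have h1 : Primrec fun w : (Code × ℕ × ℕ) × ℕ =>
        ((w.1.2.2, Denumerable.ofNat Code w.2.unpair.1.unpair.1), w.1.2.1) :=
      ((Primrec.snd.comp <| Primrec.snd.comp Primrec.fst).pair
        ((Primrec.ofNat Code).comp <| Primrec.fst.comp <| Primrec.unpair.comp <|
          Primrec.fst.comp <| Primrec.unpair.comp Primrec.snd)).pair
        (Primrec.fst.comp <| Primrec.snd.comp Primrec.fst)
    have h2 := primrec_evaln.comp h1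
    have h3 := Primrec.option_isSome.comp h2
    exact h3.of_eq fun w => rfl
  have hdc : Primrec fun w : (Code × ℕ × ℕ) × ℕ => dcode w.1.1 w.2.unpair.1 := by
    have h1 : Primrec fun w : (Code × ℕ × ℕ) × ℕ => (w.1.1).curry (w.2.unpair.1) :=
      primrec₂_curry.comp (Primrec.fst.comp Primrec.fst)
        (Primrec.fst.comp <| Primrec.unpair.comp Primrec.snd)
    exact (Primrec.encode.comp h1).of_eq fun w => rfl
  have ha2 : Primrec fun w : (Code × ℕ × ℕ) × ℕ => w.2.unpair.2 :=
    Primrec.snd.comp <| Primrec.unpair.comp Primrec.snd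
  have ht2 : Primrec fun w : (Code × ℕ × ℕ) × ℕ => w.1.2.2 :=
    Primrec.snd.comp <| Primrec.snd.comp Primrec.fst
  have hproj := ((hdc.pair ha2).pair ht2).to_comp
  have hlex := (comp_lexp hR).comp hproj
  have hxx : Computable fun w : (Code × ℕ × ℕ) × ℕ => w.1.2.1 :=
    (Primrec.fst.comp <| Primrec.snd.comp Primrec.fst).to_comp
  have hlt := (Primrec.nat_lt.decide : Primrec₂ fun a b : ℕ => decide (a < b)).to_comp.comp hxx hlex
  have hand := computable_band.comp hdomt.to_comp hlt
  refine hand.to₂.of_eq fun w => ?_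
  simp [condc]

open Computable in
lemma comp_minp (hR : Computable fun p : ℕ × ℕ × ℕ × ℕ => R p.1 p.2.1 p.2.2.1 p.2.2.2) :
    Computable fun q : Code × ℕ × ℕ => minp R q.1 q.2.1 q.2.2 := by
  have hminpb : Computable₂ fun (q : Code × ℕ × ℕ) (p : ℕ) => minpb R q.1 q.2.1 q.2.2 p := by
    have hlt : Primrec fun w : (Code × ℕ × ℕ) × ℕ => decide (w.1.2.2 < w.2) :=
      (Primrec.nat_lt.comp (Primrec.snd.comp <| Primrec.snd.comp Primrec.fst) Primrec.snd).decide
    have hcc := (comp_condc hR).comp (fst : Computable fun w : (Code × ℕ × ℕ) × ℕ => w.1)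
      (snd : Computable fun w : (Code × ℕ × ℕ) × ℕ => w.2)
    have hor := computable_bor.comp hlt.to_comp hcc
    refine hor.to₂.of_eq fun w => ?_
    simp [minpb]
  exact computable_nat_find hminpb fun q => minpb_ex R q.1 q.2.1 q.2.2

open Computable in
lemma comp_sidec (hR : Computable fun p : ℕ × ℕ × ℕ × ℕ => R p.1 p.2.1 p.2.2.1 p.2.2.2) :
    Computable fun q : Code × ℕ × ℕ => sidec R q.1 q.2.1 q.2.2 := by
  have hm := comp_minp hR
  have hsnd : Computable fun q : Code × ℕ × ℕ => q.2.2 :=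
    (Primrec.snd.comp Primrec.snd).to_comp
  have hle := (Primrec.nat_le.decide : Primrec₂ fun a b : ℕ => decide (a ≤ b)).to_comp.comp hm hsnd
  have hmod : Primrec fun n : ℕ => n.unpair.1.unpair.2 % 2 :=
    Primrec.nat_mod.comp (Primrec.snd.comp <| Primrec.unpair.comp <| Primrec.fst.comp
      Primrec.unpair) (Primrec.const 2)
  have hval := hmod.to_comp.comp hm
  have hc := Computable.cond hle hval (const 0)
  refine hc.of_eq fun q => ?_
  by_cases h : minp R q.1 q.2.1 q.2.2 ≤ q.2.2 <;> simp [sidec, h]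

end Computability


section CeLemmas

lemma ce_of_exists {f : ℕ → ℕ → Bool} (hf : Computable₂ f) :
    Ce {x | ∃ s, f x s = true} := by
  unfold Ce REPred
  have h1 : Partrec fun x : ℕ => Nat.rfind fun s => Part.some (f x s) :=
    Partrec.rfind hf.partrec₂
  have h2 := h1.map ((Computable.const ()).comp Computable.fst).to₂
  refine h2.of_eq fun x => ?_
  apply Part.ext
  intro u
  simp only [Part.mem_map_iff, Part.mem_assert_iff, Part.mem_some_iff]
  constructor
  · rintro ⟨n, hn, _⟩
    have : f x n = true := by simpa using Nat.rfind_spec hn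
    exact ⟨⟨n, this⟩, by cases u; trivial⟩
  · rintro ⟨⟨n, hn⟩, _⟩
    rcases Part.dom_iff_mem.1 (rfind_total_dom.2 ⟨n, hn⟩) with ⟨m, hm⟩
    exact ⟨m, hm, by cases u; trivial⟩

lemma ce_code {A : Set ℕ} (h : Ce A) : ∃ c : Code, ∀ x, x ∈ A ↔ (Code.eval c x).Dom := by
  unfold Ce REPred at h
  have h2 := h.map ((Computable.const 0).comp Computable.fst).to₂
  have h3 : Nat.Partrec fun a : ℕ =>
      (Part.assert (a ∈ A) fun _ => Part.some ()).map fun _ => (0 : ℕ) :=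
    Partrec.nat_iff.1 h2
  obtain ⟨c, hc⟩ := Code.exists_code.1 h3
  refine ⟨c, fun x => ?_⟩
  rw [hc]
  simp [Part.dom_iff_mem, Part.mem_map_iff, Part.mem_assert_iff]

lemma We_of_ce {A : Set ℕ} (h : Ce A) : ∃ e : ℕ, We e = A := by
  obtain ⟨c, hc⟩ := ce_code h
  refine ⟨Encodable.encode c, ?_⟩
  ext x
  unfold We
  rw [Set.mem_setOf_eq, Denumerable.ofNat_encode]
  exact ((hc x).symm : _)

end CeLemmas

section Construction

open scoped Classical in
/-- The side (0 or 1) to which `x` is routed, decided at its entry stage into `B`. -/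
noncomputable def sideOf (cB z : Code) (x : ℕ) : ℕ :=
  if h : ∃ t, domt cB t x = true then sidec R z x (Nat.find h) else 0

/-- The two halves of the splitting. -/
noncomputable def Bside (cB z : Code) (i : ℕ) : Set ℕ :=
  {x | (∃ t, domt cB t x = true) ∧ sideOf R cB z x = i}

/-- The self-referential family of partial functions used for the fixed point:
`gfun z ⟨⟨e,i⟩,x⟩` halts iff `x ∈ B_i ∩ W_e` (where the construction is run with
parameter `z`). -/
def gfun (cB z : Code) (n : ℕ) : Part ℕ :=
  (Code.eval (Denumerable.ofNat Code n.unpair.1.unpair.1) n.unpair.2).bind fun _ =>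
    (Nat.rfind fun t => Part.some (domt cB t n.unpair.2)).bind fun t =>
      Nat.rfind fun _ => Part.some (sidec R z n.unpair.2 t == n.unpair.1.unpair.2 % 2)

open Computable in
lemma part_gfun (hR : Computable fun p : ℕ × ℕ × ℕ × ℕ => R p.1 p.2.1 p.2.2.1 p.2.2.2)
    (cB : Code) : Partrec₂ (gfun R cB) := by
  -- outer: evaluation of `W_e` at `x`
  have he : Computable fun p : Code × ℕ => Denumerable.ofNat Code p.2.unpair.1.unpair.1 :=
    ((Primrec.ofNat Code).comp <| Primrec.fst.comp <| Primrec.unpair.comp <|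
      Primrec.fst.comp <| Primrec.unpair.comp Primrec.snd).to_comp
  have hx : Computable fun p : Code × ℕ => p.2.unpair.2 :=
    (Primrec.snd.comp <| Primrec.unpair.comp Primrec.snd).to_comp
  have h1 := Code.eval_part.comp he hx
  -- middle: search for the entry stage of `x` into `B`
  have hBt : Computable₂ fun (w : (Code × ℕ) × ℕ) (t : ℕ) => domt cB t w.1.2.unpair.2 := by
    have h0 : Primrec fun v : ((Code × ℕ) × ℕ) × ℕ =>
        ((v.2, cB), v.1.1.2.unpair.2) :=
      (Primrec.snd.pair (Primrec.const cB)).pair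
        (Primrec.snd.comp <| Primrec.unpair.comp <| Primrec.snd.comp <|
          Primrec.fst.comp Primrec.fst)
    have h2 := primrec_evaln.comp h0
    have h3 := Primrec.option_isSome.comp h2
    exact h3.to_comp.to₂
  have hB' : Partrec fun w : (Code × ℕ) × ℕ =>
      Nat.rfind fun t => Part.some (domt cB t w.1.2.unpair.2) :=
    Partrec.rfind hBt.partrec₂
  -- inner: check the routing side
  have hbool : Computable fun v : ((Code × ℕ) × ℕ) × ℕ =>
      (sidec R v.1.1.1 v.1.1.2.unpair.2 v.2 == v.1.1.2.unpair.1.unpair.2 % 2) := by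
    have hproj : Computable fun v : ((Code × ℕ) × ℕ) × ℕ =>
        ((v.1.1.1 : Code), (v.1.1.2.unpair.2, v.2)) :=
      ((fst.comp <| fst.comp fst).pair
        (((Primrec.snd.comp <| Primrec.unpair.comp <| Primrec.snd.comp <|
          Primrec.fst.comp Primrec.fst).to_comp).pair snd))
    have hs := (comp_sidec hR).comp hproj
    have hmod : Primrec fun v : ((Code × ℕ) × ℕ) × ℕ =>
        v.1.1.2.unpair.1.unpair.2 % 2 :=
      Primrec.nat_mod.comp (Primrec.snd.comp <| Primrec.unpair.comp <| Primrec.fst.comp <|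
        Primrec.unpair.comp <| Primrec.snd.comp <| Primrec.fst.comp Primrec.fst)
        (Primrec.const 2)
    exact Primrec.beq.to_comp.comp hs hmod.to_comp
  have hinner : Partrec₂ fun (w : (Code × ℕ) × ℕ) (t : ℕ) =>
      Nat.rfind fun _ : ℕ => Part.some
        (sidec R w.1.1 w.1.2.unpair.2 t == w.1.2.unpair.1.unpair.2 % 2) := by
    have h5 : Computable₂ fun (v : ((Code × ℕ) × ℕ) × ℕ) (_ : ℕ) =>
        (sidec R v.1.1.1 v.1.1.2.unpair.2 v.2 == v.1.1.2.unpair.1.unpair.2 % 2) :=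
      (hbool.comp fst).to₂
    exact Partrec.rfind h5.partrec₂
  have hmid : Partrec₂ fun (p : Code × ℕ) (_ : ℕ) =>
      (Nat.rfind fun t => Part.some (domt cB t p.2.unpair.2)).bind fun t =>
        Nat.rfind fun _ : ℕ => Part.some
          (sidec R p.1 p.2.unpair.2 t == p.2.unpair.1.unpair.2 % 2) :=
    hB'.bind hinner
  have := h1.bind hmid
  refine this.of_eq fun p => ?_
  simp [gfun]

lemma gfun_dom {cB z : Code} {e i x : ℕ} :
    (gfun R cB z (Nat.pair (Nat.pair e i) x)).Dom ↔
      x ∈ Bside R cB z (i % 2) ∧ x ∈ We e := by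
  constructor
  · intro h
    rcases Part.dom_iff_mem.1 h with ⟨v, hv⟩
    simp only [gfun, Nat.unpair_pair, Part.mem_bind_iff] at hv
    rcases hv with ⟨w, hw, t, ht, hv⟩
    have hBx : ∃ t, domt cB t x = true := ⟨t, by simpa using Nat.rfind_spec ht⟩
    have htf : t = Nat.find hBx := by
      have h1 : domt cB t x = true := by simpa using Nat.rfind_spec ht
      have h2 : ∀ m < t, domt cB m x = false := fun m hm => by
        simpa using Nat.rfind_min ht hm
      have hle : Nat.find hBx ≤ t := Nat.find_min' _ h1
      rcases lt_or_eq_of_le hle with hlt | heq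
      · exact absurd (Nat.find_spec hBx) (by simp [h2 _ hlt])
      · omega
    have hside : (sidec R z x t == i % 2) = true := by simpa using Nat.rfind_spec hv
    refine ⟨⟨hBx, ?_⟩, Part.dom_iff_mem.2 ⟨w, hw⟩⟩
    unfold sideOf
    rw [dif_pos hBx, ← htf]
    exact by simpa using hside
  · rintro ⟨⟨hBx, hs⟩, hW⟩
    simp only [gfun, Nat.unpair_pair]
    rcases Part.dom_iff_mem.1 hW with ⟨w, hw⟩
    apply Part.dom_iff_mem.2
    refine ⟨0, Part.mem_bind_iff.2 ⟨w, hw, Part.mem_bind_iff.2 ⟨Nat.find hBx, rfind_total hBx, ?_⟩⟩⟩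
    have hss : sidec R z x (Nat.find hBx) = i % 2 := by
      unfold sideOf at hs; rwa [dif_pos hBx] at hs
    refine Nat.mem_rfind.2 ?_
    exact ⟨by simp [hss], fun {m} hm => absurd hm (by omega)⟩

lemma We_dcode {cB z : Code} (hz : Code.eval z = gfun R cB z) (e i : ℕ) :
    We (dcode z (Nat.pair e i)) = Bside R cB z (i % 2) ∩ We e := by
  ext x
  have hx : x ∈ We (dcode z (Nat.pair e i)) ↔
      (Code.eval (z.curry (Nat.pair e i)) x).Dom := by
    unfold We dcode
    rw [Denumerable.ofNat_encode]
    exact Iff.rfl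
  rw [Set.mem_inter_iff, hx, Code.eval_curry, hz, gfun_dom]

lemma minp_le {z : Code} {x t p : ℕ} (h : minpb R z x t p = true) : minp R z x t ≤ p :=
  Nat.find_min' _ h

lemma condc_minp {z : Code} {x t : ℕ} (h : minp R z x t ≤ t) :
    condc R z x t (minp R z x t) = true := by
  have hs : minpb R z x t (minp R z x t) = true := Nat.find_spec (minpb_ex R z x t)
  rw [minpb, Bool.or_eq_true, decide_eq_true_iff] at hs
  rcases hs with h' | h'
  · omega
  · exact h'

lemma mem_I_biUnion {I : Set (Set ℕ)} (hempty : (∅ : Set ℕ) ∈ I)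
    (hunion : ∀ X ∈ I, ∀ Y ∈ I, X ∪ Y ∈ I) (s : Finset ℕ) (g : ℕ → Set ℕ)
    (hg : ∀ j ∈ s, g j ∈ I) : (⋃ j ∈ s, g j) ∈ I := by
  classical
  induction s using Finset.induction_on with
  | empty => simpa using hempty
  | @insert j s hj ih =>
    rw [Finset.set_biUnion_insert]
    exact hunion _ (hg _ (Finset.mem_insert_self _ _)) _
      (ih fun k hk => hg k (Finset.mem_insert_of_mem hk))

lemma main_req
    (I : Set (Set ℕ)) (hempty : (∅ : Set ℕ) ∈ I)
    (hdown : ∀ X ∈ I, ∀ Y : Set ℕ, Ce Y → Y ⊆ X → Y ∈ I)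
    (hunion : ∀ X ∈ I, ∀ Y ∈ I, X ∪ Y ∈ I)
    {R : ℕ → ℕ → ℕ → ℕ → Bool}
    (hR : Computable fun p : ℕ × ℕ × ℕ × ℕ => R p.1 p.2.1 p.2.2.1 p.2.2.2)
    (hsigma3 : ∀ e : ℕ, We e ∈ I ↔ ∃ a : ℕ, ∀ b : ℕ, ∃ c : ℕ, R e a b c)
    {B : Set ℕ} {cB : Code} (hcB : ∀ x, x ∈ B ↔ (Code.eval cB x).Dom)
    {z : Code} (hz : Code.eval z = gfun R cB z)
    (hnc : ¬ ComplementedModI I B)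
    (e i : ℕ) (hi : i < 2)
    (hcov : Bside R cB z i ∪ We e = Set.univ)
    (hmem : Bside R cB z i ∩ We e ∈ I) : False := by
  classical
  have hBmem : ∀ x, x ∈ B ↔ ∃ t, domt cB t x = true := fun x => (hcB x).trans domt_complete
  set D := dcode z (Nat.pair e i) with hD
  have hWD : We D = Bside R cB z i ∩ We e := by
    have h := We_dcode R hz e i
    rwa [Nat.mod_eq_of_lt hi] at h
  have hDI : We D ∈ I := by rw [hWD]; exact hmem
  obtain ⟨a, ha⟩ := (hsigma3 D).1 hDI
  set pstar := Nat.pair (Nat.pair e i) a with hpstar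
  set entry : ℕ → ℕ := fun x => if h : ∃ t, domt cB t x = true then Nat.find h else 0
    with hentry
  set claimSet : ℕ → Set ℕ :=
    fun p => {x | ∃ h : ∃ t, domt cB t x = true,
      minp R z x (Nat.find h) = p ∧ p ≤ Nat.find h} with hclaim
  -- choose the threshold `s₀`
  have hM : ∀ p : ℕ, ∃ m : ℕ, (claimSet p).Finite → ∀ x ∈ claimSet p, entry x < m := by
    intro p
    by_cases hf : (claimSet p).Finite
    · obtain ⟨m, hm⟩ := (hf.image entry).bddAbove
      exact ⟨m + 1, fun _ x hx =>
        Nat.lt_succ_of_le (hm (Set.mem_image_of_mem entry hx))⟩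
    · exact ⟨0, fun h => absurd h hf⟩
  choose M hMs using hM
  set s₀ := pstar + 1 + (Finset.range (pstar + 1)).sup M with hs₀
  have hps₀ : pstar < s₀ := by omega
  have hMs₀ : ∀ p ≤ pstar, M p ≤ s₀ := by
    intro p hp
    have : M p ≤ (Finset.range (pstar + 1)).sup M :=
      Finset.le_sup (Finset.mem_range.2 (Nat.lt_succ_of_le hp))
    omega
  -- the complement witness `Y`
  set fY : ℕ → ℕ → Bool := fun x s => decide (s₀ ≤ s) &&
      (domt (Denumerable.ofNat Code e) s x && (!(domt cB s x) && decide (x < lexp R D a s)))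
    with hfY
  set Y : Set ℕ := {x | ∃ s, fY x s = true} with hYdef
  have hYiff : ∀ x, x ∈ Y ↔ ∃ s, s₀ ≤ s ∧ domt (Denumerable.ofNat Code e) s x = true ∧
      domt cB s x = false ∧ x < lexp R D a s := by
    intro x
    constructor
    · rintro ⟨s, hs⟩
      rw [hfY] at hs
      simp only [Bool.and_eq_true, decide_eq_true_iff, Bool.not_eq_true'] at hs
      exact ⟨s, hs.1, hs.2.1, hs.2.2.1, hs.2.2.2⟩
    · rintro ⟨s, h1, h2, h3, h4⟩
      exact ⟨s, by rw [hfY]; simp [h1, h2, h3, h4]⟩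
  -- computability of the matrix of `Y`
  have hfYcomp : Computable₂ fY := by
    have c1 : Primrec fun w : ℕ × ℕ => decide (s₀ ≤ w.2) :=
      (Primrec.nat_le.comp (Primrec.const s₀) Primrec.snd).decide
    have c2 : Primrec fun w : ℕ × ℕ =>
        domt (Denumerable.ofNat Code e) w.2 w.1 := by
      have h0 : Primrec fun w : ℕ × ℕ => ((w.2, Denumerable.ofNat Code e), w.1) :=
        (Primrec.snd.pair (Primrec.const _)).pair Primrec.fst
      exact Primrec.option_isSome.comp (primrec_evaln.comp h0)
    have c3 : Primrec fun w : ℕ × ℕ => domt cB w.2 w.1 := by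
      have h0 : Primrec fun w : ℕ × ℕ => ((w.2, cB), w.1) :=
        (Primrec.snd.pair (Primrec.const _)).pair Primrec.fst
      exact Primrec.option_isSome.comp (primrec_evaln.comp h0)
    have c3' := computable_bnot.comp c3.to_comp
    have hproj : Primrec fun w : ℕ × ℕ => ((D, a), w.2) :=
      ((Primrec.const D).pair (Primrec.const a)).pair Primrec.snd
    have c4 := (comp_lexp hR).comp hproj.to_comp
    have c4' := (Primrec.nat_lt.decide : Primrec₂ fun a b : ℕ => decide (a < b)).to_comp.comp
      (Primrec.fst.to_comp : Computable fun w : ℕ × ℕ => w.1) c4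
    have hand1 := computable_band.comp c3' c4'
    have hand2 := computable_band.comp c2.to_comp hand1
    have hand3 := computable_band.comp c1.to_comp hand2
    refine hand3.to₂.of_eq fun w => ?_
    rw [hfY]
  have hYce : Ce Y := ce_of_exists hfYcomp
  -- `B ∪ Y = univ`
  have hcup : B ∪ Y = Set.univ := by
    apply Set.eq_univ_of_forall
    intro x
    by_cases hxB : x ∈ B
    · exact Or.inl hxB
    · refine Or.inr ((hYiff x).2 ?_)
      have hnotB : ∀ t, domt cB t x = false := by
        intro t
        rcases Bool.eq_false_or_eq_true (domt cB t x) with h | h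
        · exact absurd ((hBmem x).2 ⟨t, h⟩) hxB
        · exact h
      have hxW : x ∈ We e := by
        have hx : x ∈ Bside R cB z i ∪ We e := hcov ▸ Set.mem_univ x
        rcases hx with hx | hx
        · exact absurd ((hBmem x).2 hx.1) hxB
        · exact hx
      obtain ⟨s₁, h₁⟩ := domt_complete.1 hxW
      obtain ⟨t₂, h₂⟩ := lexp_unbounded R ha x
      refine ⟨max (max s₀ s₁) t₂, le_trans (le_max_left _ _) (le_max_left _ _), ?_, ?_, ?_⟩
      · exact domt_mono (le_trans (le_max_right _ _) (le_max_left _ _)) h₁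
      · exact hnotB _
      · exact lt_of_lt_of_le h₂ (lexp_mono R (le_max_right _ _))
  -- the covering family
  set cover : ℕ → Set ℕ := fun p =>
    if (claimSet p).Finite then (∅ : Set ℕ) else We (dcode z p.unpair.1) with hcover
  set T : Set ℕ := (Bside R cB z i ∩ We e) ∪ ⋃ p ∈ Finset.range pstar, cover p with hT
  -- each cover set is in I
  have hcoverI : ∀ p, cover p ∈ I := by
    intro p
    simp only [hcover]
    split
    · exact hempty
    · rename_i hinf
      apply (hsigma3 _).2
      refine ⟨p.unpair.2, fun b => ?_⟩
      obtain ⟨x, hxc, hbx⟩ := Set.Infinite.exists_gt hinf b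
      obtain ⟨hex, hmp, hple⟩ := hxc
      have hc : condc R z x (Nat.find hex) p = true := by
        have := condc_minp R (t := Nat.find hex) (z := z) (x := x) (by rw [hmp]; exact hple)
        rwa [hmp] at this
      rw [condc, Bool.and_eq_true, decide_eq_true_iff] at hc
      obtain ⟨c, hRc⟩ := lexp_gt R (lt_trans hbx hc.2)
      exact ⟨c, hRc⟩
  have hTI : T ∈ I := by
    rw [hT]
    exact hunion _ hmem _
      (mem_I_biUnion hempty hunion (Finset.range pstar) cover fun j _ => hcoverI j)
  -- the key inclusion
  have hsub : B ∩ Y ⊆ T := by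
    rintro x ⟨hxB, hxY⟩
    obtain ⟨s, hss₀, hWs, hBs, hlxs⟩ := (hYiff x).1 hxY
    have hex : ∃ t, domt cB t x = true := (hBmem x).1 hxB
    set tx := Nat.find hex with htx
    have hstx : s < tx := by
      by_contra hcon
      push_neg at hcon
      have := domt_mono hcon (Nat.find_spec hex)
      rw [hBs] at this
      exact absurd this (by simp)
    have hpstx : pstar < tx := by omega
    -- the strategy `pstar` is eligible at the entry stage
    have hcstar : condc R z x tx pstar = true := by
      rw [condc, hpstar, Nat.unpair_pair, Nat.unpair_pair]
      rw [Bool.and_eq_true, decide_eq_true_iff]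
      constructor
      · exact domt_mono (le_of_lt hstx) hWs
      · exact lt_of_lt_of_le hlxs (lexp_mono R (le_of_lt hstx))
    have hmple : minp R z x tx ≤ pstar :=
      minp_le R (by rw [minpb, hcstar, Bool.or_true])
    have hmptx : minp R z x tx ≤ tx := le_trans hmple (le_of_lt hpstx)
    have hcmp : condc R z x tx (minp R z x tx) = true := condc_minp R hmptx
    have hsideOf : sideOf R cB z x = (minp R z x tx).unpair.1.unpair.2 % 2 := by
      unfold sideOf
      rw [dif_pos hex]
      rw [sidec, if_pos (htx ▸ hmptx)]
    have hxWe' : x ∈ We ((minp R z x tx).unpair.1.unpair.1) := by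
      rw [condc, Bool.and_eq_true] at hcmp
      exact domt_sound hcmp.1
    by_cases hcase : (minp R z x tx).unpair.1.unpair.2 % 2 = i
    · left
      constructor
      · exact ⟨hex, hsideOf.trans hcase⟩
      · exact domt_sound (domt_mono (le_of_lt hstx) hWs)
    · -- claimed by a stronger strategy on the other side
      have hlt : minp R z x tx < pstar := by
        rcases lt_or_eq_of_le hmple with h | h
        · exact h
        · exfalso
          apply hcase
          rw [h, hpstar, Nat.unpair_pair, Nat.unpair_pair]
          exact Nat.mod_eq_of_lt hi
      by_cases hfin : (claimSet (minp R z x tx)).Finite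
      · exfalso
        have hxcl : x ∈ claimSet (minp R z x tx) := ⟨hex, rfl, hmptx⟩
        have h1 := hMs _ hfin x hxcl
        have h2 : entry x = tx := by rw [hentry]; simp only; rw [dif_pos hex]
        have h3 := hMs₀ _ (le_of_lt hlt)
        omega
      · right
        apply Set.mem_biUnion (Finset.mem_range.2 hlt)
        rw [hcover]
        simp only [if_neg hfin]
        have hWeq := We_dcode R hz ((minp R z x tx).unpair.1.unpair.1)
          ((minp R z x tx).unpair.1.unpair.2)
        rw [Nat.pair_unpair] at hWeq
        rw [hWeq]
        exact ⟨⟨hex, hsideOf⟩, hxWe'⟩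
  -- `B ∩ Y` is c.e.
  have hBYce : Ce (B ∩ Y) := by
    have hmat : Computable₂ fun (x u : ℕ) => domt cB u.unpair.1 x && fY x u.unpair.2 := by
      have c1 : Primrec fun w : ℕ × ℕ => domt cB w.2.unpair.1 w.1 := by
        have h0 : Primrec fun w : ℕ × ℕ => ((w.2.unpair.1, cB), w.1) :=
          ((Primrec.fst.comp <| Primrec.unpair.comp Primrec.snd).pair
            (Primrec.const _)).pair Primrec.fst
        exact Primrec.option_isSome.comp (primrec_evaln.comp h0)
      have hprx : Primrec fun w : ℕ × ℕ => w.1 := Primrec.fst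
      have hpru : Primrec fun w : ℕ × ℕ => w.2.unpair.2 :=
        Primrec.snd.comp <| Primrec.unpair.comp Primrec.snd
      have c2 := hfYcomp.comp hprx.to_comp hpru.to_comp
      have hand := computable_band.comp c1.to_comp c2
      exact hand.to₂
    have hset : B ∩ Y = {x | ∃ u : ℕ, (domt cB u.unpair.1 x && fY x u.unpair.2) = true} := by
      ext x
      constructor
      · rintro ⟨hxB, hxY⟩
        obtain ⟨t, ht⟩ := (hBmem x).1 hxB
        obtain ⟨s, hs⟩ := hxY
        exact ⟨Nat.pair t s, by rw [Nat.unpair_pair]; simp [ht, hs]⟩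
      · rintro ⟨u, hu⟩
        rw [Bool.and_eq_true] at hu
        exact ⟨(hBmem x).2 ⟨_, hu.1⟩, ⟨_, hu.2⟩⟩
    rw [hset]
    exact ce_of_exists hmat
  exact hnc ⟨Y, hYce, hcup, hdown _ hTI _ hBYce hsub⟩

open Computable in
lemma Bside_ce (hR : Computable fun p : ℕ × ℕ × ℕ × ℕ => R p.1 p.2.1 p.2.2.1 p.2.2.2)
    (cB z : Code) (i : ℕ) : Ce (Bside R cB z i) := by
  classical
  set f : ℕ → ℕ → Bool := fun x t =>
    domt cB t x && (((t == 0) || !(domt cB (t - 1) x)) && (sidec R z x t == i)) with hf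
  have hset : Bside R cB z i = {x | ∃ t, f x t = true} := by
    ext x
    constructor
    · rintro ⟨hex, hside⟩
      refine ⟨Nat.find hex, ?_⟩
      rw [hf]
      simp only [Bool.and_eq_true, Bool.or_eq_true, beq_iff_eq, Bool.not_eq_true']
      refine ⟨Nat.find_spec hex, ?_, ?_⟩
      · rcases Nat.eq_zero_or_pos (Nat.find hex) with h0 | h0
        · exact Or.inl h0
        · right
          rcases Bool.eq_false_or_eq_true (domt cB (Nat.find hex - 1) x) with h | h
          · exact absurd h (by simpa using Nat.find_min hex (Nat.sub_lt h0 one_pos))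
          · exact h
      · unfold sideOf at hside
        rwa [dif_pos hex] at hside
    · rintro ⟨t, ht⟩
      rw [hf] at ht
      simp only [Bool.and_eq_true, Bool.or_eq_true, beq_iff_eq, Bool.not_eq_true'] at ht
      obtain ⟨h1, h2, h3⟩ := ht
      have hex : ∃ t, domt cB t x = true := ⟨t, h1⟩
      have hfind : Nat.find hex = t := by
        have hle : Nat.find hex ≤ t := Nat.find_min' hex h1
        rcases lt_or_eq_of_le hle with hlt | heq
        · exfalso
          rcases h2 with h0 | h0
          · omega
          · have := domt_mono (by omega : Nat.find hex ≤ t - 1) (Nat.find_spec hex)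
            rw [h0] at this
            exact absurd this (by simp)
        · exact heq
      refine ⟨hex, ?_⟩
      unfold sideOf
      rw [dif_pos hex, hfind]
      exact h3
  rw [hset]
  apply ce_of_exists
  have c1 : Primrec fun w : ℕ × ℕ => domt cB w.2 w.1 := by
    have h0 : Primrec fun w : ℕ × ℕ => ((w.2, cB), w.1) :=
      (Primrec.snd.pair (Primrec.const _)).pair Primrec.fst
    exact Primrec.option_isSome.comp (primrec_evaln.comp h0)
  have c2 : Primrec fun w : ℕ × ℕ => (w.2 == 0) :=
    Primrec.beq.comp Primrec.snd (Primrec.const 0)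
  have c3 : Primrec fun w : ℕ × ℕ => domt cB (w.2 - 1) w.1 := by
    have h0 : Primrec fun w : ℕ × ℕ => ((w.2 - 1, cB), w.1) :=
      ((Primrec.nat_sub.comp Primrec.snd (Primrec.const 1)).pair (Primrec.const _)).pair
        Primrec.fst
    exact Primrec.option_isSome.comp (primrec_evaln.comp h0)
  have c3' := computable_bnot.comp c3.to_comp
  have hor := computable_bor.comp c2.to_comp c3'
  have hproj : Computable fun w : ℕ × ℕ => ((z, w.1, w.2) : Code × ℕ × ℕ) :=
    (const z).pair (fst.pair snd)
  have c4 := (comp_sidec hR).comp hproj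
  have c4' := Primrec.beq.to_comp.comp c4 (const i)
  have hand1 := computable_band.comp hor c4'
  have hand2 := computable_band.comp c1.to_comp hand1
  refine hand2.to₂.of_eq fun w => ?_
  rw [hf]

end Construction

end S3Split

/-- Splitting modulo a `Σ⁰₃` ideal of the lattice of c.e. sets: if `B` is not
complemented modulo `I` then `B` splits into two c.e. sets neither of which is
complemented modulo `I`. -/
theorem sigma3_ideal_splitting (I : Set (Set ℕ))
    (hIce : ∀ X ∈ I, Ce X) (hempty : (∅ : Set ℕ) ∈ I)
    (hdown : ∀ X ∈ I, ∀ Y : Set ℕ, Ce Y → Y ⊆ X → Y ∈ I)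
    (hunion : ∀ X ∈ I, ∀ Y ∈ I, X ∪ Y ∈ I)
    (R : ℕ → ℕ → ℕ → ℕ → Bool)
    (hR : Computable fun p : ℕ × ℕ × ℕ × ℕ => R p.1 p.2.1 p.2.2.1 p.2.2.2)
    (hsigma3 : ∀ e : ℕ, We e ∈ I ↔ ∃ a : ℕ, ∀ b : ℕ, ∃ c : ℕ, R e a b c)
    (B : Set ℕ) (hB : Ce B) (hnc : ¬ ComplementedModI I B) :
    ∃ B₀ B₁ : Set ℕ, Ce B₀ ∧ Ce B₁ ∧ Disjoint B₀ B₁ ∧ B₀ ∪ B₁ = B ∧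
      ¬ ComplementedModI I B₀ ∧ ¬ ComplementedModI I B₁ := by
  classical
  obtain ⟨cB, hcB⟩ := S3Split.ce_code hB
  obtain ⟨z, hz⟩ := Nat.Partrec.Code.fixed_point₂ (S3Split.part_gfun R hR cB)
  have hBmem : ∀ x, x ∈ B ↔ ∃ t, S3Split.domt cB t x = true := fun x =>
    (hcB x).trans S3Split.domt_complete
  refine ⟨S3Split.Bside R cB z 0, S3Split.Bside R cB z 1,
    S3Split.Bside_ce R hR cB z 0, S3Split.Bside_ce R hR cB z 1, ?_, ?_, ?_, ?_⟩
  · rw [Set.disjoint_left]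
    rintro x ⟨hex, h0⟩ ⟨hex', h1⟩
    rw [h0] at h1
    exact absurd h1 (by norm_num)
  · ext x
    constructor
    · rintro (⟨hex, _⟩ | ⟨hex, _⟩) <;> exact (hBmem x).2 hex
    · intro hx
      have hex := (hBmem x).1 hx
      have hlt : S3Split.sideOf R cB z x < 2 := by
        unfold S3Split.sideOf
        rw [dif_pos hex]
        exact S3Split.sidec_lt_two R z x _
      interval_cases h : (S3Split.sideOf R cB z x)
      · exact Or.inl ⟨hex, h⟩
      · exact Or.inr ⟨hex, h⟩
  · rintro ⟨Y₀, hY₀ce, hcup, hI⟩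
    obtain ⟨e, hWe⟩ := S3Split.We_of_ce hY₀ce
    rw [← hWe] at hcup hI
    exact S3Split.main_req I hempty hdown hunion hR hsigma3 hcB hz hnc e 0 (by omega) hcup hI
  · rintro ⟨Y₁, hY₁ce, hcup, hI⟩
    obtain ⟨e, hWe⟩ := S3Split.We_of_ce hY₁ce
    rw [← hWe] at hcup hI
    exact S3Split.main_req I hempty hdown hunion hR hsigma3 hcB hz hnc e 1 (by omega) hcup hI
end
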